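/- arXiv:1005.2791 — 9 statements merged into one kernel-verified Lean document; each statement's English description precedes it below -/
import Mathlib

section
/- Every fractionally subadditive set function f : 2^[n] → ℝ₊ whose marginal values all lie in [0,1] is self-bounding. Concretely, identifying f with a function on {0,1}^n and setting f_i(x^(i)) = f(x_1,…,x_{i−1},0,x_{i+1},…,x_n), one has 0 ≤ f(x) − f_i(x^(i)) ≤ 1 for all x and i, and Σ_{i=1}^n (f(x) − f_i(x^(i))) ≤ f(x) for all x ∈ {0,1}^n. -/
/-!
For `|A| ≥ 2`, cover `A` by the sets `A \ {i}`, `i ∈ A`, each with weight `1 / (|A| - 1)`: every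
element of `A` lies in exactly `|A| - 1` of them, so fractional subadditivity gives
`(|A| - 1) f(A) ≤ ∑_{i ∈ A} f(A \ {i})`, which rearranges to `∑_i (f(A) - f(A \ {i})) ≤ f(A)`.
For `|A| ≤ 1` this inequality only needs `f(∅) ≥ 0`, which follows from `f(∅) ≤ 2 f(∅)`.
The bounds `0 ≤ f(A) - f(A \ {i}) ≤ 1` are the marginal bounds at `A \ {i}`.
-/

open Finset

theorem card_filter_mem_erase {α : Type*} [DecidableEq α] {A : Finset α} {a : α} (ha : a ∈ A) :
    #(A.filter (fun i => a ∈ A.erase i)) = #A - 1 := by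
  rw [← card_erase_of_mem ha]
  congr 1
  ext i
  simp [ha, and_comm, eq_comm]

def FractionallySubadditive {n : ℕ} (f : Finset (Fin n) → ℝ) : Prop :=
  ∀ (A : Finset (Fin n)) (m : ℕ) (B : Fin m → Finset (Fin n)) (β : Fin m → ℝ),
    (∀ i, 0 ≤ β i) →
    (∀ a ∈ A, 1 ≤ ∑ i ∈ univ.filter (fun i => a ∈ B i), β i) →
    f A ≤ ∑ i, β i * f (B i)

namespace FractionallySubadditive

variable {n : ℕ} {f : Finset (Fin n) → ℝ}

theorem map_empty_nonneg (hf : FractionallySubadditive f) : 0 ≤ f ∅ := by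
  have h := hf ∅ 1 (fun _ => ∅) (fun _ => 2) (fun _ => zero_le_two) (by simp)
  simp only [univ_unique, sum_singleton] at h
  linarith

theorem card_sub_one_mul_le_sum_erase (hf : FractionallySubadditive f) (A : Finset (Fin n)) :
    ((#A : ℝ) - 1) * f A ≤ ∑ i ∈ A, f (A.erase i) := by
  rcases le_or_gt #A 1 with hA | hA
  · rcases Nat.le_one_iff_eq_zero_or_eq_one.mp hA with hA | hA
    · simpa [card_eq_zero.mp hA] using hf.map_empty_nonneg
    · obtain ⟨a, rfl⟩ := card_eq_one.mp hA
      simpa using hf.map_empty_nonneg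
  have hk : (0 : ℝ) < #A - 1 := sub_pos.mpr (by exact_mod_cast hA)
  set β : Fin n → ℝ := fun i => if i ∈ A then (#A - 1 : ℝ)⁻¹ else 0 with hβ
  have hcover : ∀ a ∈ A, 1 ≤ ∑ i ∈ univ.filter (fun i => a ∈ A.erase i), β i := by
    intro a ha
    rw [sum_ite_mem, sum_const, nsmul_eq_mul, filter_inter, univ_inter, card_filter_mem_erase ha,
      Nat.cast_sub hA.le, Nat.cast_one, mul_inv_cancel₀ hk.ne']
  have h := hf A n (fun i => A.erase i) β (fun i => by positivity) hcover
  simp only [hβ, ite_mul, zero_mul, sum_ite_mem, univ_inter, ← mul_sum] at h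
  rwa [le_inv_mul_iff₀ hk] at h

end FractionallySubadditive

section

variable {α : Type*} [DecidableEq α] (f : Finset α → ℝ)

theorem sub_erase_nonneg_and_le_one
    (hmarg : ∀ (A : Finset α) (j : α), 0 ≤ f (insert j A) - f A ∧ f (insert j A) - f A ≤ 1)
    (A : Finset α) (i : α) : 0 ≤ f A - f (A.erase i) ∧ f A - f (A.erase i) ≤ 1 := by
  by_cases hi : i ∈ A
  · simpa only [insert_erase hi] using hmarg (A.erase i) i
  · simp [erase_eq_of_notMem hi]

theorem sum_sub_erase_eq [Fintype α] (A : Finset α) :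
    ∑ i, (f A - f (A.erase i)) = #A * f A - ∑ i ∈ A, f (A.erase i) := by
  rw [← sum_subset (subset_univ A) fun i _ hi => by simp [erase_eq_of_notMem hi],
    sum_sub_distrib, sum_const, nsmul_eq_mul]

end

theorem fractionally_subadditive_self_bounding_general
    {n : ℕ} (f : Finset (Fin n) → ℝ)
    (hfs : ∀ (A : Finset (Fin n)) (m : ℕ) (B : Fin m → Finset (Fin n)) (β : Fin m → ℝ),
      (∀ i, 0 ≤ β i) →
      (∀ a ∈ A, 1 ≤ ∑ i ∈ univ.filter (fun i => a ∈ B i), β i) →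
      f A ≤ ∑ i, β i * f (B i))
    (hmarg : ∀ (A : Finset (Fin n)) (j : Fin n),
      0 ≤ f (insert j A) - f A ∧ f (insert j A) - f A ≤ 1) :
    (∀ (A : Finset (Fin n)) (i : Fin n),
        0 ≤ f A - f (A.erase i) ∧ f A - f (A.erase i) ≤ 1) ∧
    (∀ A : Finset (Fin n), ∑ i, (f A - f (A.erase i)) ≤ f A) := by
  refine ⟨sub_erase_nonneg_and_le_one f hmarg, fun A => ?_⟩
  have hf : FractionallySubadditive f := hfs
  rw [sum_sub_erase_eq]
  linarith [hf.card_sub_one_mul_le_sum_erase A]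

/-- Every fractionally subadditive set function with marginal values in `[0,1]` is
self-bounding, with `f_i` obtained from `f` by setting the `i`-th coordinate to `0`
(i.e. removing `i` from the set): `0 ≤ f(A) − f(A \ {i}) ≤ 1` for all `A, i`, and
`∑_{i=1}^n (f(A) − f(A \ {i})) ≤ f(A)`. -/
theorem fractionally_subadditive_self_bounding
    {n : ℕ} (f : Finset (Fin n) → ℝ)
    (hnonneg : ∀ A : Finset (Fin n), 0 ≤ f A)
    (hfs : ∀ (A : Finset (Fin n)) (m : ℕ) (B : Fin m → Finset (Fin n)) (β : Fin m → ℝ),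
      (∀ i, 0 ≤ β i) →
      (∀ a ∈ A, 1 ≤ ∑ i ∈ univ.filter (fun i => a ∈ B i), β i) →
      f A ≤ ∑ i, β i * f (B i))
    (hmarg : ∀ (A : Finset (Fin n)) (j : Fin n),
      0 ≤ f (insert j A) - f A ∧ f (insert j A) - f A ≤ 1) :
    (∀ (A : Finset (Fin n)) (i : Fin n),
        0 ≤ f A - f (A.erase i) ∧ f A - f (A.erase i) ≤ 1) ∧
    (∀ A : Finset (Fin n), ∑ i, (f A - f (A.erase i)) ≤ f A) :=
  fractionally_subadditive_self_bounding_general f hfs hmarg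
end

section
/- Every non-negative 1-Lipschitz submodular set function f : 2^[n] → ℝ₊ is (2,0)-self-bounding. Concretely, identifying f with a function on {0,1}^n and setting f_i(x^(i)) = min_{x_i ∈ {0,1}} f(x), one has 0 ≤ f(x) − f_i(x^(i)) ≤ 1 for all x and i, and Σ_{i=1}^n (f(x) − f_i(x^(i))) ≤ 2 f(x) for all x ∈ {0,1}^n. -/
open Finset

lemma sum_erase_le {n : ℕ} (f : Finset (Fin n) → ℝ)
    (hsubmod : ∀ A B : Finset (Fin n), f (A ∪ B) + f (A ∩ B) ≤ f A + f B)
    (A : Finset (Fin n)) :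
    ∀ S : Finset (Fin n), S ⊆ A →
      ∑ i ∈ S, (f A - f (A.erase i)) ≤ f A - f (A \ S) := by
  intro S
  induction S using Finset.induction_on with
  | empty => simp
  | insert _ _ hj ih =>
    rename_i j S
    intro hSA
    have hjA : j ∈ A := hSA (mem_insert_self j S)
    have hS : S ⊆ A := fun x hx => hSA (mem_insert_of_mem hx)
    rw [Finset.sum_insert hj]
    have key : f A + f (A \ insert j S) ≤ f (A.erase j) + f (A \ S) := by
      have h := hsubmod (A.erase j) (A \ S)
      have h1 : A.erase j ∪ (A \ S) = A := by
        ext x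
        simp only [mem_union, mem_erase, mem_sdiff]
        constructor
        · rintro (⟨_, hx⟩ | ⟨hx, _⟩) <;> exact hx
        · intro hx
          by_cases hxj : x = j
          · right; exact ⟨hx, fun hxS => hj (hxj ▸ hxS)⟩
          · left; exact ⟨hxj, hx⟩
      have h2 : A.erase j ∩ (A \ S) = A \ insert j S := by
        ext x
        simp only [mem_inter, mem_erase, mem_sdiff, mem_insert]
        tauto
      rw [h1, h2] at h
      exact h
    have := ih hS
    linarith
  
lemma sum_insert_le {n : ℕ} (f : Finset (Fin n) → ℝ)
    (hsubmod : ∀ A B : Finset (Fin n), f (A ∪ B) + f (A ∩ B) ≤ f A + f B)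
    (A : Finset (Fin n)) :
    ∀ T : Finset (Fin n), Disjoint T A →
      ∑ i ∈ T, (f A - f (insert i A)) ≤ f A - f (A ∪ T) := by
  intro T
  induction T using Finset.induction_on with
  | empty => simp
  | insert _ _ hj ih =>
    rename_i j T
    intro hTA
    have hjA : j ∉ A := by
      intro h
      exact (Finset.disjoint_left.mp hTA (mem_insert_self j T)) h
    have hT : Disjoint T A :=
      Finset.disjoint_left.mpr fun x hx => Finset.disjoint_left.mp hTA (mem_insert_of_mem hx)
    rw [Finset.sum_insert hj]
    have key : f A + f (A ∪ insert j T) ≤ f (insert j A) + f (A ∪ T) := by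
      have h := hsubmod (insert j A) (A ∪ T)
      have h1 : insert j A ∪ (A ∪ T) = A ∪ insert j T := by
        ext x; simp only [mem_union, mem_insert]; tauto
      have h2 : insert j A ∩ (A ∪ T) = A := by
        ext x
        simp only [mem_inter, mem_insert, mem_union]
        constructor
        · rintro ⟨ha | ha, hb | hb⟩
          · subst ha; exact absurd hb hjA
          · subst ha; exact absurd hb hj
          · exact ha
          · exact ha
        · intro hx; exact ⟨Or.inr hx, Or.inl hx⟩
      rw [h1, h2] at h
      linarith
    have := ih hT
    linarith

/-- Every non-negative `1`-Lipschitz submodular set function is `(2,0)`-self-bounding,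
with `f_i(x^{(i)}) = min_{x_i} f(x)`, i.e. `f_i` at a set `A` is
`min (f (A \ {i})) (f (A ∪ {i}))`: each decrement lies in `[0,1]` and the sum of the
decrements is at most `2 f(A)`. -/
theorem nonmonotone_submodular_two_zero_self_bounding
    {n : ℕ} (f : Finset (Fin n) → ℝ)
    (hnonneg : ∀ A : Finset (Fin n), 0 ≤ f A)
    (hsubmod : ∀ A B : Finset (Fin n), f (A ∪ B) + f (A ∩ B) ≤ f A + f B)
    (hlip : ∀ (A : Finset (Fin n)) (j : Fin n), |f (insert j A) - f A| ≤ 1) :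
    (∀ (A : Finset (Fin n)) (i : Fin n),
        0 ≤ f A - min (f (A.erase i)) (f (insert i A)) ∧
          f A - min (f (A.erase i)) (f (insert i A)) ≤ 1) ∧
    (∀ A : Finset (Fin n),
        ∑ i, (f A - min (f (A.erase i)) (f (insert i A))) ≤ 2 * f A) := by
  -- basic facts
  have herase_le : ∀ (A : Finset (Fin n)) (i : Fin n), f A - f (A.erase i) ≤ 1 := by
    intro A i
    by_cases hi : i ∈ A
    · have h := hlip (A.erase i) i
      rw [Finset.insert_erase hi] at h
      linarith [abs_le.mp h |>.2]
    · rw [Finset.erase_eq_of_notMem hi]; linarith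
  have hinsert_le : ∀ (A : Finset (Fin n)) (i : Fin n), f A - f (insert i A) ≤ 1 := by
    intro A i
    have h := hlip A i
    linarith [abs_le.mp h |>.1]
  have hmin_le : ∀ (A : Finset (Fin n)) (i : Fin n),
      min (f (A.erase i)) (f (insert i A)) ≤ f A := by
    intro A i
    by_cases hi : i ∈ A
    · rw [Finset.insert_eq_self.mpr hi]; exact min_le_right _ _
    · rw [Finset.erase_eq_of_notMem hi]; exact min_le_left _ _
  constructor
  · intro A i
    refine ⟨by linarith [hmin_le A i], ?_⟩
    rcases min_cases (f (A.erase i)) (f (insert i A)) with ⟨h, _⟩ | ⟨h, _⟩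
    · rw [h]; exact herase_le A i
    · rw [h]; exact hinsert_le A i
  · intro A
    -- split the sum over A and Aᶜ
    have hsplit : (Finset.univ : Finset (Fin n)) = A ∪ Aᶜ := by simp
    rw [show ∑ i, (f A - min (f (A.erase i)) (f (insert i A)))
        = ∑ i ∈ A, (f A - min (f (A.erase i)) (f (insert i A)))
          + ∑ i ∈ Aᶜ, (f A - min (f (A.erase i)) (f (insert i A))) by
      rw [hsplit, Finset.sum_union (disjoint_compl_right)]]
    set S : Finset (Fin n) := A.filter (fun i => f (A.erase i) < f A) with hS
    set T : Finset (Fin n) := Aᶜ.filter (fun i => f (insert i A) < f A) with hT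
    have hSsum : ∑ i ∈ A, (f A - min (f (A.erase i)) (f (insert i A)))
        = ∑ i ∈ S, (f A - f (A.erase i)) := by
      rw [hS, Finset.sum_filter]
      apply Finset.sum_congr rfl
      intro i hi
      rw [Finset.insert_eq_self.mpr hi]
      by_cases h : f (A.erase i) < f A
      · rw [if_pos h, min_eq_left h.le]
      · rw [if_neg h, min_eq_right (not_lt.mp h)]; ring
    have hTsum : ∑ i ∈ Aᶜ, (f A - min (f (A.erase i)) (f (insert i A)))
        = ∑ i ∈ T, (f A - f (insert i A)) := by
      rw [hT, Finset.sum_filter]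
      apply Finset.sum_congr rfl
      intro i hi
      rw [Finset.erase_eq_of_notMem (Finset.mem_compl.mp hi)]
      by_cases h : f (insert i A) < f A
      · rw [if_pos h, min_eq_right h.le]
      · rw [if_neg h, min_eq_left (not_lt.mp h)]; ring
    have h1 : ∑ i ∈ S, (f A - f (A.erase i)) ≤ f A - f (A \ S) :=
      sum_erase_le f hsubmod A S (Finset.filter_subset _ _)
    have h2 : ∑ i ∈ T, (f A - f (insert i A)) ≤ f A - f (A ∪ T) := by
      apply sum_insert_le f hsubmod A T
      exact Finset.disjoint_left.mpr fun x hx =>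
        Finset.mem_compl.mp (Finset.mem_of_mem_filter x hx)
    have := hnonneg (A \ S)
    have := hnonneg (A ∪ T)
    rw [hSsum, hTsum]
    linarith
end

section
/- Let X_1,…,X_n ∈ {0,1} be independent random variables and let f : {0,1}^n → ℝ be self-bounding, with Z = f(X_1,…,X_n). Then for every λ ∈ ℝ, log E[e^{λ(Z − E[Z])}] ≤ (e^λ − λ − 1) E[Z]. -/
open MeasureTheory ProbabilityTheory Finset

/-- A function `f : {0,1}ⁿ → ℝ` is self-bounding if there are functions `g i`
not depending on the `i`-th coordinate such that `0 ≤ f(x) − g i x ≤ 1` for all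
`x, i` and `∑ᵢ (f(x) − g i x) ≤ f(x)` for all `x`. -/
def SelfBounding {n : ℕ} (f : (Fin n → Bool) → ℝ) : Prop :=
  ∃ g : Fin n → (Fin n → Bool) → ℝ,
    (∀ (i : Fin n) (x : Fin n → Bool) (b : Bool),
      g i (Function.update x i b) = g i x) ∧
    (∀ (x : Fin n → Bool) (i : Fin n), 0 ≤ f x - g i x ∧ f x - g i x ≤ 1) ∧
    (∀ x : Fin n → Bool, ∑ i, (f x - g i x) ≤ f x)

/-!
Herbst's argument. Independence makes the law of `(X i)` the product of its marginals, so all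
expectations are finite weighted sums over `{0,1}ⁿ`. Tensorizing entropy over the coordinates and
bounding each one-coordinate entropy by `E[Y log Y - Y log c - Y + c]` with `c = e^{t f_i}` gives,
for self-bounding `f`, `Ent(e^{tZ}) ≤ (e^{-t} + t - 1) E[Z e^{tZ}]`. For `G t = log E[e^{tZ}]`
this reads `(e^t - 1) G' ≤ e^t G`, so `G t / (e^t - 1)` is antitone; its value at `0` is
`G' 0 = E[Z]`, whence `G t ≤ (e^t - 1) E[Z]`.
-/

open Real Filter Topology

noncomputable def bregmanMulLog (y c : ℝ) : ℝ := y * log y - y * log c - y + c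

theorem bregmanMulLog_nonneg {y c : ℝ} (hy : 0 ≤ y) (hc : 0 < c) : 0 ≤ bregmanMulLog y c := by
  rcases hy.eq_or_lt with rfl | hy
  · simpa [bregmanMulLog] using hc.le
  have h := mul_le_mul_of_nonneg_left (log_le_sub_one_of_pos (div_pos hc hy)) hy.le
  rw [log_div hc.ne' hy.ne', mul_sub_one, mul_div_cancel₀ _ hy.ne'] at h
  unfold bregmanMulLog
  linarith

section WeightedEntropy

variable {α : Type*} [Fintype α] {w Y : α → ℝ}

noncomputable def weightedEntropy (w Y : α → ℝ) : ℝ :=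
  ∑ a, w a * (Y a * log (Y a)) - (∑ a, w a * Y a) * log (∑ a, w a * Y a)

theorem sum_mul_pos_of_sum_eq_one (hw : ∀ a, 0 ≤ w a) (hw1 : ∑ a, w a = 1)
    (hY : ∀ a, 0 < Y a) : 0 < ∑ a, w a * Y a := by
  obtain ⟨a, -, ha⟩ := Finset.exists_ne_zero_of_sum_ne_zero (hw1.trans_ne one_ne_zero)
  exact sum_pos' (fun b _ => mul_nonneg (hw b) (hY b).le)
    ⟨a, mem_univ a, mul_pos ((hw a).lt_of_ne' ha) (hY a)⟩

theorem sum_mul_bregmanMulLog (w Y c : α → ℝ) :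
    ∑ a, w a * bregmanMulLog (Y a) (c a) = ∑ a, w a * (Y a * log (Y a))
      - ∑ a, w a * (Y a * log (c a)) - ∑ a, w a * Y a + ∑ a, w a * c a := by
  simp only [bregmanMulLog, mul_add, mul_sub, sum_add_distrib, sum_sub_distrib]

theorem sum_mul_mul_const (w Y : α → ℝ) (c : ℝ) :
    ∑ a, w a * (Y a * c) = (∑ a, w a * Y a) * c := by
  simp only [← mul_assoc, ← sum_mul]

theorem weightedEntropy_le_sum_bregmanMulLog (hw : ∀ a, 0 ≤ w a) (hw1 : ∑ a, w a = 1)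
    (hY : ∀ a, 0 ≤ Y a) {c : ℝ} (hc : 0 < c) :
    weightedEntropy w Y ≤ ∑ a, w a * bregmanMulLog (Y a) c := by
  have hgap := bregmanMulLog_nonneg
    (sum_nonneg fun a (_ : a ∈ univ) => mul_nonneg (hw a) (hY a)) hc
  rw [sum_mul_bregmanMulLog w Y fun _ => c, weightedEntropy, sum_mul_mul_const, ← sum_mul, hw1]
  unfold bregmanMulLog at hgap
  linarith

theorem sum_mul_le_weightedEntropy (hw : ∀ a, 0 ≤ w a) (hY : ∀ a, 0 ≤ Y a)
    (hs : 0 < ∑ a, w a * Y a) {U : α → ℝ} (hU : ∑ a, w a * exp (U a) ≤ 1) :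
    ∑ a, w a * (Y a * U a) ≤ weightedEntropy w Y := by
  generalize hsdef : ∑ a, w a * Y a = s at hs
  have h := sum_nonneg fun a (_ : a ∈ univ) => mul_nonneg (hw a)
    (bregmanMulLog_nonneg (hY a) (mul_pos hs (exp_pos (U a))))
  have hlog : ∑ a, w a * (Y a * log (s * exp (U a))) = s * log s + ∑ a, w a * (Y a * U a) := by
    simp only [log_mul hs.ne' (exp_pos _).ne', log_exp, mul_add, sum_add_distrib,
      sum_mul_mul_const, hsdef]
  have hexp : ∑ a, w a * (s * exp (U a)) = s * ∑ a, w a * exp (U a) := by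
    rw [mul_sum]
    exact sum_congr rfl fun a _ => mul_left_comm _ _ _
  rw [sum_mul_bregmanMulLog w Y, hlog, hexp, hsdef] at h
  rw [weightedEntropy, hsdef]
  nlinarith

theorem weightedEntropy_eq_sum_mul_log_div (hY : ∀ a, 0 < Y a) (hs : 0 < ∑ a, w a * Y a) :
    weightedEntropy w Y = ∑ a, w a * (Y a * log (Y a / ∑ b, w b * Y b)) := by
  simp only [log_div (hY _).ne' hs.ne', mul_sub, sum_sub_distrib, sum_mul_mul_const,
    weightedEntropy]

/-- Entropy is convex, being a supremum of linear functionals by `sum_mul_le_weightedEntropy`. -/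
theorem weightedEntropy_sum_le {β : Type*} [Fintype β] {p : β → ℝ} {Y : β → α → ℝ}
    (hw : ∀ a, 0 ≤ w a) (hw1 : ∑ a, w a = 1) (hp : ∀ b, 0 ≤ p b) (hp1 : ∑ b, p b = 1)
    (hY : ∀ b a, 0 < Y b a) :
    weightedEntropy w (fun a => ∑ b, p b * Y b a) ≤ ∑ b, p b * weightedEntropy w (Y b) := by
  set V : α → ℝ := fun a => ∑ b, p b * Y b a
  have hV : ∀ a, 0 < V a := fun a => sum_mul_pos_of_sum_eq_one hp hp1 fun b => hY b a
  have hs := sum_mul_pos_of_sum_eq_one hw hw1 hV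
  set U : α → ℝ := fun a => log (V a / ∑ a', w a' * V a')
  have hU : ∑ a, w a * exp (U a) = 1 := by
    simp only [U, exp_log (div_pos (hV _) hs), mul_div_assoc', ← sum_div, div_self hs.ne']
  calc weightedEntropy w V = ∑ a, w a * (V a * U a) := weightedEntropy_eq_sum_mul_log_div hV hs
    _ = ∑ b, p b * ∑ a, w a * (Y b a * U a) := by
        simp only [V, mul_sum, sum_mul]
        rw [sum_comm]
        exact sum_congr rfl fun b _ => sum_congr rfl fun a _ => by ring
    _ ≤ ∑ b, p b * weightedEntropy w (Y b) :=
        sum_le_sum fun b _ => mul_le_mul_of_nonneg_left (sum_mul_le_weightedEntropy hw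
          (fun a => (hY b a).le) (sum_mul_pos_of_sum_eq_one hw hw1 (hY b)) hU.le) (hp b)

end WeightedEntropy

section ProductWeight

variable {α ι : Type*} [Fintype ι]

noncomputable def productWeight (q : ι → α → ℝ) (x : ι → α) : ℝ := ∏ i, q i (x i)

theorem productWeight_nonneg {q : ι → α → ℝ} (hq : ∀ i a, 0 ≤ q i a) (x : ι → α) :
    0 ≤ productWeight q x :=
  prod_nonneg fun i _ => hq i (x i)

theorem sum_productWeight [Fintype α] [DecidableEq ι] {q : ι → α → ℝ}
    (hq1 : ∀ i, ∑ a, q i a = 1) : ∑ x, productWeight q x = 1 := by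
  simp only [productWeight, ← Fintype.prod_sum, hq1, prod_const_one]

theorem sum_productWeight_mul_cons [Fintype α] {n : ℕ} (q : Fin (n + 1) → α → ℝ)
    (h : (Fin (n + 1) → α) → ℝ) :
    ∑ x, productWeight q x * h x
      = ∑ a, q 0 a * ∑ x, productWeight (fun i => q i.succ) x * h (Fin.cons a x) := by
  rw [← (Fin.consEquiv fun _ => α).sum_comp, Fintype.sum_prod_type]
  refine sum_congr rfl fun a _ => ?_
  rw [mul_sum]
  refine sum_congr rfl fun x _ => ?_
  simp only [Fin.consEquiv, Equiv.coe_fn_mk, productWeight, Fin.prod_univ_succ, Fin.cons_zero,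
    Fin.cons_succ]
  ring

theorem weightedEntropy_productWeight_cons [Fintype α] {n : ℕ} (q : Fin (n + 1) → α → ℝ)
    (Y : (Fin (n + 1) → α) → ℝ) :
    weightedEntropy (productWeight q) Y
      = ∑ a, q 0 a
          * weightedEntropy (productWeight fun i => q i.succ) (fun x => Y (Fin.cons a x))
        + weightedEntropy (q 0)
          (fun a => ∑ x, productWeight (fun i => q i.succ) x * Y (Fin.cons a x)) := by
  simp only [weightedEntropy, sum_productWeight_mul_cons q, mul_sub, sum_sub_distrib]
  ring

theorem weightedEntropy_sum_productWeight_cons_le [Fintype α] {n : ℕ}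
    {q : Fin (n + 1) → α → ℝ} (hq : ∀ i a, 0 ≤ q i a) (hq1 : ∀ i, ∑ a, q i a = 1)
    {Y : (Fin (n + 1) → α) → ℝ} (hY : ∀ x, 0 < Y x) {c : (Fin (n + 1) → α) → ℝ}
    (hc : ∀ x, 0 < c x) (hc0 : ∀ x a, c (Function.update x 0 a) = c x) :
    weightedEntropy (q 0) (fun a => ∑ x, productWeight (fun i => q i.succ) x * Y (Fin.cons a x))
      ≤ ∑ x, productWeight q x * bregmanMulLog (Y x) (c x) := by
  obtain ⟨a₀⟩ : Nonempty α := by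
    by_contra hα
    simpa [not_nonempty_iff.mp hα] using hq1 0
  have hc_cons : ∀ a x, c (Fin.cons a x) = c (Fin.cons a₀ x) := fun a x => by
    rw [← hc0 (Fin.cons a₀ x) a, Fin.update_cons_zero]
  calc _ ≤ ∑ x, productWeight (fun i => q i.succ) x
          * weightedEntropy (q 0) (fun a => Y (Fin.cons a x)) :=
        weightedEntropy_sum_le (hq 0) (hq1 0) (productWeight_nonneg fun i => hq i.succ)
          (sum_productWeight fun i => hq1 i.succ) fun x a => hY _
    _ ≤ ∑ x, productWeight (fun i => q i.succ) x
          * ∑ a, q 0 a * bregmanMulLog (Y (Fin.cons a x)) (c (Fin.cons a₀ x)) :=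
        sum_le_sum fun x _ => mul_le_mul_of_nonneg_left
          (weightedEntropy_le_sum_bregmanMulLog (hq 0) (hq1 0) (fun a => (hY _).le) (hc _))
          (productWeight_nonneg (fun i => hq i.succ) x)
    _ = _ := by
        simp only [sum_productWeight_mul_cons q, hc_cons, mul_sum]
        rw [sum_comm]
        exact sum_congr rfl fun a _ => sum_congr rfl fun x _ => by ring

/-- The modified logarithmic Sobolev inequality on a product space. -/
theorem weightedEntropy_productWeight_le [Fintype α] {n : ℕ} {q : Fin n → α → ℝ}
    (hq : ∀ i a, 0 ≤ q i a) (hq1 : ∀ i, ∑ a, q i a = 1) {Y : (Fin n → α) → ℝ}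
    (hY : ∀ x, 0 < Y x) {c : Fin n → (Fin n → α) → ℝ} (hc : ∀ i x, 0 < c i x)
    (hci : ∀ i x a, c i (Function.update x i a) = c i x) :
    weightedEntropy (productWeight q) Y
      ≤ ∑ i, ∑ x, productWeight q x * bregmanMulLog (Y x) (c i x) := by
  induction n with
  | zero => simp [weightedEntropy, productWeight]
  | succ n ih =>
    have htail : ∑ a, q 0 a
          * weightedEntropy (productWeight fun i => q i.succ) (fun x => Y (Fin.cons a x))
        ≤ ∑ i : Fin n, ∑ x, productWeight q x * bregmanMulLog (Y x) (c i.succ x) := by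
      calc _ ≤ ∑ a, q 0 a * ∑ i : Fin n, ∑ x, productWeight (fun i => q i.succ) x
              * bregmanMulLog (Y (Fin.cons a x)) (c i.succ (Fin.cons a x)) := by
            refine sum_le_sum fun a _ => mul_le_mul_of_nonneg_left
              (ih (fun i => hq i.succ) (fun i => hq1 i.succ) (fun x => hY _)
                (fun i x => hc _ _) fun i x b => ?_) (hq 0 a)
            rw [Fin.cons_update, hci]
        _ = _ := by
            simp only [sum_productWeight_mul_cons q, mul_sum]
            exact sum_comm
    rw [weightedEntropy_productWeight_cons, Fin.sum_univ_succ]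
    linarith [weightedEntropy_sum_productWeight_cons_le hq hq1 hY (hc 0) (hci 0)]

end ProductWeight

theorem exp_mul_sub_mul_sub_one_le {s z : ℝ} (hz0 : 0 ≤ z) (hz1 : z ≤ 1) :
    exp (z * s) - z * s - 1 ≤ z * (exp s - s - 1) := by
  have h := convexOn_exp.2 (Set.mem_univ s) (Set.mem_univ 0) hz0 (sub_nonneg.2 hz1)
    (add_sub_cancel z 1)
  simp only [smul_eq_mul, mul_zero, add_zero, exp_zero, mul_one] at h
  linarith

theorem bregmanMulLog_exp_exp (a b : ℝ) :
    bregmanMulLog (exp a) (exp b) = exp a * (exp (b - a) - (b - a) - 1) := by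
  rw [bregmanMulLog, log_exp, log_exp, exp_sub]
  field_simp
  ring

theorem sum_bregmanMulLog_exp_le {ι : Type*} [Fintype ι] {F : ℝ} {G : ι → ℝ}
    (hG : ∀ i, 0 ≤ F - G i ∧ F - G i ≤ 1) (hsum : ∑ i, (F - G i) ≤ F) (t : ℝ) :
    ∑ i, bregmanMulLog (exp (t * F)) (exp (t * G i))
      ≤ (exp (-t) + t - 1) * (F * exp (t * F)) := by
  have hφ : 0 ≤ exp (-t) + t - 1 := by linarith [add_one_le_exp (-t)]
  calc ∑ i, bregmanMulLog (exp (t * F)) (exp (t * G i))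
      = ∑ i, exp (t * F) * (exp ((F - G i) * -t) - (F - G i) * -t - 1) := by
        refine sum_congr rfl fun i _ => ?_
        rw [bregmanMulLog_exp_exp]
        ring_nf
    _ ≤ ∑ i, exp (t * F) * ((F - G i) * (exp (-t) + t - 1)) :=
        sum_le_sum fun i _ => mul_le_mul_of_nonneg_left
          ((exp_mul_sub_mul_sub_one_le (hG i).1 (hG i).2).trans_eq (by ring)) (exp_pos _).le
    _ = exp (t * F) * (exp (-t) + t - 1) * ∑ i, (F - G i) := by
        rw [mul_sum]
        exact sum_congr rfl fun i _ => by ring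
    _ ≤ (exp (-t) + t - 1) * (F * exp (t * F)) := by
        nlinarith [mul_le_mul_of_nonneg_left hsum (mul_nonneg (exp_pos (t * F)).le hφ)]

theorem SelfBounding.weightedEntropy_exp_le {n : ℕ} {f : (Fin n → Bool) → ℝ}
    (hf : SelfBounding f) {q : Fin n → Bool → ℝ} (hq : ∀ i b, 0 ≤ q i b)
    (hq1 : ∀ i, ∑ b, q i b = 1) (t : ℝ) :
    weightedEntropy (productWeight q) (fun x => exp (t * f x))
      ≤ (exp (-t) + t - 1) * ∑ x, productWeight q x * (f x * exp (t * f x)) := by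
  obtain ⟨g, hg, hg01, hgs⟩ := hf
  calc _ ≤ ∑ i, ∑ x, productWeight q x * bregmanMulLog (exp (t * f x)) (exp (t * g i x)) :=
        weightedEntropy_productWeight_le hq hq1 (fun x => exp_pos _) (fun i x => exp_pos _)
          fun i x b => by rw [hg]
    _ = ∑ x, productWeight q x * ∑ i, bregmanMulLog (exp (t * f x)) (exp (t * g i x)) := by
        simp only [mul_sum]
        exact sum_comm
    _ ≤ ∑ x, productWeight q x * ((exp (-t) + t - 1) * (f x * exp (t * f x))) :=
        sum_le_sum fun x _ => mul_le_mul_of_nonneg_left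
          (sum_bregmanMulLog_exp_le (hg01 x) (hgs x) t) (productWeight_nonneg hq x)
    _ = _ := by
        rw [mul_sum]
        exact sum_congr rfl fun x _ => mul_left_comm _ _ _

theorem antitone_of_hasDerivAt_nonpos_of_ne {H H' : ℝ → ℝ} {c : ℝ} (hH : Continuous H)
    (hd : ∀ t ≠ c, HasDerivAt H (H' t) t) (hd' : ∀ t ≠ c, H' t ≤ 0) : Antitone H := by
  have hIic : AntitoneOn H (Set.Iic c) :=
    antitoneOn_of_hasDerivWithinAt_nonpos (convex_Iic c) hH.continuousOn
      (fun t ht => (hd t (interior_Iic.subset ht).ne).hasDerivWithinAt)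
      fun t ht => hd' t (interior_Iic.subset ht).ne
  have hIci : AntitoneOn H (Set.Ici c) :=
    antitoneOn_of_hasDerivWithinAt_nonpos (convex_Ici c) hH.continuousOn
      (fun t ht => (hd t (interior_Ici.subset ht).ne').hasDerivWithinAt)
      fun t ht => hd' t (interior_Ici.subset ht).ne'
  simpa [Set.Iic_union_Ici] using hIic.union_right hIci isGreatest_Iic isLeast_Ici

theorem tendsto_div_exp_sub_one {G : ℝ → ℝ} {m : ℝ} (hG : HasDerivAt G m 0)
    (hG0 : G 0 = 0) : Tendsto (fun t => G t / (exp t - 1)) (𝓝[≠] 0) (𝓝 m) := by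
  have h := (hasDerivAt_iff_tendsto_slope.1 hG).div
    (hasDerivAt_iff_tendsto_slope.1 (hasDerivAt_exp 0)) (exp_pos 0).ne'
  rw [exp_zero, div_one] at h
  refine h.congr' (eventually_nhdsWithin_of_forall fun t (ht : t ≠ 0) => ?_)
  simp only [Pi.div_apply, slope_def_field, hG0, exp_zero, sub_zero]
  field_simp

/-- Herbst's argument: `(e^t - 1) G' ≤ e^t G` makes `G t / (e^t - 1)` antitone, and its value
at `0` is `G' 0`. -/
theorem le_mul_exp_sub_one_of_hasDerivAt {G G' : ℝ → ℝ} (hG : ∀ t, HasDerivAt G (G' t) t)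
    (hG0 : G 0 = 0) (hineq : ∀ t, (exp t - 1) * G' t ≤ exp t * G t) (t : ℝ) :
    G t ≤ G' 0 * (exp t - 1) := by
  have hexp : ∀ {t : ℝ}, t ≠ 0 → exp t - 1 ≠ 0 := fun ht =>
    sub_ne_zero.2 (mt (exp_eq_one_iff _).1 ht)
  set H := Function.update (fun t => G t / (exp t - 1)) 0 (G' 0)
  have hHd : ∀ t ≠ 0, HasDerivAt H
      ((G' t * (exp t - 1) - G t * exp t) / (exp t - 1) ^ 2) t := fun t ht =>
    ((hG t).div ((hasDerivAt_exp t).sub_const 1) (hexp ht)).congr_of_eventuallyEq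
      ((eventually_ne_nhds ht).mono fun s hs => Function.update_of_ne hs _ _)
  have hH : Continuous H := continuous_iff_continuousAt.2 fun s => by
    rcases eq_or_ne s 0 with rfl | hs
    · exact continuousAt_update_same.2 (tendsto_div_exp_sub_one (hG 0) hG0)
    · exact (hHd s hs).continuousAt
  have hanti := antitone_of_hasDerivAt_nonpos_of_ne hH hHd fun s _ =>
    div_nonpos_of_nonpos_of_nonneg (by linarith [hineq s]) (sq_nonneg _)
  rcases eq_or_ne t 0 with rfl | ht
  · simp [hG0]
  have hGH : G t = H t * (exp t - 1) := by
    rw [show H t = G t / (exp t - 1) from Function.update_of_ne ht _ _,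
      div_mul_cancel₀ _ (hexp ht)]
  have hH0 : H 0 = G' 0 := Function.update_self _ _ _
  rcases le_total 0 t with h | h
  · nlinarith [hanti h, add_one_le_exp t]
  · nlinarith [hanti h, exp_le_one_iff.2 h]

theorem SelfBounding.log_sum_productWeight_exp_le {n : ℕ} {f : (Fin n → Bool) → ℝ}
    (hf : SelfBounding f) {q : Fin n → Bool → ℝ} (hq : ∀ i b, 0 ≤ q i b)
    (hq1 : ∀ i, ∑ b, q i b = 1) (l : ℝ) :
    log (∑ x, productWeight q x * exp (l * (f x - ∑ y, productWeight q y * f y)))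
      ≤ (exp l - l - 1) * ∑ x, productWeight q x * f x := by
  set m := ∑ x, productWeight q x * f x
  set F : ℝ → ℝ := fun t => ∑ x, productWeight q x * exp (t * f x)
  set A : ℝ → ℝ := fun t => ∑ x, productWeight q x * (f x * exp (t * f x))
  have hW := productWeight_nonneg hq
  have hW1 := sum_productWeight hq1
  have hFpos : ∀ t, 0 < F t := fun t => sum_mul_pos_of_sum_eq_one hW hW1 fun x => exp_pos _
  have hFA : ∀ t, HasDerivAt F (A t) t := fun t => HasDerivAt.fun_sum fun x _ =>
    (((hasDerivAt_mul_const (f x)).exp).const_mul _).congr_deriv (by ring)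
  have hent : ∀ t, weightedEntropy (productWeight q) (fun x => exp (t * f x))
      = t * A t - F t * log (F t) := fun t => by
    simp only [weightedEntropy, log_exp, A, F, mul_sum]
    exact congrArg (· - _) (sum_congr rfl fun x _ => by ring)
  have hineq : ∀ t, (exp t - 1) * (A t / F t) ≤ exp t * log (F t) := fun t => by
    have h : t * A t - F t * log (F t) ≤ (exp (-t) + t - 1) * A t :=
      (hent t).symm.trans_le (hf.weightedEntropy_exp_le hq hq1 t)
    have he : exp t * exp (-t) = 1 := by rw [← exp_add, add_neg_cancel, exp_zero]
    rw [← mul_div_assoc, div_le_iff₀ (hFpos t)]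
    linear_combination exp t * h + A t * he
  have hG0 : log (F 0) = 0 := by simp [F, hW1]
  have herbst := le_mul_exp_sub_one_of_hasDerivAt (fun t => (hFA t).log (hFpos t).ne') hG0
    hineq l
  have hA0 : A 0 / F 0 = m := by simp [A, F, hW1, m]
  have hsum : ∑ x, productWeight q x * exp (l * (f x - m)) = exp (-(l * m)) * F l := by
    rw [mul_sum]
    exact sum_congr rfl fun x _ => by rw [mul_sub, sub_eq_neg_add, exp_add]; ring
  rw [hsum, log_mul (exp_pos _).ne' (hFpos l).ne', log_exp]
  rw [hA0] at herbst
  linarith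

theorem ProbabilityTheory.iIndepFun.integral_comp_eq_sum_productWeight
    {Ω ι α : Type*} [MeasurableSpace Ω] {μ : Measure Ω} [Fintype ι] [DecidableEq ι]
    [Fintype α] [MeasurableSpace α] [MeasurableSingletonClass α] {X : ι → Ω → α}
    (hind : iIndepFun X μ) (hX : ∀ i, Measurable (X i)) (h : (ι → α) → ℝ) :
    ∫ ω, h (fun i => X i ω) ∂μ
      = ∑ x, productWeight (fun i a => (μ.map (X i)).real {a}) x * h x := by
  have := hind.isProbabilityMeasure
  have hXae : ∀ i, AEMeasurable (X i) μ := fun i => (hX i).aemeasurable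
  rw [← integral_map (aemeasurable_pi_lambda _ hXae)
      (measurable_of_finite h).aestronglyMeasurable, hind.map_fun_eq_pi_map hXae,
    integral_fintype .of_finite]
  simp [productWeight, measureReal_def, ENNReal.toReal_prod]

theorem sum_map_measureReal_singleton {Ω α : Type*} [MeasurableSpace Ω] {μ : Measure Ω}
    [IsProbabilityMeasure μ] [Fintype α] [MeasurableSpace α] [MeasurableSingletonClass α]
    {Y : Ω → α} (hY : Measurable Y) : ∑ a, (μ.map Y).real {a} = 1 := by
  have := Measure.isProbabilityMeasure_map (μ := μ) hY.aemeasurable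
  simp

theorem self_bounding_log_mgf_bound_general
    {Ω : Type*} [MeasurableSpace Ω] (μ : Measure Ω)
    {n : ℕ} (X : Fin n → Ω → Bool) (hXm : ∀ i, Measurable (X i))
    (hXind : iIndepFun X μ)
    (f : (Fin n → Bool) → ℝ) (hf : SelfBounding f)
    (Z : Ω → ℝ) (hZ : ∀ ω, Z ω = f (fun i => X i ω)) (l : ℝ) :
    Real.log (∫ ω, Real.exp (l * (Z ω - ∫ ω', Z ω' ∂μ)) ∂μ)
      ≤ (Real.exp l - l - 1) * ∫ ω, Z ω ∂μ := by
  have := hXind.isProbabilityMeasure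
  have hE := hXind.integral_comp_eq_sum_productWeight hXm
  simp only [hZ]
  rw [hE f, hE fun x => exp (l * (f x - _))]
  exact hf.log_sum_productWeight_exp_le (fun _ _ => measureReal_nonneg)
    (fun i => sum_map_measureReal_singleton (hXm i)) l

/-- Boucheron–Lugosi–Massart: if `Z = f(X₁,…,Xₙ)` for independent `{0,1}`-valued
random variables `Xᵢ` and a self-bounding `f`, then for all `λ ∈ ℝ`,
`log E[e^{λ(Z − E Z)}] ≤ (e^λ − λ − 1) E[Z]`. -/
theorem self_bounding_log_mgf_bound
    {Ω : Type*} [MeasurableSpace Ω] (μ : Measure Ω) [IsProbabilityMeasure μ]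
    {n : ℕ} (X : Fin n → Ω → Bool) (hXm : ∀ i, Measurable (X i))
    (hXind : iIndepFun X μ)
    (f : (Fin n → Bool) → ℝ) (hf : SelfBounding f)
    (Z : Ω → ℝ) (hZ : ∀ ω, Z ω = f (fun i => X i ω)) (l : ℝ) :
    Real.log (∫ ω, Real.exp (l * (Z ω - ∫ ω', Z ω' ∂μ)) ∂μ)
      ≤ (Real.exp l - l - 1) * ∫ ω, Z ω ∂μ :=
  self_bounding_log_mgf_bound_general μ X hXm hXind f hf Z hZ l
end

section
/- Let X_1,…,X_n ∈ {0,1} be independent random variables and let f : {0,1}^n → ℝ be self-bounding, with Z = f(X_1,…,X_n). Then for every δ > 0, Pr[Z ≥ (1+δ) E[Z]] ≤ (e^δ / (1+δ)^{1+δ})^{E[Z]}. -/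
open MeasureTheory ProbabilityTheory Finset

/-!
Entropy method (Boucheron–Lugosi–Massart). Let `F(t) = E e^{tZ}` and `Z_i = f_i(X⁽ⁱ⁾)`.
Tensorization of entropy over the independent coordinates, the modified logarithmic Sobolev
inequality `Ent_i(e^{tZ}) ≤ (e^{-t} + t - 1) E_i[(Z - Z_i) e^{tZ}]` (convexity of `exp`, using
`0 ≤ Z - Z_i ≤ 1`) and the self-bounding property `Σ_i (Z - Z_i) ≤ Z` give the differential
inequality `(1 - e^{-t}) F'(t) ≤ F(t) log F(t)`. Herbst's argument turns it into
`log F(t) ≤ E Z (e^t - 1)`: the quotient `log F(t) / (e^t - 1)` is antitone on `t > 0` and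
tends to `E Z` as `t → 0⁺`. Markov's inequality at `t = log (1 + δ)` gives the tail bound.
-/

open Function Real Filter Topology

lemma mul_le_mul_log_div_sub_add_mul_exp {a c : ℝ} (ha : 0 ≤ a) (hc : 0 < c) (b : ℝ) :
    a * b ≤ a * log (a / c) - a + c * exp b := by
  rcases ha.eq_or_lt with rfl | ha
  · simpa using (mul_pos hc (exp_pos b)).le
  · have key := add_one_le_exp (b - log (a / c))
    rw [exp_sub, exp_log (div_pos ha hc), le_div_iff₀ (div_pos ha hc)] at key
    field_simp at key
    linarith

lemma exp_mul_le_one_sub_add_mul_exp {u : ℝ} (hu : u ∈ Set.Icc (0 : ℝ) 1) (s : ℝ) :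
    exp (u * s) ≤ 1 - u + u * exp s := by
  simpa using convexOn_exp.2 (Set.mem_univ 0) (Set.mem_univ s) (sub_nonneg.2 hu.2) hu.1
    (sub_add_cancel 1 u)

lemma eq_of_forall_update_eq {n : ℕ} {α β : Type*} {F : (Fin n → α) → β}
    (hF : ∀ x i a, F (update x i a) = F x) (x y : Fin n → α) : F y = F x := by
  classical
  have hs : ∀ s : Finset (Fin n), F (s.piecewise y x) = F x := by
    intro s
    induction s using Finset.induction with
    | empty => simp
    | insert j s _ ih => rw [piecewise_insert, hF, ih]
  simpa using hs univ

lemma exp_neg_log_mul_mul_exp_eq_rpow {δ : ℝ} (hδ : -1 < δ) (m : ℝ) :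
    exp (-log (1 + δ) * ((1 + δ) * m)) * exp (m * δ) = (exp δ / (1 + δ) ^ (1 + δ)) ^ m := by
  have h1δ : 0 < 1 + δ := by linarith
  rw [rpow_def_of_pos (by positivity), log_div (exp_pos δ).ne' (by positivity), log_exp,
    log_rpow h1δ, ← exp_add]
  ring_nf

section Herbst

variable {F F' : ℝ → ℝ} (hF : ∀ t, HasDerivAt F (F' t) t) (hpos : ∀ t, 0 < F t)
include hF hpos

lemma antitoneOn_log_div_exp_sub_one
    (hineq : ∀ t, 0 < t → (1 - exp (-t)) * F' t ≤ F t * log (F t)) :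
    AntitoneOn (fun t => log (F t) / (exp t - 1)) (Set.Ioi 0) := by
  have hderiv : ∀ t ∈ Set.Ioi (0 : ℝ), HasDerivAt (fun t => log (F t) / (exp t - 1))
      ((F' t / F t * (exp t - 1) - log (F t) * exp t) / (exp t - 1) ^ 2) t := fun t ht =>
    ((hF t).log (hpos t).ne').div ((hasDerivAt_exp t).sub_const 1)
      (sub_pos.2 (one_lt_exp_iff.2 ht)).ne'
  refine antitoneOn_of_hasDerivWithinAt_nonpos (convex_Ioi 0)
    (fun t ht => (hderiv t ht).continuousAt.continuousWithinAt)
    (fun t ht => (hderiv t (interior_subset ht)).hasDerivWithinAt) fun t ht => ?_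
  rw [interior_Ioi] at ht
  refine div_nonpos_of_nonpos_of_nonneg ?_ (sq_nonneg _)
  have h := mul_le_mul_of_nonneg_right (hineq t ht) (div_pos (exp_pos t) (hpos t)).le
  have hexp : (1 - exp (-t)) * exp t = exp t - 1 := by
    rw [sub_mul, one_mul, ← exp_add, neg_add_cancel, exp_zero]
  rw [sub_nonpos]
  calc F' t / F t * (exp t - 1) = (1 - exp (-t)) * F' t * (exp t / F t) := by
        rw [← hexp]; ring
    _ ≤ F t * log (F t) * (exp t / F t) := h
    _ = log (F t) * exp t := by field_simp [(hpos t).ne']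

lemma tendsto_log_div_exp_sub_one (hF0 : F 0 = 1) :
    Tendsto (fun t => log (F t) / (exp t - 1)) (𝓝[>] 0) (𝓝 (F' 0)) := by
  have hlog := ((hF 0).log (hpos 0).ne').tendsto_slope_zero_right
  have hexp := (hasDerivAt_exp 0).tendsto_slope_zero_right
  simp only [zero_add, hF0, log_one, sub_zero, div_one, exp_zero, smul_eq_mul] at hlog hexp
  have hquot := hlog.div hexp one_ne_zero
  rw [div_one] at hquot
  refine hquot.congr' ?_
  filter_upwards [self_mem_nhdsWithin] with t (ht : 0 < t)
  simp only [Pi.div_apply]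
  field_simp

theorem log_le_mul_exp_sub_one_of_entropy_ineq (hF0 : F 0 = 1)
    (hineq : ∀ t, 0 < t → (1 - exp (-t)) * F' t ≤ F t * log (F t)) {s : ℝ} (hs : 0 < s) :
    log (F s) ≤ F' 0 * (exp s - 1) := by
  have hquot : log (F s) / (exp s - 1) ≤ F' 0 := by
    refine ge_of_tendsto (tendsto_log_div_exp_sub_one hF hpos hF0) ?_
    filter_upwards [Ioo_mem_nhdsGT hs] with t ht
    exact antitoneOn_log_div_exp_sub_one hF hpos hineq ht.1 hs ht.2.le
  rwa [div_le_iff₀ (sub_pos.2 (one_lt_exp_iff.2 hs))] at hquot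

end Herbst

namespace FiniteProduct

variable {α : Type*} {n : ℕ} (p : Fin n → α → ℝ)

def weight (x : Fin n → α) : ℝ := ∏ i, p i (x i)

lemma weight_update_mul (i : Fin n) (x : Fin n → α) (a : α) :
    weight p (update x i a) * p i (x i) = weight p x * p i a := by
  simp only [weight, ← mul_prod_erase univ _ (mem_univ i), update_self]
  rw [prod_congr rfl fun j hj => by rw [update_of_ne (ne_of_mem_erase hj)]]
  ring

variable [Fintype α]

def expect (h : (Fin n → α) → ℝ) : ℝ := ∑ x, weight p x * h x

/-- `condExpect p i h` integrates out the `i`-th coordinate, i.e. conditions on all the others. -/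
def condExpect (i : Fin n) (h : (Fin n → α) → ℝ) (x : Fin n → α) : ℝ :=
  ∑ a, p i a * h (update x i a)

/-- `partialExpect p h k` averages `h` over the coordinates `0, …, k - 1`. -/
def partialExpect (h : (Fin n → α) → ℝ) : ℕ → (Fin n → α) → ℝ
  | 0 => h
  | k + 1 => if hk : k < n then condExpect p ⟨k, hk⟩ (partialExpect h k) else partialExpect h k

noncomputable def ent (h : (Fin n → α) → ℝ) : ℝ :=
  expect p (fun x => h x * log (h x)) - expect p h * log (expect p h)

noncomputable def condEnt (i : Fin n) (h : (Fin n → α) → ℝ) (x : Fin n → α) : ℝ :=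
  condExpect p i (fun y => h y * log (h y)) x - condExpect p i h x * log (condExpect p i h x)

variable {p}

lemma expect_sub (h k : (Fin n → α) → ℝ) :
    expect p (fun x => h x - k x) = expect p h - expect p k := by
  simp only [expect, mul_sub, sum_sub_distrib]

lemma expect_mul_const (h : (Fin n → α) → ℝ) (c : ℝ) :
    expect p (fun x => h x * c) = expect p h * c := by
  simp only [expect, sum_mul, mul_assoc]

lemma expect_const_mul (c : ℝ) (h : (Fin n → α) → ℝ) :
    expect p (fun x => c * h x) = c * expect p h := by
  simp only [expect, mul_sum, mul_left_comm]

lemma expect_sum {ι : Type*} (s : Finset ι) (h : ι → (Fin n → α) → ℝ) :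
    expect p (fun x => ∑ j ∈ s, h j x) = ∑ j ∈ s, expect p (h j) := by
  simp only [expect, mul_sum]
  exact sum_comm

lemma condExpect_add (i : Fin n) (h k : (Fin n → α) → ℝ) (x : Fin n → α) :
    condExpect p i (fun y => h y + k y) x = condExpect p i h x + condExpect p i k x := by
  simp only [condExpect, mul_add, sum_add_distrib]

lemma condExpect_sub (i : Fin n) (h k : (Fin n → α) → ℝ) (x : Fin n → α) :
    condExpect p i (fun y => h y - k y) x = condExpect p i h x - condExpect p i k x := by
  simp only [condExpect, mul_sub, sum_sub_distrib]

lemma condExpect_const_mul (i : Fin n) (c : ℝ) (h : (Fin n → α) → ℝ) (x : Fin n → α) :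
    condExpect p i (fun y => c * h y) x = c * condExpect p i h x := by
  simp only [condExpect, mul_sum, mul_left_comm]

lemma condExpect_mul_const (i : Fin n) (h : (Fin n → α) → ℝ) (c : ℝ) (x : Fin n → α) :
    condExpect p i (fun y => h y * c) x = condExpect p i h x * c := by
  simp only [condExpect, sum_mul, mul_assoc]

lemma condExpect_update (i : Fin n) (h : (Fin n → α) → ℝ) (x : Fin n → α) (a : α) :
    condExpect p i h (update x i a) = condExpect p i h x := by
  simp only [condExpect, update_idem]

lemma condExpect_mul_of_update_eq (i : Fin n) (h : (Fin n → α) → ℝ) {w : (Fin n → α) → ℝ}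
    {x : Fin n → α} (hw : ∀ a, w (update x i a) = w x) :
    condExpect p i (fun y => h y * w y) x = condExpect p i h x * w x := by
  simp only [condExpect, hw, sum_mul, mul_assoc]

lemma partialExpect_succ (h : (Fin n → α) → ℝ) (i : Fin n) :
    partialExpect p h (i + 1) = condExpect p i (partialExpect p h i) := by
  rw [partialExpect, dif_pos i.isLt]

lemma partialExpect_update (h : (Fin n → α) → ℝ) {k : ℕ} {j : Fin n} (hj : (j : ℕ) < k)
    (x : Fin n → α) (a : α) : partialExpect p h k (update x j a) = partialExpect p h k x := by
  induction k generalizing x with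
  | zero => omega
  | succ k ih =>
    rcases (Nat.lt_succ_iff.1 hj).lt_or_eq with hjk | rfl
    · rw [partialExpect]
      split_ifs with hk
      · have hne : (⟨k, hk⟩ : Fin n) ≠ j := Fin.ne_of_gt hjk
        simp only [condExpect, update_comm hne.symm, ih hjk]
      · exact ih hjk x
    · rw [partialExpect_succ, condExpect_update]

lemma hasDerivAt_expect_exp_mul (f : (Fin n → α) → ℝ) (t : ℝ) :
    HasDerivAt (fun s => expect p (fun x => exp (s * f x)))
      (expect p (fun x => f x * exp (t * f x))) t := by
  refine HasDerivAt.fun_sum fun x _ => ?_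
  simpa [mul_comm, mul_left_comm] using ((hasDerivAt_mul_const (f x)).exp.const_mul (weight p x))

variable (hp : ∀ i, p i ∈ stdSimplex ℝ α)
include hp

lemma weight_nonneg (x : Fin n → α) : 0 ≤ weight p x :=
  prod_nonneg fun i _ => (hp i).1 (x i)

lemma sum_weight : ∑ x, weight p x = 1 := by
  simp only [weight, ← Fintype.prod_sum, (hp _).2, prod_const_one]

lemma expect_const (c : ℝ) : expect p (fun _ => c) = c := by
  rw [expect, ← sum_mul, sum_weight hp, one_mul]

lemma expect_mono {h k : (Fin n → α) → ℝ} (hhk : ∀ x, h x ≤ k x) : expect p h ≤ expect p k :=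
  sum_le_sum fun x _ => mul_le_mul_of_nonneg_left (hhk x) (weight_nonneg hp x)

lemma expect_pos {h : (Fin n → α) → ℝ} (hh : ∀ x, 0 < h x) : 0 < expect p h := by
  obtain ⟨x, -, hx⟩ := exists_ne_zero_of_sum_ne_zero ((sum_weight hp).trans_ne one_ne_zero)
  exact sum_pos' (fun y _ => mul_nonneg (weight_nonneg hp y) (hh y).le)
    ⟨x, mem_univ x, mul_pos ((weight_nonneg hp x).lt_of_ne' hx) (hh x)⟩

lemma condExpect_const (i : Fin n) (c : ℝ) (x : Fin n → α) : condExpect p i (fun _ => c) x = c := by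
  rw [condExpect, ← sum_mul, (hp i).2, one_mul]

lemma condExpect_mono (i : Fin n) {h k : (Fin n → α) → ℝ} (hhk : ∀ y, h y ≤ k y)
    (x : Fin n → α) : condExpect p i h x ≤ condExpect p i k x :=
  sum_le_sum fun a _ => mul_le_mul_of_nonneg_left (hhk _) ((hp i).1 a)

lemma condExpect_pos (i : Fin n) {h : (Fin n → α) → ℝ} (hh : ∀ y, 0 < h y) (x : Fin n → α) :
    0 < condExpect p i h x := by
  obtain ⟨a, -, ha⟩ := exists_ne_zero_of_sum_ne_zero (((hp i).2).trans_ne one_ne_zero)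
  exact sum_pos' (fun b _ => mul_nonneg ((hp i).1 b) (hh _).le)
    ⟨a, mem_univ a, mul_pos (((hp i).1 a).lt_of_ne' ha) (hh _)⟩

lemma condExpect_of_update_eq (i : Fin n) {w : (Fin n → α) → ℝ} {x : Fin n → α}
    (hw : ∀ a, w (update x i a) = w x) : condExpect p i w x = w x := by
  simpa [condExpect_const hp] using condExpect_mul_of_update_eq (p := p) i (fun _ => 1) hw

lemma expect_condExpect (i : Fin n) (h : (Fin n → α) → ℝ) :
    expect p (condExpect p i h) = expect p h := by
  -- `(x, a) ↦ (x[i ↦ a], x i)` is an involution exchanging the weightings of `weight_update_mul`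
  have hσ : Involutive fun z : (Fin n → α) × α => (update z.1 i z.2, z.1 i) := fun z => by
    simp [update_idem]
  calc expect p (condExpect p i h)
      = ∑ z : (Fin n → α) × α, weight p z.1 * p i z.2 * h (update z.1 i z.2) := by
        simp only [expect, condExpect, Fintype.sum_prod_type, mul_sum, mul_assoc]
    _ = ∑ z : (Fin n → α) × α, weight p z.1 * p i z.2 * h z.1 :=
        Fintype.sum_equiv hσ.toPerm _ _ fun z => by
          simp [← weight_update_mul p i z.1 z.2]
    _ = expect p h := by
        simp only [expect, Fintype.sum_prod_type, mul_right_comm _ _ (h _), ← mul_sum, (hp i).2,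
          mul_one]

lemma partialExpect_pos {h : (Fin n → α) → ℝ} (hh : ∀ x, 0 < h x) (k : ℕ) (x : Fin n → α) :
    0 < partialExpect p h k x := by
  induction k generalizing x with
  | zero => exact hh x
  | succ k ih =>
    rw [partialExpect]
    split_ifs
    · exact condExpect_pos hp _ ih x
    · exact ih x

lemma expect_partialExpect (h : (Fin n → α) → ℝ) (k : ℕ) :
    expect p (partialExpect p h k) = expect p h := by
  induction k with
  | zero => rfl
  | succ k ih =>
    rw [partialExpect]
    split_ifs
    · rw [expect_condExpect hp, ih]
    · exact ih

lemma partialExpect_self (h : (Fin n → α) → ℝ) (x : Fin n → α) :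
    partialExpect p h n x = expect p h := by
  have hconst := eq_of_forall_update_eq (fun y i a => partialExpect_update (p := p) h i.isLt y a) x
  rw [← expect_partialExpect hp h n, funext hconst, expect_const hp]

lemma sum_log_partialExpect_sub (h : (Fin n → α) → ℝ) (x : Fin n → α) :
    ∑ i : Fin n, (log (partialExpect p h i x) - log (partialExpect p h (i + 1) x))
      = log (h x) - log (expect p h) := by
  rw [Fin.sum_univ_eq_sum_range (fun i => log (partialExpect p h i x)
    - log (partialExpect p h (i + 1) x)), sum_range_sub', partialExpect_self hp]
  rfl

lemma condExpect_exp_log_partialExpect_sub {h : (Fin n → α) → ℝ} (hh : ∀ x, 0 < h x)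
    (i : Fin n) (x : Fin n → α) :
    condExpect p i (fun y => exp (log (partialExpect p h i y)
      - log (partialExpect p h (i + 1) y))) x = 1 := by
  have hinv : ∀ a, (partialExpect p h (i + 1) (update x i a))⁻¹
      = (partialExpect p h (i + 1) x)⁻¹ := fun a => by
    rw [partialExpect_update h (Nat.lt_succ_self i)]
  simp only [exp_sub, exp_log (partialExpect_pos hp hh _ _), div_eq_mul_inv]
  rw [condExpect_mul_of_update_eq i _ hinv, ← partialExpect_succ,
    mul_inv_cancel₀ (partialExpect_pos hp hh _ _).ne']

lemma condExpect_mul_le_condEnt (i : Fin n) {k v : (Fin n → α) → ℝ} (hk : ∀ y, 0 < k y)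
    {x : Fin n → α} (hv : condExpect p i (fun y => exp (v y)) x ≤ 1) :
    condExpect p i (fun y => k y * v y) x ≤ condEnt p i k x := by
  set K := condExpect p i k x
  have hK : 0 < K := condExpect_pos hp i hk x
  have hyoung : ∀ y, k y * v y ≤ k y * log (k y) - k y * log K - k y + K * exp (v y) := fun y => by
    have := mul_le_mul_log_div_sub_add_mul_exp (hk y).le hK (v y)
    rwa [log_div (hk y).ne' hK.ne', mul_sub] at this
  calc condExpect p i (fun y => k y * v y) x
      ≤ condExpect p i (fun y => k y * log (k y) - k y * log K - k y + K * exp (v y)) x :=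
        condExpect_mono hp i hyoung x
    _ = condExpect p i (fun y => k y * log (k y)) x - K * log K - K
          + K * condExpect p i (fun y => exp (v y)) x := by
        rw [condExpect_add, condExpect_sub, condExpect_sub, condExpect_const_mul,
          condExpect_mul_const]
    _ ≤ condEnt p i k x := by
        rw [condEnt]
        nlinarith [mul_le_mul_of_nonneg_left hv hK.le]

lemma condEnt_le_condExpect (i : Fin n) {k w : (Fin n → α) → ℝ} (hk : ∀ y, 0 ≤ k y)
    {x : Fin n → α} (hw : 0 < w x) (hwx : ∀ a, w (update x i a) = w x) :
    condEnt p i k x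
      ≤ condExpect p i (fun y => k y * log (k y) - k y * log (w y) - k y + w y) x := by
  have hK : 0 ≤ condExpect p i k x := by
    simpa [condExpect_const hp] using condExpect_mono hp i hk x
  have hyoung := mul_le_mul_log_div_sub_add_mul_exp hK one_pos (log (w x))
  rw [div_one, one_mul, exp_log hw] at hyoung
  rw [condEnt, condExpect_add, condExpect_sub, condExpect_sub,
    condExpect_mul_of_update_eq (w := fun y => log (w y)) i k (fun a => by rw [hwx a]),
    condExpect_of_update_eq hp i hwx]
  linarith

lemma condEnt_exp_mul_le (i : Fin n) {f g : (Fin n → α) → ℝ}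
    (hg : ∀ x a, g (update x i a) = g x) (hfg : ∀ y, f y - g y ∈ Set.Icc (0 : ℝ) 1)
    (t : ℝ) (x : Fin n → α) :
    condEnt p i (fun y => exp (t * f y)) x
      ≤ (exp (-t) + t - 1) * condExpect p i (fun y => (f y - g y) * exp (t * f y)) x := by
  -- compare with `w = exp (t * g)`, which does not depend on the `i`-th coordinate
  refine (condEnt_le_condExpect (w := fun y => exp (t * g y)) hp i (fun y => (exp_pos _).le)
    (exp_pos (t * g x)) (fun a => by rw [hg])).trans ?_
  rw [← condExpect_const_mul]
  refine condExpect_mono hp i (fun y => ?_) x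
  have hconv := exp_mul_le_one_sub_add_mul_exp (hfg y) (-t)
  have hsplit : exp (t * g y) = exp (t * f y) * exp ((f y - g y) * -t) := by
    rw [← exp_add]; ring_nf
  simp only [log_exp]
  rw [hsplit]
  nlinarith [mul_le_mul_of_nonneg_left hconv (exp_pos (t * f y)).le]

/-- Tensorization of entropy, by telescoping along the martingale `partialExpect p h k`. -/
lemma ent_le_sum_expect_condEnt {h : (Fin n → α) → ℝ} (hh : ∀ x, 0 < h x) :
    ent p h ≤ ∑ i, expect p (condEnt p i h) := by
  calc ent p h
      = ∑ i : Fin n, expect p (fun x => h x * (log (partialExpect p h i x)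
          - log (partialExpect p h (i + 1) x))) := by
        rw [← expect_sum]
        simp_rw [← mul_sum, sum_log_partialExpect_sub hp, mul_sub]
        rw [expect_sub, expect_mul_const, ent]
    _ ≤ ∑ i, expect p (condEnt p i h) := sum_le_sum fun i _ => by
        rw [← expect_condExpect hp i]
        exact expect_mono hp fun x => condExpect_mul_le_condEnt hp i hh
          (condExpect_exp_log_partialExpect_sub hp hh i x).le

lemma one_sub_exp_neg_mul_expect_le {f : (Fin n → α) → ℝ} {g : Fin n → (Fin n → α) → ℝ}
    (hg : ∀ i x a, g i (update x i a) = g i x) (hfg : ∀ x i, f x - g i x ∈ Set.Icc (0 : ℝ) 1)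
    (hsum : ∀ x, ∑ i, (f x - g i x) ≤ f x) (t : ℝ) :
    (1 - exp (-t)) * expect p (fun x => f x * exp (t * f x))
      ≤ expect p (fun x => exp (t * f x)) * log (expect p (fun x => exp (t * f x))) := by
  have hψ : 0 ≤ exp (-t) + t - 1 := by linarith [add_one_le_exp (-t)]
  have hent : ent p (fun x => exp (t * f x)) = t * expect p (fun x => f x * exp (t * f x))
      - expect p (fun x => exp (t * f x)) * log (expect p (fun x => exp (t * f x))) := by
    simp only [ent, log_exp, ← expect_const_mul]
    congr 2
    exact funext fun x => by ring
  suffices ent p (fun x => exp (t * f x))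
      ≤ (exp (-t) + t - 1) * expect p (fun x => f x * exp (t * f x)) by linarith
  calc ent p (fun x => exp (t * f x))
      ≤ ∑ i, expect p (condEnt p i (fun x => exp (t * f x))) :=
        ent_le_sum_expect_condEnt hp fun x => exp_pos _
    _ ≤ ∑ i, (exp (-t) + t - 1) * expect p (fun x => (f x - g i x) * exp (t * f x)) :=
        sum_le_sum fun i _ => by
          rw [← expect_condExpect hp i (fun x => (f x - g i x) * exp (t * f x)), ← expect_const_mul]
          exact expect_mono hp (condEnt_exp_mul_le hp i (hg i) (fun y => hfg y i) t)
    _ = (exp (-t) + t - 1) * expect p (fun x => (∑ i, (f x - g i x)) * exp (t * f x)) := by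
        simp only [← mul_sum, ← expect_sum, sum_mul]
    _ ≤ (exp (-t) + t - 1) * expect p (fun x => f x * exp (t * f x)) :=
        mul_le_mul_of_nonneg_left (expect_mono hp fun x =>
          mul_le_mul_of_nonneg_right (hsum x) (exp_pos _).le) hψ

theorem log_expect_exp_mul_le {f : (Fin n → α) → ℝ} {g : Fin n → (Fin n → α) → ℝ}
    (hg : ∀ i x a, g i (update x i a) = g i x) (hfg : ∀ x i, f x - g i x ∈ Set.Icc (0 : ℝ) 1)
    (hsum : ∀ x, ∑ i, (f x - g i x) ≤ f x) {s : ℝ} (hs : 0 < s) :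
    log (expect p (fun x => exp (s * f x))) ≤ expect p f * (exp s - 1) := by
  simpa using log_le_mul_exp_sub_one_of_entropy_ineq (hasDerivAt_expect_exp_mul f)
    (fun t => expect_pos hp fun x => exp_pos (t * f x)) (by simp [expect_const hp])
    (fun t _ => one_sub_exp_neg_mul_expect_le hp hg hfg hsum t) hs

end FiniteProduct

section Law

variable {Ω α : Type*} [MeasurableSpace Ω] {μ : Measure Ω} [IsProbabilityMeasure μ] [Fintype α]
  [MeasurableSpace α] [MeasurableSingletonClass α]

lemma integrable_comp_of_measurable {n : ℕ} {X : Fin n → Ω → α} (hX : ∀ i, Measurable (X i))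
    (φ : (Fin n → α) → ℝ) : Integrable (fun ω => φ (fun i => X i ω)) μ :=
  (Integrable.of_finite (f := φ)).comp_measurable (measurable_pi_iff.2 hX)

lemma measureReal_preimage_singleton_mem_stdSimplex {X : Ω → α} (hX : Measurable X) :
    (fun a => μ.real (X ⁻¹' {a})) ∈ stdSimplex ℝ α :=
  ⟨fun _ => measureReal_nonneg, by
    rw [sum_measureReal_preimage_singleton _ fun a _ => hX (measurableSet_singleton a)]
    simp⟩

lemma integral_comp_eq_expect {n : ℕ} {X : Fin n → Ω → α} (hX : ∀ i, Measurable (X i))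
    (hind : iIndepFun X μ) (φ : (Fin n → α) → ℝ) :
    ∫ ω, φ (fun i => X i ω) ∂μ = FiniteProduct.expect (fun i a => μ.real (X i ⁻¹' {a})) φ := by
  have hT : Measurable fun ω i => X i ω := measurable_pi_iff.2 hX
  have hpoint : ∀ x : Fin n → α, (μ.map fun ω i => X i ω).real {x}
      = FiniteProduct.weight (fun i a => μ.real (X i ⁻¹' {a})) x := fun x => by
    have hpre : (fun ω i => X i ω) ⁻¹' {x} = ⋂ i, X i ⁻¹' {x i} := by
      ext ω
      simp [funext_iff]
    rw [measureReal_def, Measure.map_apply hT (measurableSet_singleton x), hpre,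
      hind.meas_iInter fun i => ⟨{x i}, measurableSet_singleton _, rfl⟩, ENNReal.toReal_prod]
    rfl
  rw [← integral_map hT.aemeasurable (measurable_of_countable φ).aestronglyMeasurable,
    integral_fintype Integrable.of_finite]
  simp only [hpoint, smul_eq_mul, FiniteProduct.expect]

end Law

open FiniteProduct

/-- Chernoff-type upper tail for self-bounding functions of independent
`{0,1}`-valued random variables:
`Pr[Z ≥ (1+δ) E Z] ≤ (e^δ / (1+δ)^{1+δ})^{E Z}` for every `δ > 0`. -/
theorem self_bounding_upper_tail
    {Ω : Type*} [MeasurableSpace Ω] (μ : Measure Ω) [IsProbabilityMeasure μ]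
    {n : ℕ} (X : Fin n → Ω → Bool) (hXm : ∀ i, Measurable (X i))
    (hXind : iIndepFun X μ)
    (f : (Fin n → Bool) → ℝ) (hf : SelfBounding f)
    (Z : Ω → ℝ) (hZ : ∀ ω, Z ω = f (fun i => X i ω)) (δ : ℝ) (hδ : 0 < δ) :
    (μ {ω | (1 + δ) * (∫ ω', Z ω' ∂μ) ≤ Z ω}).toReal
      ≤ (Real.exp δ / (1 + δ) ^ (1 + δ)) ^ (∫ ω', Z ω' ∂μ) := by
  obtain ⟨g, hg, hfg, hsum⟩ := hf
  obtain rfl : Z = fun ω => f (fun i => X i ω) := funext hZ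
  set p : Fin n → Bool → ℝ := fun i a => μ.real (X i ⁻¹' {a})
  have hp : ∀ i, p i ∈ stdSimplex ℝ Bool :=
    fun i => measureReal_preimage_singleton_mem_stdSimplex (hXm i)
  have hs : 0 < log (1 + δ) := log_pos (by linarith)
  have hmgf : mgf (fun ω => f (fun i => X i ω)) μ (log (1 + δ)) ≤ exp (expect p f * δ) := by
    have hlog := log_expect_exp_mul_le hp hg hfg hsum hs
    rwa [exp_log (by linarith), add_sub_cancel_left,
      log_le_iff_le_exp (expect_pos hp fun x => exp_pos _),
      ← integral_comp_eq_expect hXm hXind (fun x => exp (log (1 + δ) * f x))] at hlog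
  rw [integral_comp_eq_expect hXm hXind f]
  calc μ.real {ω | (1 + δ) * expect p f ≤ f (fun i => X i ω)}
      ≤ exp (-log (1 + δ) * ((1 + δ) * expect p f))
          * mgf (fun ω => f (fun i => X i ω)) μ (log (1 + δ)) :=
        measure_ge_le_exp_mul_mgf _ hs.le
          (integrable_comp_of_measurable hXm fun x => exp (log (1 + δ) * f x))
    _ ≤ exp (-log (1 + δ) * ((1 + δ) * expect p f)) * exp (expect p f * δ) := by gcongr
    _ = (exp δ / (1 + δ) ^ (1 + δ)) ^ expect p f :=
        exp_neg_log_mul_mul_exp_eq_rpow (by linarith) _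
end

section
/- Let X_1,…,X_n ∈ {0,1} be independent random variables and let f : {0,1}^n → ℝ be self-bounding, with Z = f(X_1,…,X_n). Then for every δ > 0, Pr[Z ≤ (1−δ) E[Z]] ≤ e^{−δ² E[Z] / 2}. -/
/-!
The entropy method. Subadditivity of entropy, `Ent(Y) ≤ ∑ᵢ E[Entᵢ(Y)]`, together with the
variational bound `Entᵢ(Y) ≤ Eᵢ[Y log (Y / u) - Y + u]` at `u = e^{l gᵢ}` and the convexity
estimate `φ(a c) ≤ a φ(c)` (`φ(c) = e^c - c - 1`, `0 ≤ a ≤ 1`), gives for a self-bounding `f`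
the modified logarithmic Sobolev inequality `Ent(e^{l f}) ≤ φ(-l) E[f e^{l f}]`. For
`L(l) = log E[e^{l f}]` this reads `(1 - e^{-l}) L' ≤ L`, so `L(l) / (e^l - 1)` is antitone on
`l < 0`; its limit at `0⁻` is `E f`, whence `E[e^{l f}] ≤ e^{(e^l - 1) E f}` (Herbst's argument).
Markov's inequality at `l = log (1 - δ)` and `(1 - δ) log (1 - δ) + δ ≥ δ² / 2` finish the proof.

The law of `(X₁, …, Xₙ)` is a product measure on a finite cube, so the argument is carried out
with finite sums weighted by `prodWeight p x = ∏ᵢ p i (x i)`.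
-/

open MeasureTheory ProbabilityTheory Finset

open Real Function Filter Topology

lemma SelfBounding.nonneg {n : ℕ} {f : (Fin n → Bool) → ℝ} (hf : SelfBounding f)
    (x : Fin n → Bool) : 0 ≤ f x := by
  obtain ⟨g, -, hfg, hsum⟩ := hf
  exact (sum_nonneg fun i _ => (hfg x i).1).trans (hsum x)

namespace SelfBoundingTail

lemma sq_sub_one_div_two_le_mul_log {u : ℝ} (hu0 : 0 < u) (hu1 : u ≤ 1) :
    (u ^ 2 - 1) / 2 ≤ u * log u := by
  have h := self_le_sinh_iff.2 (neg_nonneg.2 (log_nonpos hu0.le hu1))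
  rw [sinh_eq, neg_neg, exp_log hu0, exp_neg, exp_log hu0] at h
  have := mul_le_mul_of_nonneg_left h hu0.le
  rw [mul_div_assoc', mul_sub, mul_inv_cancel₀ hu0.ne'] at this
  nlinarith

lemma tendsto_div_exp_sub_one_nhdsLT {L : ℝ → ℝ} {d : ℝ} (hL : HasDerivAt L d 0)
    (hL0 : L 0 = 0) :
    Tendsto (fun t => L t / (exp t - 1)) (𝓝[<] 0) (𝓝 d) := by
  have hexp := (hasDerivAt_iff_tendsto_slope_left_right.1 (hasDerivAt_exp 0)).1
  rw [exp_zero] at hexp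
  have h := (hasDerivAt_iff_tendsto_slope_left_right.1 hL).1.div hexp one_ne_zero
  rw [div_one] at h
  refine h.congr' (eventually_nhdsWithin_of_forall fun t (ht : t < 0) => ?_)
  simp only [Pi.div_apply, slope_def_field, hL0, exp_zero, sub_zero]
  exact div_div_div_cancel_right₀ ht.ne _ _

/-- Herbst's argument: the hypothesis says that `t ↦ L t / (exp t - 1)` is antitone on
`(-∞, 0)`, and its limit at `0⁻` is `L' 0`. -/
lemma le_exp_sub_one_mul_of_hasDerivAt {L L' : ℝ → ℝ} (hL : ∀ t ≤ 0, HasDerivAt L (L' t) t)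
    (hL0 : L 0 = 0) (hineq : ∀ t < 0, (1 - exp (-t)) * L' t ≤ L t) {l : ℝ} (hl : l < 0) :
    L l ≤ (exp l - 1) * L' 0 := by
  have hden : ∀ t < 0, exp t - 1 < 0 := fun t ht => sub_neg.2 (exp_lt_one_iff.2 ht)
  set K := fun t => L t / (exp t - 1)
  have hK : ∀ t < 0, HasDerivAt K
      ((L' t * (exp t - 1) - L t * exp t) / (exp t - 1) ^ 2) t := fun t ht =>
    (hL t ht.le).div ((hasDerivAt_exp t).sub_const 1) (hden t ht).ne
  have hanti : AntitoneOn K (Set.Iio 0) := by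
    refine antitoneOn_of_hasDerivWithinAt_nonpos (convex_Iio 0)
      (f' := fun t => (L' t * (exp t - 1) - L t * exp t) / (exp t - 1) ^ 2)
      (fun t ht => (hK t ht).continuousAt.continuousWithinAt) (fun t ht => ?_) (fun t ht => ?_)
    · rw [interior_Iio] at ht ⊢
      exact (hK t ht).hasDerivWithinAt
    · rw [interior_Iio] at ht
      refine div_nonpos_of_nonpos_of_nonneg ?_ (sq_nonneg _)
      have := mul_le_mul_of_nonneg_left (hineq t ht) (exp_pos t).le
      rw [← mul_assoc, mul_sub, mul_one, ← exp_add, add_neg_cancel, exp_zero] at this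
      linarith
  have hlim : L' 0 ≤ K l := by
    refine le_of_tendsto (tendsto_div_exp_sub_one_nhdsLT (hL 0 le_rfl) hL0) ?_
    filter_upwards [Ioo_mem_nhdsLT hl] with u hu
    exact hanti hl hu.2 hu.1.le
  have := (le_div_iff_of_neg (hden l hl)).1 hlim
  linarith

section WeightedEntropy

variable {β : Type*} [Fintype β] {q Y : β → ℝ}

noncomputable def ent (q Y : β → ℝ) : ℝ :=
  ∑ b, q b * (Y b * log (Y b)) - (∑ b, q b * Y b) * log (∑ b, q b * Y b)

lemma mul_log_sub_log_le_sub {y z : ℝ} (hy : 0 < y) (hz : 0 < z) :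
    y * (log z - log y) ≤ z - y := by
  have h := log_le_sub_one_of_pos (div_pos hz hy)
  rw [log_div hz.ne' hy.ne'] at h
  calc y * (log z - log y) ≤ y * (z / y - 1) := mul_le_mul_of_nonneg_left h hy.le
    _ = z - y := by field_simp

lemma sum_mul_pos (hq0 : ∀ b, 0 ≤ q b) (hq1 : ∑ b, q b = 1) (hY : ∀ b, 0 < Y b) :
    0 < ∑ b, q b * Y b := by
  obtain ⟨b, -, hb⟩ :=
    exists_lt_of_sum_lt (s := univ) (f := fun _ => (0 : ℝ)) (g := q) (by simp [hq1])
  exact sum_pos' (fun b _ => mul_nonneg (hq0 b) (hY b).le) ⟨b, mem_univ b, mul_pos hb (hY b)⟩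

lemma sum_mul_mul_log_sub_log_le_ent {T : β → ℝ} (hq0 : ∀ b, 0 ≤ q b) (hq1 : ∑ b, q b = 1)
    (hY : ∀ b, 0 < Y b) (hT : ∀ b, 0 < T b) :
    ∑ b, q b * (Y b * (log (T b) - log (∑ c, q c * T c))) ≤ ent q Y := by
  set M := ∑ b, q b * Y b
  set c := ∑ b, q b * T b
  have hM : 0 < M := sum_mul_pos hq0 hq1 hY
  have hc : 0 < c := sum_mul_pos hq0 hq1 hT
  -- Gibbs: `y (log z - log y) ≤ z - y` at `y = Y b`, `z = T b * M / c`; the `z - y` sum to zero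
  have key : ∀ b, q b * (Y b * (log (T b) - log c)) ≤
      q b * (Y b * log (Y b)) - q b * Y b * log M + (M / c * (q b * T b) - q b * Y b) := by
    intro b
    have h := mul_log_sub_log_le_sub (hY b) (div_pos (mul_pos (hT b) hM) hc)
    rw [log_div (mul_pos (hT b) hM).ne' hc.ne', log_mul (hT b).ne' hM.ne'] at h
    have := mul_le_mul_of_nonneg_left h (hq0 b)
    have e : q b * (T b * M / c - Y b) = M / c * (q b * T b) - q b * Y b := by ring
    nlinarith
  calc _ ≤ ∑ b, (q b * (Y b * log (Y b)) - q b * Y b * log M +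
        (M / c * (q b * T b) - q b * Y b)) :=
        sum_le_sum fun b _ => key b
    _ = ent q Y := by
        rw [sum_add_distrib, sum_sub_distrib, sum_sub_distrib, ← mul_sum, ← sum_mul,
          div_mul_cancel₀ _ hc.ne', sub_self, add_zero]
        rfl

/-- Half of the variational formula `ent q Y = ⨅ u > 0, E_q[Y log (Y / u) - Y + u]`. -/
lemma ent_le_sum (hq0 : ∀ b, 0 ≤ q b) (hq1 : ∑ b, q b = 1) (hY : ∀ b, 0 < Y b) {u : ℝ}
    (hu : 0 < u) : ent q Y ≤ ∑ b, q b * (Y b * (log (Y b) - log u) - Y b + u) := by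
  have hM := sum_mul_pos hq0 hq1 hY
  have h := mul_log_sub_log_le_sub hM hu
  have e : ∑ b, q b * (Y b * (log (Y b) - log u) - Y b + u) =
      ∑ b, q b * (Y b * log (Y b)) - (∑ b, q b * Y b) * log u - ∑ b, q b * Y b + u := by
    simp only [mul_add, mul_sub, sum_add_distrib, sum_sub_distrib, ← mul_assoc, ← sum_mul, hq1,
      one_mul]
  rw [ent, e]
  linarith

end WeightedEntropy

section ProductWeights

variable {α : Type*} {n : ℕ}

noncomputable def prodWeight (p : Fin n → α → ℝ) (x : Fin n → α) : ℝ := ∏ i, p i (x i)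

lemma prodWeight_update_mul (p : Fin n → α → ℝ) (x : Fin n → α) (i : Fin n) (a : α) :
    prodWeight p (update x i a) * p i (x i) = prodWeight p x * p i a := by
  simp only [prodWeight, Fintype.prod_eq_mul_prod_compl i, update_self]
  have : ∏ j ∈ {i}ᶜ, p j (update x i a j) = ∏ j ∈ {i}ᶜ, p j (x j) :=
    prod_congr rfl fun j hj => by rw [update_of_ne (by simpa using hj)]
  rw [this]; ring

variable [Fintype α]

def IsProbWeights (p : Fin n → α → ℝ) : Prop :=
  (∀ i a, 0 ≤ p i a) ∧ ∀ i, ∑ a, p i a = 1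

noncomputable def expectation (p : Fin n → α → ℝ) (h : (Fin n → α) → ℝ) : ℝ :=
  ∑ x, prodWeight p x * h x

/-- Conditional expectation given all coordinates but the `i`-th. -/
noncomputable def condExpect (p : Fin n → α → ℝ) (i : Fin n) (h : (Fin n → α) → ℝ)
    (x : Fin n → α) : ℝ :=
  ∑ a, p i a * h (update x i a)

noncomputable def condEnt (p : Fin n → α → ℝ) (i : Fin n) (Y : (Fin n → α) → ℝ)
    (x : Fin n → α) : ℝ :=
  ent (p i) fun a => Y (update x i a)

variable {p : Fin n → α → ℝ}

lemma IsProbWeights.prodWeight_nonneg (hp : IsProbWeights p) (x : Fin n → α) :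
    0 ≤ prodWeight p x :=
  prod_nonneg fun i _ => hp.1 i (x i)

lemma IsProbWeights.sum_prodWeight (hp : IsProbWeights p) : ∑ x, prodWeight p x = 1 := by
  simp only [prodWeight]
  rw [← Fintype.prod_sum (fun i a => p i a)]
  exact prod_eq_one fun i _ => hp.2 i

lemma IsProbWeights.expectation_mono (hp : IsProbWeights p) {h₁ h₂ : (Fin n → α) → ℝ}
    (h : ∀ x, h₁ x ≤ h₂ x) : expectation p h₁ ≤ expectation p h₂ :=
  sum_le_sum fun x _ => mul_le_mul_of_nonneg_left (h x) (hp.prodWeight_nonneg x)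

lemma expectation_const_mul (c : ℝ) (h : (Fin n → α) → ℝ) :
    expectation p (fun x => c * h x) = c * expectation p h := by
  simp only [expectation, mul_sum]
  exact sum_congr rfl fun x _ => by ring

lemma expectation_sum {ι : Type*} (s : Finset ι) (h : ι → (Fin n → α) → ℝ) :
    expectation p (fun x => ∑ i ∈ s, h i x) = ∑ i ∈ s, expectation p (h i) := by
  simp only [expectation, mul_sum]
  exact sum_comm

lemma IsProbWeights.condExpect_pos (hp : IsProbWeights p) (i : Fin n) {h : (Fin n → α) → ℝ}
    (hh : ∀ x, 0 < h x) (x : Fin n → α) : 0 < condExpect p i h x :=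
  sum_mul_pos (hp.1 i) (hp.2 i) fun _ => hh _

lemma IsProbWeights.expectation_condExpect (hp : IsProbWeights p) (i : Fin n)
    (h : (Fin n → α) → ℝ) : expectation p (condExpect p i h) = expectation p h := by
  -- `(x, a) ↦ (update x i a, x i)` is an involution preserving the weight `prodWeight p x * p i a`
  let σ : (Fin n → α) × α → (Fin n → α) × α := fun z => (update z.1 i z.2, z.1 i)
  have hσ : Involutive σ := fun z => by simp [σ]
  calc expectation p (condExpect p i h)
      = ∑ z : (Fin n → α) × α, prodWeight p z.1 * p i z.2 * h (update z.1 i z.2) := by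
        simp only [expectation, condExpect, Fintype.sum_prod_type, mul_sum, mul_assoc]
    _ = ∑ z : (Fin n → α) × α, prodWeight p (σ z).1 * p i (σ z).2 * h (σ z).1 := by
        refine sum_congr rfl fun z _ => ?_
        simp only [σ, prodWeight_update_mul]
    _ = ∑ z : (Fin n → α) × α, prodWeight p z.1 * p i z.2 * h z.1 :=
        Equiv.sum_comp (hσ.toPerm σ) (fun z => prodWeight p z.1 * p i z.2 * h z.1)
    _ = expectation p h := by
        simp only [expectation, Fintype.sum_prod_type, mul_right_comm _ _ (h _), ← mul_sum,
          hp.2 i, mul_one]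

lemma IsProbWeights.expectation_mul_log_sub_log_condExpect_le (hp : IsProbWeights p)
    (i : Fin n) {Y T : (Fin n → α) → ℝ} (hY : ∀ x, 0 < Y x) (hT : ∀ x, 0 < T x) :
    expectation p (fun x => Y x * (log (T x) - log (condExpect p i T x)))
      ≤ expectation p (condEnt p i Y) := by
  rw [← hp.expectation_condExpect i]
  refine hp.expectation_mono fun x => ?_
  simp only [condExpect, update_idem]
  exact sum_mul_mul_log_sub_log_le_ent (hp.1 i) (hp.2 i) (fun _ => hY _) (fun _ => hT _)

/-- `iterCondExpect p Y k` integrates out the coordinates `0, …, k - 1` of `Y`. -/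
noncomputable def iterCondExpect (p : Fin n → α → ℝ) (Y : (Fin n → α) → ℝ) :
    ℕ → (Fin n → α) → ℝ
  | 0 => Y
  | k + 1 =>
    if h : k < n then condExpect p ⟨k, h⟩ (iterCondExpect p Y k) else iterCondExpect p Y k

variable {Y : (Fin n → α) → ℝ}

lemma iterCondExpect_succ (i : Fin n) :
    iterCondExpect p Y (i + 1) = condExpect p i (iterCondExpect p Y i) := by
  rw [iterCondExpect, dif_pos i.isLt]

lemma IsProbWeights.iterCondExpect_pos (hp : IsProbWeights p) (hY : ∀ x, 0 < Y x) (k : ℕ)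
    (x : Fin n → α) : 0 < iterCondExpect p Y k x := by
  induction k generalizing x with
  | zero => exact hY x
  | succ k ih =>
    rw [iterCondExpect]
    split
    · exact hp.condExpect_pos _ ih x
    · exact ih x

lemma IsProbWeights.expectation_iterCondExpect (hp : IsProbWeights p) (k : ℕ) :
    expectation p (iterCondExpect p Y k) = expectation p Y := by
  induction k with
  | zero => rfl
  | succ k ih =>
    rw [iterCondExpect]
    split
    · rw [hp.expectation_condExpect, ih]
    · exact ih

lemma dependsOn_condExpect {s : Set (Fin n)} {h : (Fin n → α) → ℝ} (hh : DependsOn h s)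
    (i : Fin n) : DependsOn (condExpect p i h) (s \ {i}) := by
  intro x y hxy
  refine sum_congr rfl fun a _ => congrArg _ (hh fun j hj => ?_)
  rcases eq_or_ne j i with rfl | hji
  · simp
  · simp [update_of_ne hji, hxy j ⟨hj, hji⟩]

lemma dependsOn_iterCondExpect (k : ℕ) :
    DependsOn (iterCondExpect p Y k) {j | k ≤ (j : ℕ)} := by
  induction k with
  | zero => exact (dependsOn_univ Y).mono fun j _ => Nat.zero_le j
  | succ k ih =>
    rw [iterCondExpect]
    split
    · refine (dependsOn_condExpect ih _).mono fun j hj => ?_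
      simp only [Set.mem_ofPred_eq, Set.mem_sdiff, Set.mem_singleton_iff, Fin.ext_iff] at hj ⊢
      omega
    · refine ih.mono fun j hj => ?_
      simp only [Set.mem_ofPred_eq] at hj ⊢
      omega

lemma IsProbWeights.iterCondExpect_eq_expectation (hp : IsProbWeights p) (x : Fin n → α) :
    iterCondExpect p Y n x = expectation p Y := by
  have hconst : ∀ y, iterCondExpect p Y n y = iterCondExpect p Y n x :=
    fun y => ((dependsOn_iterCondExpect n).mono fun j hj => absurd hj (not_le.2 j.isLt)).empty y x
  rw [← hp.expectation_iterCondExpect n, expectation, sum_congr rfl fun y _ => by rw [hconst y],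
    ← sum_mul, hp.sum_prodWeight, one_mul]

/-- Telescope `log (Y / E Y)` along `iterCondExpect` and bound each increment by Gibbs'
inequality. -/
theorem IsProbWeights.ent_le_sum_expectation_condEnt (hp : IsProbWeights p)
    (hY : ∀ x, 0 < Y x) :
    ent (prodWeight p) Y ≤ ∑ i, expectation p (condEnt p i Y) := by
  have htele : ∀ x, Y x * log (Y x) - Y x * log (expectation p Y) = ∑ i : Fin n,
      Y x * (log (iterCondExpect p Y i x) - log (condExpect p i (iterCondExpect p Y i) x)) := by
    intro x
    simp only [← iterCondExpect_succ, ← mul_sum]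
    rw [Fin.sum_univ_eq_sum_range (fun k => log (iterCondExpect p Y k x) -
        log (iterCondExpect p Y (k + 1) x)), sum_range_sub' (fun k => log (iterCondExpect p Y k x)),
      hp.iterCondExpect_eq_expectation, iterCondExpect, mul_sub]
  calc ent (prodWeight p) Y
      = expectation p (fun x => Y x * log (Y x) - Y x * log (expectation p Y)) := by
        simp only [ent, expectation, mul_sub, sum_sub_distrib, sum_mul, mul_assoc]
    _ = ∑ i : Fin n, expectation p (fun x => Y x *
          (log (iterCondExpect p Y i x) - log (condExpect p i (iterCondExpect p Y i) x))) := by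
        simp only [htele, expectation_sum]
    _ ≤ ∑ i, expectation p (condEnt p i Y) := sum_le_sum fun i _ =>
        hp.expectation_mul_log_sub_log_condExpect_le i hY (hp.iterCondExpect_pos hY i)

end ProductWeights

lemma exp_mul_sub_mul_sub_one_le {a c : ℝ} (ha0 : 0 ≤ a) (ha1 : a ≤ 1) :
    exp (a * c) - a * c - 1 ≤ a * (exp c - c - 1) := by
  have h := convexOn_exp.2 (Set.mem_univ c) (Set.mem_univ 0) ha0 (sub_nonneg.2 ha1)
    (add_sub_cancel a 1)
  simp only [smul_eq_mul, mul_zero, add_zero, exp_zero, mul_one] at h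
  linarith

section ExponentialMoments

variable {α : Type*} [Fintype α] {n : ℕ} {p : Fin n → α → ℝ}

lemma IsProbWeights.condEnt_exp_mul_le (hp : IsProbWeights p) (l : ℝ) (i : Fin n)
    {f g : (Fin n → α) → ℝ} (hg : ∀ x a, g (update x i a) = g x)
    (hfg : ∀ x, 0 ≤ f x - g x ∧ f x - g x ≤ 1) (x : Fin n → α) :
    condEnt p i (fun z => exp (l * f z)) x ≤
      (exp (-l) + l - 1) * condExpect p i (fun z => (f z - g z) * exp (l * f z)) x := by
  refine (ent_le_sum (hp.1 i) (hp.2 i) (fun _ => exp_pos _) (exp_pos (l * g x))).trans ?_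
  rw [condExpect, mul_sum]
  refine sum_le_sum fun a _ => ?_
  set z := update x i a
  have hgz : g z = g x := hg x a
  set c := (f z - g z) * -l
  -- with `u = exp (l * g x)` the summand is `exp (l * f z) * (exp c - c - 1)`
  have e : exp (l * g x) = exp (l * f z) * exp c := by rw [← exp_add, ← hgz]; congr 1; ring
  have key : exp (l * f z) * (l * f z - l * g x) - exp (l * f z) + exp (l * g x) ≤
      (exp (-l) + l - 1) * ((f z - g z) * exp (l * f z)) :=
    calc _ = exp (l * f z) * (exp c - c - 1) := by rw [e, ← hgz]; ring
      _ ≤ exp (l * f z) * ((f z - g z) * (exp (-l) - -l - 1)) :=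
        mul_le_mul_of_nonneg_left (exp_mul_sub_mul_sub_one_le (hfg z).1 (hfg z).2) (exp_pos _).le
      _ = _ := by ring
  simp only [log_exp]
  nlinarith [mul_le_mul_of_nonneg_left key (hp.1 i a)]

lemma hasDerivAt_expectation_exp_mul (p : Fin n → α → ℝ) (f : (Fin n → α) → ℝ) (t : ℝ) :
    HasDerivAt (fun s => expectation p fun x => exp (s * f x))
      (expectation p fun x => f x * exp (t * f x)) t := by
  simp only [expectation]
  refine HasDerivAt.fun_sum fun x _ => ?_
  simpa [mul_comm] using ((hasDerivAt_mul_const (f x)).exp).const_mul (prodWeight p x)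

lemma ent_exp_mul (p : Fin n → α → ℝ) (f : (Fin n → α) → ℝ) (t : ℝ) :
    ent (prodWeight p) (fun x => exp (t * f x)) =
      t * expectation p (fun x => f x * exp (t * f x)) -
        expectation p (fun x => exp (t * f x)) * log (expectation p fun x => exp (t * f x)) := by
  simp only [ent, log_exp, expectation, mul_sum]
  congr 1
  exact sum_congr rfl fun x _ => by ring

lemma IsProbWeights.sum_prodWeight_filter_le (hp : IsProbWeights p) (f : (Fin n → α) → ℝ)
    {l : ℝ} (hl : l ≤ 0) (t : ℝ) :
    ∑ x ∈ univ.filter (fun x => f x ≤ t), prodWeight p x ≤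
      exp (-(l * t)) * expectation p (fun x => exp (l * f x)) :=
  calc ∑ x ∈ univ.filter (fun x => f x ≤ t), prodWeight p x
      ≤ ∑ x ∈ univ.filter (fun x => f x ≤ t), prodWeight p x * exp (l * (f x - t)) :=
        sum_le_sum fun x hx => le_mul_of_one_le_right (hp.prodWeight_nonneg x) <|
          one_le_exp <| mul_nonneg_of_nonpos_of_nonpos hl (sub_nonpos.2 (mem_filter.1 hx).2)
    _ ≤ ∑ x, prodWeight p x * exp (l * (f x - t)) :=
        sum_le_sum_of_subset_of_nonneg (filter_subset _ _) fun x _ _ =>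
          mul_nonneg (hp.prodWeight_nonneg x) (exp_pos _).le
    _ = exp (-(l * t)) * expectation p (fun x => exp (l * f x)) := by
        simp only [expectation, mul_sum, mul_sub, sub_eq_add_neg (l * f _), exp_add]
        exact sum_congr rfl fun x _ => by ring

end ExponentialMoments

section SelfBounding

variable {n : ℕ} {p : Fin n → Bool → ℝ} {f : (Fin n → Bool) → ℝ}

theorem IsProbWeights.ent_exp_mul_le (hp : IsProbWeights p) (hf : SelfBounding f) (l : ℝ) :
    ent (prodWeight p) (fun x => exp (l * f x)) ≤
      (exp (-l) + l - 1) * expectation p (fun x => f x * exp (l * f x)) := by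
  obtain ⟨g, hg, hfg, hsum⟩ := hf
  calc ent (prodWeight p) (fun x => exp (l * f x))
      ≤ ∑ i, expectation p (condEnt p i fun x => exp (l * f x)) :=
        hp.ent_le_sum_expectation_condEnt fun _ => exp_pos _
    _ ≤ ∑ i, (exp (-l) + l - 1) * expectation p (fun x => (f x - g i x) * exp (l * f x)) :=
        sum_le_sum fun i _ => by
          rw [← hp.expectation_condExpect i (fun x => (f x - g i x) * exp (l * f x)),
            ← expectation_const_mul]
          exact hp.expectation_mono (hp.condEnt_exp_mul_le l i (hg i) (fun x => hfg x i))
    _ = (exp (-l) + l - 1) * expectation p (fun x => (∑ i, (f x - g i x)) * exp (l * f x)) := by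
        simp only [← mul_sum, sum_mul, expectation_sum]
    _ ≤ (exp (-l) + l - 1) * expectation p (fun x => f x * exp (l * f x)) := by
        have hφ : 0 ≤ exp (-l) + l - 1 := by linarith [add_one_le_exp (-l)]
        exact mul_le_mul_of_nonneg_left (hp.expectation_mono fun x =>
          mul_le_mul_of_nonneg_right (hsum x) (exp_pos _).le) hφ

theorem IsProbWeights.expectation_exp_mul_le (hp : IsProbWeights p) (hf : SelfBounding f)
    {l : ℝ} (hl : l < 0) :
    expectation p (fun x => exp (l * f x)) ≤ exp ((exp l - 1) * expectation p f) := by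
  set G := fun t => expectation p fun x => exp (t * f x)
  set D := fun t => expectation p fun x => f x * exp (t * f x)
  have hG : ∀ t, 0 < G t := fun t =>
    sum_mul_pos hp.prodWeight_nonneg hp.sum_prodWeight fun _ => exp_pos _
  have hG0 : G 0 = 1 := by simp [G, expectation, hp.sum_prodWeight]
  have hD0 : D 0 = expectation p f := by simp [D]
  have hineq : ∀ t < 0, (1 - exp (-t)) * (D t / G t) ≤ log (G t) := fun t _ => by
    have h := (ent_exp_mul p f t).symm.trans_le (hp.ent_exp_mul_le hf t)
    rw [← mul_div_assoc, div_le_iff₀ (hG t)]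
    linarith
  have hlog : log (G l) ≤ (exp l - 1) * (D 0 / G 0) :=
    le_exp_sub_one_mul_of_hasDerivAt (L := fun t => log (G t))
      (fun t _ => (hasDerivAt_expectation_exp_mul p f t).log (hG t).ne')
      (by rw [hG0, log_one]) hineq hl
  rw [hG0, hD0, div_one] at hlog
  exact (exp_log (hG l)).symm.le.trans (exp_le_exp.2 hlog)

theorem IsProbWeights.sum_prodWeight_filter_le_exp (hp : IsProbWeights p) (hf : SelfBounding f)
    {l : ℝ} (hl : l < 0) (t : ℝ) :
    ∑ x ∈ univ.filter (fun x => f x ≤ t), prodWeight p x ≤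
      exp (-(l * t) + (exp l - 1) * expectation p f) := by
  rw [exp_add]
  exact (hp.sum_prodWeight_filter_le f hl.le t).trans
    (mul_le_mul_of_nonneg_left (hp.expectation_exp_mul_le hf hl) (exp_pos _).le)

/-- For `δ < 1` take `l = log (1 - δ)`, for `δ = 1` take `l = -log 2`; for `δ > 1` (and
`E f > 0`) the event is empty. -/
theorem IsProbWeights.lower_tail (hp : IsProbWeights p) (hf : SelfBounding f) {δ : ℝ}
    (hδ : 0 < δ) :
    ∑ x ∈ univ.filter (fun x => f x ≤ (1 - δ) * expectation p f), prodWeight p x ≤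
      exp (-δ ^ 2 * expectation p f / 2) := by
  set m := expectation p f
  have hm : 0 ≤ m := sum_nonneg fun x _ => mul_nonneg (hp.prodWeight_nonneg x) (hf.nonneg x)
  rcases lt_or_ge δ 1 with hδ1 | hδ1
  · have h1δ : 0 < 1 - δ := sub_pos.2 hδ1
    refine (hp.sum_prodWeight_filter_le_exp hf (log_neg h1δ (by linarith)) _).trans ?_
    rw [exp_log h1δ, exp_le_exp]
    have := sq_sub_one_div_two_le_mul_log h1δ (by linarith)
    nlinarith [mul_le_mul_of_nonneg_right this hm]
  rcases hm.eq_or_lt with hm0 | hmpos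
  · simp only [← hm0, mul_zero, zero_div, exp_zero, ← hp.sum_prodWeight]
    exact sum_le_sum_of_subset_of_nonneg (filter_subset _ _) fun x _ _ => hp.prodWeight_nonneg x
  rcases hδ1.eq_or_lt with rfl | hδ1
  · refine (hp.sum_prodWeight_filter_le_exp hf (neg_neg_of_pos (log_pos one_lt_two)) _).trans ?_
    rw [exp_neg, exp_log two_pos, exp_le_exp]
    linarith
  · rw [filter_false_of_mem fun x _ => not_le.2 <|
      (mul_neg_of_neg_of_pos (by linarith) hmpos).trans_le (hf.nonneg x), sum_empty]
    exact (exp_pos _).le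

end SelfBounding
end SelfBoundingTail

open SelfBoundingTail

section Law

variable {Ω : Type*} [MeasurableSpace Ω] {μ : Measure Ω} [IsProbabilityMeasure μ]
  {α : Type*} [MeasurableSpace α] {n : ℕ} {X : Fin n → Ω → α}

lemma isProbWeights_map_real [Fintype α] [MeasurableSingletonClass α]
    (hX : ∀ i, Measurable (X i)) :
    IsProbWeights fun i a => (μ.map (X i)).real {a} := by
  refine ⟨fun _ _ => measureReal_nonneg, fun i => ?_⟩
  have := Measure.isProbabilityMeasure_map (μ := μ) (hX i).aemeasurable
  rw [sum_measureReal_singleton, coe_univ, probReal_univ]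

lemma map_real_singleton_eq_prodWeight (hX : ∀ i, Measurable (X i)) (hind : iIndepFun X μ)
    (x : Fin n → α) :
    (μ.map fun ω i => X i ω).real {x} = prodWeight (fun i a => (μ.map (X i)).real {a}) x := by
  have := fun i => Measure.isProbabilityMeasure_map (μ := μ) (hX i).aemeasurable
  rw [hind.map_fun_eq_pi_map fun i => (hX i).aemeasurable, measureReal_def,
    Measure.pi_singleton, ENNReal.toReal_prod]
  rfl

end Law

/-- Lower tail for self-bounding functions of independent `{0,1}`-valued random
variables: `Pr[Z ≤ (1−δ) E Z] ≤ e^{−δ² E Z / 2}` for every `δ > 0`. -/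
theorem self_bounding_lower_tail
    {Ω : Type*} [MeasurableSpace Ω] (μ : Measure Ω) [IsProbabilityMeasure μ]
    {n : ℕ} (X : Fin n → Ω → Bool) (hXm : ∀ i, Measurable (X i))
    (hXind : iIndepFun X μ)
    (f : (Fin n → Bool) → ℝ) (hf : SelfBounding f)
    (Z : Ω → ℝ) (hZ : ∀ ω, Z ω = f (fun i => X i ω)) (δ : ℝ) (hδ : 0 < δ) :
    (μ {ω | Z ω ≤ (1 - δ) * (∫ ω', Z ω' ∂μ)}).toReal
      ≤ Real.exp (-δ ^ 2 * (∫ ω', Z ω' ∂μ) / 2) := by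
  set Φ : Ω → Fin n → Bool := fun ω i => X i ω
  have hΦ : Measurable Φ := measurable_pi_lambda _ hXm
  set p : Fin n → Bool → ℝ := fun i b => (μ.map (X i)).real {b}
  have hlaw : ∀ x, (μ.map Φ).real {x} = prodWeight p x :=
    map_real_singleton_eq_prodWeight hXm hXind
  obtain rfl : Z = f ∘ Φ := funext hZ
  have hmean : ∫ ω, f (Φ ω) ∂μ = expectation p f := by
    rw [← integral_map hΦ.aemeasurable (measurable_of_countable f).aestronglyMeasurable,
      integral_fintype .of_finite]
    simp only [hlaw, smul_eq_mul, expectation]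
  have hevent : ∀ c, μ {ω | f (Φ ω) ≤ c} = μ.map Φ (univ.filter fun x => f x ≤ c) := fun c => by
    rw [Measure.map_apply hΦ (Set.toFinite _).measurableSet, coe_filter]
    simp
  simp only [comp_apply, hmean, ← measureReal_def, hevent, ← sum_measureReal_singleton, hlaw]
  exact (isProbWeights_map_real hXm).lower_tail hf hδ
end

section
/- Let X_1,…,X_n ∈ {0,1} be independent random variables and let f : {0,1}^n → ℝ be (a,b)-self-bounding with a ≥ 1/3, and set Z = f(X_1,…,X_n). Then for every t with 0 < t ≤ E[Z], Pr[Z ≤ E[Z] − t] ≤ e^{−t² / (2(a E[Z] + b))}. -/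
/-!
Entropy method (Herbst argument). Tensorization of entropy over the independent coordinates,
the variational bound `Ent_i(h) ≤ E_i[h log(h/u) - h + u]` for `u` not depending on coordinate `i`
(with `h = e^{-sZ}`, `u = e^{-s g_i}`) and convexity of `φ(s) = eˢ - s - 1` give the modified
log-Sobolev inequality `Ent(e^{-sZ}) ≤ φ(s) E[(aZ + b) e^{-sZ}]`. For `K(s) = log E e^{-sZ} + s E Z`
it reads `s K' - K ≤ φ(s) (v - a K')` with `v = a E Z + b`. When `a ≥ 1/3`, `φ(s) (1 - a s) ≤ s²/2`,
so a comparison argument gives `K(s) ≤ v s²/2` for `s ≥ 0`, and Chernoff's bound at `s = t/v`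
finishes the proof.
-/

open MeasureTheory ProbabilityTheory Finset

/-- For `a, b ≥ 0`, a function `f : {0,1}ⁿ → ℝ` is `(a,b)`-self-bounding if there
are functions `g i` not depending on the `i`-th coordinate such that
`0 ≤ f(x) − g i x ≤ 1` for all `x, i` and `∑ᵢ (f(x) − g i x) ≤ a f(x) + b`. -/
def ABSelfBounding {n : ℕ} (a b : ℝ) (f : (Fin n → Bool) → ℝ) : Prop :=
  0 ≤ a ∧ 0 ≤ b ∧
  ∃ g : Fin n → (Fin n → Bool) → ℝ,
    (∀ (i : Fin n) (x : Fin n → Bool) (b' : Bool),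
      g i (Function.update x i b') = g i x) ∧
    (∀ (x : Fin n → Bool) (i : Fin n), 0 ≤ f x - g i x ∧ f x - g i x ≤ 1) ∧
    (∀ x : Fin n → Bool, ∑ i, (f x - g i x) ≤ a * f x + b)

open Real

theorem mul_log_div_sub_mul_log_div_le {h m a n : ℝ} (hh : 0 < h) (hm : 0 < m) (ha : 0 < a)
    (hn : 0 < n) : h * log (m / n) - h * log (h / a) ≤ m * (a / n) - h := by
  have key := mul_le_mul_of_nonneg_left
    (log_le_sub_one_of_pos (show 0 < m * a / (n * h) by positivity)) hh.le
  rw [log_div (by positivity) (by positivity), log_mul hm.ne' ha.ne', log_mul hn.ne' hh.ne']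
    at key
  rw [log_div hm.ne' hn.ne', log_div hh.ne' ha.ne']
  have : h * (m * a / (n * h) - 1) = m * (a / n) - h := by field_simp
  linarith

theorem sub_le_mul_log_div {a u : ℝ} (ha : 0 < a) (hu : 0 < u) : a - u ≤ a * log (a / u) := by
  have := mul_le_mul_of_nonneg_left (one_sub_inv_le_log_of_pos (div_pos ha hu)) ha.le
  rwa [inv_div, mul_sub, mul_one, mul_div_cancel₀ _ ha.ne'] at this

theorem exp_mul_sub_mul_sub_one_le_s13 {c : ℝ} (hc₀ : 0 ≤ c) (hc₁ : c ≤ 1) (s : ℝ) :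
    exp (c * s) - c * s - 1 ≤ c * (exp s - s - 1) := by
  have h := convexOn_exp.2 (Set.mem_univ s) (Set.mem_univ 0) hc₀ (sub_nonneg.2 hc₁)
    (add_sub_cancel c 1)
  simp only [smul_eq_mul, mul_zero, add_zero, exp_zero, mul_one] at h
  linarith

theorem nonneg_of_hasDerivAt_nonneg {k k' : ℝ → ℝ} (hk : ∀ x, 0 ≤ x → HasDerivAt k (k' x) x)
    (h₀ : k 0 = 0) (hk' : ∀ x, 0 ≤ x → 0 ≤ k' x) {x : ℝ} (hx : 0 ≤ x) : 0 ≤ k x :=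
  image_le_of_deriv_right_le_deriv_boundary (f := fun _ => 0) (f' := fun _ => 0)
    continuousOn_const (fun _ _ => hasDerivWithinAt_const _ _ _) h₀.ge
    (fun y hy => (hk y hy.1).continuousAt.continuousWithinAt)
    (fun y hy => (hk y hy.1).hasDerivWithinAt) (fun y hy => hk' y hy.1) ⟨hx, le_rfl⟩

theorem sub_two_mul_exp_add_add_two_nonneg {u : ℝ} (hu : 0 ≤ u) :
    0 ≤ (u - 2) * exp u + u + 2 := by
  refine nonneg_of_hasDerivAt_nonneg (k := fun u => (u - 2) * exp u + u + 2)
    (k' := fun u => (u - 1) * exp u + 1) (fun u _ => ?_) (by norm_num) (fun u _ => ?_) hu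
  · have : HasDerivAt (fun u => (u - 2) * exp u + u + 2) (1 * exp u + (u - 2) * exp u + 1) u :=
      ((((hasDerivAt_id' u).sub_const 2).mul (hasDerivAt_exp u)).add (hasDerivAt_id' u)).add_const 2
    exact this.congr_deriv (by ring)
  · have h := mul_le_mul_of_nonneg_right (add_one_le_exp (-u)) (exp_pos u).le
    rw [← exp_add, neg_add_cancel, exp_zero] at h
    nlinarith

theorem three_sub_mul_exp_sub_sub_one_le {u : ℝ} (hu : 0 ≤ u) :
    (3 - u) * (exp u - u - 1) ≤ 3 * u ^ 2 / 2 := by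
  have := nonneg_of_hasDerivAt_nonneg (k := fun u => 3 * u ^ 2 / 2 - (3 - u) * (exp u - u - 1))
    (k' := fun u => (u - 2) * exp u + u + 2) (fun u _ => ?_) (by norm_num)
    (fun u hu => sub_two_mul_exp_add_add_two_nonneg hu) hu
  · simpa using this
  · have : HasDerivAt (fun u => 3 * u ^ 2 / 2 - (3 - u) * (exp u - u - 1))
        (3 * (↑2 * u ^ (2 - 1)) / 2 - ((0 - 1) * (exp u - u - 1) + (3 - u) * (exp u - 1))) u :=
      (((hasDerivAt_pow 2 u).const_mul 3).div_const 2).sub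
        (((hasDerivAt_const u (3 : ℝ)).sub (hasDerivAt_id' u)).mul
          (((hasDerivAt_exp u).sub (hasDerivAt_id' u)).sub_const 1))
    exact this.congr_deriv (by ring)

theorem exp_sub_sub_one_mul_one_sub_le {a u : ℝ} (ha : 1 / 3 ≤ a) (hu : 0 ≤ u) :
    (exp u - u - 1) * (1 - a * u) ≤ u ^ 2 / 2 := by
  have hφ : 0 ≤ exp u - u - 1 := by linarith [add_one_le_exp u]
  have := mul_le_mul_of_nonneg_left (show 1 - a * u ≤ 1 - u / 3 by nlinarith) hφ
  nlinarith [three_sub_mul_exp_sub_sub_one_le hu]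

/-- `E` stays below every line `ε x`: at a first crossing, `E' x ≥ ε > 0` would force
`x E' x < E x = ε x`. -/
theorem nonpos_of_mul_deriv_lt {E E' : ℝ → ℝ} (hE : ∀ x, 0 ≤ x → HasDerivAt E (E' x) x)
    (h₀ : E 0 = 0) (h₀' : E' 0 ≤ 0) (hlt : ∀ x, 0 < x → 0 < E' x → x * E' x < E x)
    {x : ℝ} (hx : 0 ≤ x) : E x ≤ 0 := by
  have hline : ∀ ε > 0, E x ≤ ε * x := by
    intro ε hε
    refine image_le_of_deriv_right_lt_deriv_boundary (a := 0) (f' := E') (B' := fun _ => ε)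
      (fun y hy => (hE y hy.1).continuousAt.continuousWithinAt)
      (fun y hy => (hE y hy.1).hasDerivWithinAt) (by simp [h₀])
      (fun y => ((hasDerivAt_id y).const_mul ε).congr_deriv (mul_one ε)) ?_ ⟨hx, le_rfl⟩
    intro y hy hEy
    rcases hy.1.eq_or_lt with rfl | hy₀
    · linarith
    · by_contra! hεy
      have := hlt y hy₀ (hε.trans_le hεy)
      rw [hEy, id] at this
      nlinarith [mul_le_mul_of_nonneg_left hεy hy₀.le]
  refine le_of_forall_pos_le_add fun δ hδ => ?_
  have := hline (δ / (x + 1)) (by positivity)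
  have : δ / (x + 1) * x ≤ δ := by
    rw [div_mul_eq_mul_div, div_le_iff₀ (by linarith)]
    nlinarith
  linarith

def InvariantAt {ι β γ : Type*} [DecidableEq ι] (i : ι) (h : (ι → β) → γ) : Prop :=
  ∀ x b, h (Function.update x i b) = h x

theorem eq_of_forall_invariantAt {ι β γ : Type*} [DecidableEq ι] [Fintype ι]
    {h : (ι → β) → γ} (hh : ∀ i, InvariantAt i h) (x y : ι → β) : h x = h y := by
  have key : ∀ s : Finset ι, h (s.piecewise y x) = h x := by
    intro s
    induction s using Finset.induction_on with
    | empty => simp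
    | insert i s _ ih => rw [Finset.piecewise_insert, hh, ih]
  simpa using (key Finset.univ).symm

/-- Independent coordinates with laws `weight i`: `expect` is the expectation under the product
law and `avg i` the conditional expectation integrating out the `i`-th coordinate. -/
structure ProductWeights (ι β : Type*) [Fintype β] where
  weight : ι → β → ℝ
  weight_nonneg : ∀ i b, 0 ≤ weight i b
  sum_weight : ∀ i, ∑ b, weight i b = 1

namespace ProductWeights

variable {ι β : Type*} [Fintype β] (P : ProductWeights ι β)

theorem exists_weight_pos (i : ι) : ∃ b, 0 < P.weight i b := by
  obtain ⟨b, -, hb⟩ := Finset.exists_ne_zero_of_sum_ne_zero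
    (by rw [P.sum_weight i]; exact one_ne_zero)
  exact ⟨b, (P.weight_nonneg i b).lt_of_ne' hb⟩

variable [DecidableEq ι]

def avg (i : ι) (h : (ι → β) → ℝ) (x : ι → β) : ℝ :=
  ∑ b, P.weight i b * h (Function.update x i b)

def expect [Fintype ι] (h : (ι → β) → ℝ) : ℝ :=
  ∑ x, (∏ i, P.weight i (x i)) * h x

noncomputable def ent [Fintype ι] (h : (ι → β) → ℝ) : ℝ :=
  P.expect (fun x => h x * log (h x)) - P.expect h * log (P.expect h)

variable {P}

theorem avg_pos {i : ι} {h : (ι → β) → ℝ} (hh : ∀ x, 0 < h x) (x : ι → β) :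
    0 < P.avg i h x := by
  obtain ⟨b, hb⟩ := P.exists_weight_pos i
  exact Finset.sum_pos' (fun c _ => mul_nonneg (P.weight_nonneg i c) (hh _).le)
    ⟨b, mem_univ b, mul_pos hb (hh _)⟩

theorem invariantAt_avg (i : ι) (h : (ι → β) → ℝ) : InvariantAt i (P.avg i h) := by
  intro x b
  simp only [avg, Function.update_idem]

theorem _root_.InvariantAt.avg {i : ι} {h : (ι → β) → ℝ} (hh : InvariantAt i h) (j : ι) :
    InvariantAt i (P.avg j h) := by
  intro x b
  rcases eq_or_ne j i with rfl | hji
  · exact invariantAt_avg j h x b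
  · refine Finset.sum_congr rfl fun c _ => ?_
    rw [Function.update_comm hji.symm, hh]

theorem avg_mul_of_invariantAt {i : ι} {a : (ι → β) → ℝ} (ha : InvariantAt i a)
    (h : (ι → β) → ℝ) : P.avg i (fun x => a x * h x) = fun x => a x * P.avg i h x := by
  funext x
  simp only [avg, Finset.mul_sum]
  exact Finset.sum_congr rfl fun c _ => by rw [ha x c]; ring

theorem avg_comm {i j : ι} (hij : i ≠ j) (h : (ι → β) → ℝ) :
    P.avg i (P.avg j h) = P.avg j (P.avg i h) := by
  funext x
  simp only [avg, Function.update_comm hij, Finset.mul_sum]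
  rw [Finset.sum_comm]
  exact Finset.sum_congr rfl fun _ _ => Finset.sum_congr rfl fun _ _ => by ring

theorem foldr_pos (l : List ι) {h : (ι → β) → ℝ} (hh : ∀ x, 0 < h x) (x : ι → β) :
    0 < l.foldr P.avg h x := by
  induction l generalizing x with
  | nil => exact hh x
  | cons i l ih => exact avg_pos ih x

theorem invariantAt_foldr_of_mem {i : ι} {l : List ι} (hi : i ∈ l) (h : (ι → β) → ℝ) :
    InvariantAt i (l.foldr P.avg h) := by
  induction l with
  | nil => cases hi
  | cons j l ih =>
    rcases List.mem_cons.1 hi with rfl | hi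
    · exact invariantAt_avg i _
    · exact InvariantAt.avg (ih hi) j

theorem foldr_mul_of_invariantAt {l : List ι} {a : (ι → β) → ℝ}
    (ha : ∀ i ∈ l, InvariantAt i a) (h : (ι → β) → ℝ) :
    l.foldr P.avg (fun x => a x * h x) = fun x => a x * l.foldr P.avg h x := by
  induction l with
  | nil => rfl
  | cons i l ih =>
    rw [List.foldr_cons, ih fun j hj => ha j (List.mem_cons_of_mem i hj),
      avg_mul_of_invariantAt (ha i List.mem_cons_self), List.foldr_cons]

theorem avg_foldr_comm {i : ι} {l : List ι} (hi : i ∉ l) (h : (ι → β) → ℝ) :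
    P.avg i (l.foldr P.avg h) = l.foldr P.avg (P.avg i h) := by
  induction l with
  | nil => rfl
  | cons j l ih =>
    rw [List.foldr_cons, List.foldr_cons, avg_comm (List.ne_of_not_mem_cons hi),
      ih (List.not_mem_of_not_mem_cons hi)]

variable [Fintype ι]

theorem expect_eq_sum_funSplitAt (i : ι) (h : (ι → β) → ℝ) :
    P.expect h = ∑ z : {j // j ≠ i} → β, (∏ j : {j // j ≠ i}, P.weight j (z j)) *
      ∑ c, P.weight i c * h ((Equiv.funSplitAt i β).symm (c, z)) := by
  rw [expect, ← (Equiv.funSplitAt i β).symm.sum_comp, Fintype.sum_prod_type_right]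
  refine Finset.sum_congr rfl fun z _ => ?_
  rw [Finset.mul_sum]
  refine Finset.sum_congr rfl fun c _ => ?_
  have hz : ∀ j : {j // j ≠ i}, (Equiv.funSplitAt i β).symm (c, z) j = z j := fun j => by
    simp [Equiv.funSplitAt_symm_apply, j.2]
  rw [Fintype.prod_eq_mul_prod_subtype_ne _ i]
  simp only [hz, Equiv.funSplitAt_symm_apply, ↓reduceDIte]
  ring

theorem expect_avg (i : ι) (h : (ι → β) → ℝ) : P.expect (P.avg i h) = P.expect h := by
  have hupd : ∀ c b z, Function.update ((Equiv.funSplitAt i β).symm (c, z)) i b =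
      (Equiv.funSplitAt i β).symm (b, z) := by
    intro c b z
    ext j
    rcases eq_or_ne j i with rfl | hj <;> simp [Equiv.funSplitAt_symm_apply, *]
  simp only [expect_eq_sum_funSplitAt i, avg, hupd, ← Finset.sum_mul, P.sum_weight, one_mul]

theorem expect_foldr (l : List ι) (h : (ι → β) → ℝ) :
    P.expect (l.foldr P.avg h) = P.expect h := by
  induction l with
  | nil => rfl
  | cons i l ih => rw [List.foldr_cons, expect_avg, ih]

theorem expect_mono {h k : (ι → β) → ℝ} (hhk : ∀ x, h x ≤ k x) : P.expect h ≤ P.expect k :=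
  Finset.sum_le_sum fun x _ => mul_le_mul_of_nonneg_left (hhk x)
    (Finset.prod_nonneg fun i _ => P.weight_nonneg i (x i))

theorem expect_pos {h : (ι → β) → ℝ} (hh : ∀ x, 0 < h x) : 0 < P.expect h := by
  choose b hb using P.exists_weight_pos
  exact Finset.sum_pos' (fun x _ => mul_nonneg
      (Finset.prod_nonneg fun i _ => P.weight_nonneg i (x i)) (hh x).le)
    ⟨b, mem_univ b, mul_pos (Finset.prod_pos fun i _ => hb i) (hh b)⟩

theorem expect_const (c : ℝ) : P.expect (fun _ => c) = c := by
  rw [expect, ← Finset.sum_mul, ← Fintype.prod_sum]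
  simp [P.sum_weight]

theorem expect_add (h k : (ι → β) → ℝ) :
    P.expect (fun x => h x + k x) = P.expect h + P.expect k := by
  simp only [expect, mul_add, Finset.sum_add_distrib]

theorem expect_sub (h k : (ι → β) → ℝ) :
    P.expect (fun x => h x - k x) = P.expect h - P.expect k := by
  simp only [expect, mul_sub, Finset.sum_sub_distrib]

theorem expect_mul_const (h : (ι → β) → ℝ) (c : ℝ) :
    P.expect (fun x => h x * c) = P.expect h * c := by
  simp only [expect, Finset.sum_mul, mul_assoc]

theorem expect_sum {κ : Type*} (t : Finset κ) (h : κ → (ι → β) → ℝ) :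
    P.expect (fun x => ∑ k ∈ t, h k x) = ∑ k ∈ t, P.expect (h k) := by
  simp only [expect, Finset.mul_sum]
  exact Finset.sum_comm

theorem foldr_univ_toList (h : (ι → β) → ℝ) (x : ι → β) :
    (Finset.univ : Finset ι).toList.foldr P.avg h x = P.expect h := by
  set H := (Finset.univ : Finset ι).toList.foldr P.avg h
  have hconst : H = fun _ => H x := funext fun y => eq_of_forall_invariantAt
    (fun i => invariantAt_foldr_of_mem (Finset.mem_toList.2 (Finset.mem_univ i)) h) y x
  rw [← expect_foldr (Finset.univ : Finset ι).toList h, ← expect_const (P := P) (H x)]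
  exact congrArg P.expect hconst.symm

/-- Telescoping step of the tensorization of entropy: with `M = l.foldr P.avg h` and
`c = avg_i h / avg_i M`, `log t ≤ t - 1` reduces the claim to `E[M c] = E[h]`, which holds because
averaging `c` over the coordinates in `l` gives `1`. -/
theorem expect_mul_log_foldr_div_avg_le {i : ι} {l : List ι} (hi : i ∉ l)
    {h : (ι → β) → ℝ} (hh : ∀ x, 0 < h x) :
    P.expect (fun x => h x * log (l.foldr P.avg h x / P.avg i (l.foldr P.avg h) x))
      ≤ P.expect (fun x => h x * log (h x / P.avg i h x)) := by
  set M := l.foldr P.avg h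
  set N := P.avg i M
  set A := P.avg i h
  have hM : ∀ x, 0 < M x := foldr_pos l hh
  have hN : ∀ x, 0 < N x := avg_pos hM
  have hA : ∀ x, 0 < A x := avg_pos hh
  have hM_inv : ∀ j ∈ l, InvariantAt j M := fun j hj => invariantAt_foldr_of_mem hj h
  have hN_inv : ∀ j ∈ l, InvariantAt j (fun x => (N x)⁻¹) := fun j hj x b => by
    simp only [N, InvariantAt.avg (hM_inv j hj) i x b]
  have hfold : l.foldr P.avg (fun x => (N x)⁻¹ * A x) = fun _ => 1 := by
    rw [foldr_mul_of_invariantAt hN_inv, ← avg_foldr_comm hi]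
    funext x
    exact inv_mul_cancel₀ (hN x).ne'
  have hcancel : P.expect (fun x => M x * (A x / N x)) = P.expect h := by
    calc P.expect (fun x => M x * (A x / N x))
        = P.expect (l.foldr P.avg (fun x => M x * ((N x)⁻¹ * A x))) := by
          rw [expect_foldr]
          simp only [div_eq_inv_mul]
      _ = P.expect h := by
          rw [foldr_mul_of_invariantAt hM_inv, hfold]
          simp only [mul_one, M, expect_foldr]
  have := expect_mono (P := P) fun x =>
    mul_log_div_sub_mul_log_div_le (hh x) (hM x) (hA x) (hN x)
  rw [expect_sub, expect_sub, hcancel] at this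
  linarith

theorem expect_mul_log_div_foldr_le {l : List ι} (hl : l.Nodup) {h : (ι → β) → ℝ}
    (hh : ∀ x, 0 < h x) :
    P.expect (fun x => h x * log (h x / l.foldr P.avg h x))
      ≤ (l.map fun i => P.expect fun x => h x * log (h x / P.avg i h x)).sum := by
  induction l with
  | nil =>
    simp only [List.foldr_nil, div_self (hh _).ne', log_one, mul_zero, expect_const,
      List.map_nil, List.sum_nil, le_refl]
  | cons i l ih =>
    obtain ⟨hi, hl⟩ := List.nodup_cons.1 hl
    have hsplit : ∀ x, h x * log (h x / (i :: l).foldr P.avg h x) =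
        h x * log (h x / l.foldr P.avg h x) +
          h x * log (l.foldr P.avg h x / P.avg i (l.foldr P.avg h) x) := by
      intro x
      have hM := foldr_pos (P := P) l hh x
      have hN := avg_pos (P := P) (i := i) (foldr_pos (P := P) l hh) x
      rw [List.foldr_cons, ← mul_add, ← log_mul (div_pos (hh x) hM).ne' (div_pos hM hN).ne',
        div_mul_div_cancel₀ hM.ne']
    simp only [hsplit, expect_add, List.map_cons, List.sum_cons]
    linarith [ih hl, expect_mul_log_foldr_div_avg_le (P := P) hi hh]

theorem ent_le_sum_expect_mul_log_div_avg {h : (ι → β) → ℝ} (hh : ∀ x, 0 < h x) :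
    P.ent h ≤ ∑ i, P.expect fun x => h x * log (h x / P.avg i h x) := by
  have key := expect_mul_log_div_foldr_le (P := P) (Finset.nodup_toList Finset.univ) hh
  rw [Finset.sum_map_toList] at key
  simp only [foldr_univ_toList] at key
  convert key using 1
  rw [ent, ← expect_mul_const, ← expect_sub]
  congr 1
  funext x
  rw [log_div (hh x).ne' (expect_pos hh).ne']
  ring

theorem expect_mul_log_div_avg_le {i : ι} {h u : (ι → β) → ℝ} (hh : ∀ x, 0 < h x)
    (hu : ∀ x, 0 < u x) (hui : InvariantAt i u) :
    P.expect (fun x => h x * log (h x / P.avg i h x))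
      ≤ P.expect (fun x => h x * log (h x / u x) - h x + u x) := by
  set A := P.avg i h
  have hA : ∀ x, 0 < A x := avg_pos hh
  set L : (ι → β) → ℝ := fun x => log (A x / u x)
  have hL : InvariantAt i L := fun x b => by
    simp only [L, A, invariantAt_avg i h x b, hui x b]
  have hLh : P.expect (fun x => L x * h x) = P.expect (fun x => L x * A x) := by
    rw [← expect_avg i, avg_mul_of_invariantAt hL]
  have hsplit : P.expect (fun x => h x * log (h x / u x) - h x + u x) =
      P.expect (fun x => h x * log (h x / A x)) + P.expect (fun x => L x * h x)
        - P.expect h + P.expect u := by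
    rw [expect_add, expect_sub, ← expect_add]
    congr 3
    funext x
    simp only [L]
    rw [log_div (hh x).ne' (hu x).ne', log_div (hh x).ne' (hA x).ne',
      log_div (hA x).ne' (hu x).ne']
    ring
  have hnonneg : 0 ≤ P.expect (fun x => L x * A x - A x + u x) := by
    rw [← expect_const (P := P) 0]
    refine expect_mono fun x => ?_
    have := sub_le_mul_log_div (hA x) (hu x)
    simp only [L]
    linarith
  rw [expect_add, expect_sub] at hnonneg
  linarith [expect_avg (P := P) i h]

theorem ent_exp_neg_mul_le {f : (ι → β) → ℝ} {g : ι → (ι → β) → ℝ} {a b : ℝ}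
    (hg : ∀ i, InvariantAt i (g i)) (hfg : ∀ x i, 0 ≤ f x - g i x ∧ f x - g i x ≤ 1)
    (hsum : ∀ x, ∑ i, (f x - g i x) ≤ a * f x + b) (s : ℝ) :
    P.ent (fun x => exp (-s * f x))
      ≤ (exp s - s - 1) * P.expect (fun x => (a * f x + b) * exp (-s * f x)) := by
  set h : (ι → β) → ℝ := fun x => exp (-s * f x)
  have hh : ∀ x, 0 < h x := fun x => exp_pos _
  have hφ : 0 ≤ exp s - s - 1 := by linarith [add_one_le_exp s]
  have hlocal : ∀ i x, h x * log (h x / exp (-s * g i x)) - h x + exp (-s * g i x)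
      ≤ (f x - g i x) * ((exp s - s - 1) * h x) := by
    intro i x
    have hexp : exp (-s * g i x) = h x * exp ((f x - g i x) * s) := by
      rw [← exp_add]
      ring_nf
    rw [hexp, div_mul_cancel_left₀ (hh x).ne', log_inv, log_exp]
    have := mul_le_mul_of_nonneg_left
      (exp_mul_sub_mul_sub_one_le_s13 (hfg x i).1 (hfg x i).2 s) (hh x).le
    linarith
  calc P.ent h
      ≤ ∑ i, P.expect (fun x => h x * log (h x / P.avg i h x)) :=
        ent_le_sum_expect_mul_log_div_avg hh
    _ ≤ ∑ i, P.expect (fun x => h x * log (h x / exp (-s * g i x)) - h x + exp (-s * g i x)) :=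
        Finset.sum_le_sum fun i _ => expect_mul_log_div_avg_le hh (fun x => exp_pos _)
          fun x c => by rw [hg i x c]
    _ ≤ ∑ i, P.expect (fun x => (f x - g i x) * ((exp s - s - 1) * h x)) :=
        Finset.sum_le_sum fun i _ => expect_mono (hlocal i)
    _ = P.expect (fun x => (∑ i, (f x - g i x)) * ((exp s - s - 1) * h x)) := by
        simp only [Finset.sum_mul, expect_sum]
    _ ≤ P.expect (fun x => (a * f x + b) * ((exp s - s - 1) * h x)) :=
        expect_mono fun x => mul_le_mul_of_nonneg_right (hsum x) (mul_nonneg hφ (hh x).le)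
    _ = (exp s - s - 1) * P.expect (fun x => (a * f x + b) * h x) := by
        rw [mul_comm, ← expect_mul_const]
        congr 1
        funext x
        ring

theorem neg_mul_expect_mul_exp_sub_mul_log_le {f : (ι → β) → ℝ} {g : ι → (ι → β) → ℝ}
    {a b : ℝ} (hg : ∀ i, InvariantAt i (g i))
    (hfg : ∀ x i, 0 ≤ f x - g i x ∧ f x - g i x ≤ 1)
    (hsum : ∀ x, ∑ i, (f x - g i x) ≤ a * f x + b) (s : ℝ) :
    -s * P.expect (fun x => f x * exp (-s * f x))
      - P.expect (fun x => exp (-s * f x)) * log (P.expect fun x => exp (-s * f x))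
      ≤ (exp s - s - 1) * (a * P.expect (fun x => f x * exp (-s * f x))
        + b * P.expect fun x => exp (-s * f x)) := by
  have hlin : (fun x => (a * f x + b) * exp (-s * f x)) =
      fun x => f x * exp (-s * f x) * a + exp (-s * f x) * b := by
    funext x
    ring
  have hlog : (fun x => exp (-s * f x) * log (exp (-s * f x))) =
      fun x => f x * exp (-s * f x) * -s := by
    funext x
    rw [log_exp]
    ring
  have := P.ent_exp_neg_mul_le hg hfg hsum s
  rwa [ent, hlog, hlin, expect_add, expect_mul_const, expect_mul_const, expect_mul_const,
    mul_comm _ (-s), mul_comm _ a, mul_comm _ b] at this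

theorem hasDerivAt_expect_exp_neg_mul (f : (ι → β) → ℝ) (s : ℝ) :
    HasDerivAt (fun s => P.expect fun x => exp (-s * f x))
      (-P.expect fun x => f x * exp (-s * f x)) s := by
  have : HasDerivAt (fun s => P.expect fun x => exp (-s * f x))
      (P.expect fun x => exp (-s * f x) * (-1 * f x)) s :=
    HasDerivAt.fun_sum fun x _ => (((hasDerivAt_neg s).mul_const (f x)).exp).const_mul _
  convert this using 1
  rw [← neg_one_mul, mul_comm, ← expect_mul_const]
  congr 1
  funext x
  ring

theorem log_expect_exp_neg_mul_add_le {f : (ι → β) → ℝ} {g : ι → (ι → β) → ℝ} {a b : ℝ}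
    (hg : ∀ i, InvariantAt i (g i)) (hfg : ∀ x i, 0 ≤ f x - g i x ∧ f x - g i x ≤ 1)
    (hsum : ∀ x, ∑ i, (f x - g i x) ≤ a * f x + b) (ha : 1 / 3 ≤ a)
    (hv : 0 ≤ a * P.expect f + b) {s : ℝ} (hs : 0 ≤ s) :
    log (P.expect fun x => exp (-s * f x)) + s * P.expect f
      ≤ (a * P.expect f + b) * s ^ 2 / 2 := by
  set m := P.expect f
  set M : ℝ → ℝ := fun s => P.expect fun x => exp (-s * f x)
  set M₁ : ℝ → ℝ := fun s => P.expect fun x => f x * exp (-s * f x)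
  have hM : ∀ s, 0 < M s := fun s => expect_pos fun x => exp_pos _
  have hent : ∀ s, -s * M₁ s - M s * log (M s) ≤ (exp s - s - 1) * (a * M₁ s + b * M s) :=
    P.neg_mul_expect_mul_exp_sub_mul_log_le hg hfg hsum
  suffices log (M s) + s * m - (a * m + b) * s ^ 2 / 2 ≤ 0 by linarith
  refine nonpos_of_mul_deriv_lt (E := fun s => log (M s) + s * m - (a * m + b) * s ^ 2 / 2)
    (E' := fun s => -(M₁ s / M s) + m - (a * m + b) * s) (fun s _ => ?_)
    (by simp [M, expect_const]) (by simp [M, M₁, m, expect_const]) (fun s hs hE' => ?_) hs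
  · have : HasDerivAt (fun s => log (M s) + s * m - (a * m + b) * s ^ 2 / 2)
        (-M₁ s / M s + 1 * m - (a * m + b) * (↑2 * s ^ (2 - 1)) / 2) s :=
      (((P.hasDerivAt_expect_exp_neg_mul f s).log (hM s).ne').add
        ((hasDerivAt_id' s).mul_const m)).sub
        (((hasDerivAt_pow 2 s).const_mul (a * m + b)).div_const 2)
    exact this.congr_deriv (by ring)
  · set D := M₁ s / M s
    have hD : -s * D - log (M s) ≤ (exp s - s - 1) * (a * D + b) := by
      refine le_of_mul_le_mul_left ?_ (hM s)
      have := hent s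
      rw [show M₁ s = D * M s from (div_mul_cancel₀ _ (hM s).ne').symm] at this
      linarith
    have hφ : 0 < exp s - s - 1 := by linarith [add_one_lt_exp hs.ne']
    linarith [mul_le_mul_of_nonneg_left (exp_sub_sub_one_mul_one_sub_le ha hs.le) hv,
      mul_pos (mul_pos (by linarith : 0 < a) hφ) hE']

variable [MeasurableSpace β] [MeasurableSingletonClass β]

def ofMeasures (ν : ι → Measure β) [∀ i, IsProbabilityMeasure (ν i)] : ProductWeights ι β where
  weight i b := (ν i).real {b}
  weight_nonneg _ _ := measureReal_nonneg
  sum_weight i := by simp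

theorem integral_pi_eq_expect (ν : ι → Measure β) [∀ i, IsProbabilityMeasure (ν i)]
    (h : (ι → β) → ℝ) : ∫ x, h x ∂Measure.pi ν = (ofMeasures ν).expect h := by
  rw [integral_fintype .of_finite]
  refine Finset.sum_congr rfl fun x _ => ?_
  rw [smul_eq_mul, measureReal_def, Measure.pi_singleton, ENNReal.toReal_prod]
  rfl

end ProductWeights

theorem measure_le_integral_sub_le_exp {Ω : Type*} [MeasurableSpace Ω] {μ : Measure Ω}
    [IsProbabilityMeasure μ] {Z : Ω → ℝ} {v : ℝ} (hv : 0 < v)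
    (hint : ∀ s, Integrable (fun ω => exp (s * Z ω)) μ)
    (hcgf : ∀ s, 0 ≤ s → cgf Z μ (-s) ≤ -s * μ[Z] + v * s ^ 2 / 2) {t : ℝ} (ht : 0 ≤ t) :
    μ.real {ω | Z ω ≤ μ[Z] - t} ≤ exp (-t ^ 2 / (2 * v)) := by
  have hs : 0 ≤ t / v := div_nonneg ht hv.le
  refine (measure_le_le_exp_cgf _ (neg_nonpos.2 hs) (hint _)).trans (exp_le_exp.2 ?_)
  have heq : -(t / v) * μ[Z] + v * (t / v) ^ 2 / 2 - -(t / v) * (μ[Z] - t)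
      = -t ^ 2 / (2 * v) := by
    field_simp
    ring
  linarith [hcgf _ hs]

/-- Lower tail for `(a,b)`-self-bounding functions of independent `{0,1}`-valued
random variables with `a ≥ 1/3`:
`Pr[Z ≤ E Z − t] ≤ e^{−t²/(2(a E Z + b))}` for every `0 < t ≤ E Z`. -/
theorem ab_self_bounding_lower_tail
    {Ω : Type*} [MeasurableSpace Ω] (μ : Measure Ω) [IsProbabilityMeasure μ]
    {n : ℕ} (X : Fin n → Ω → Bool) (hXm : ∀ i, Measurable (X i))
    (hXind : iIndepFun X μ)
    (f : (Fin n → Bool) → ℝ) (a b : ℝ) (hf : ABSelfBounding a b f)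
    (ha : 1 / 3 ≤ a)
    (Z : Ω → ℝ) (hZ : ∀ ω, Z ω = f (fun i => X i ω)) (t : ℝ)
    (ht : 0 < t) (ht' : t ≤ ∫ ω', Z ω' ∂μ) :
    (μ {ω | Z ω ≤ (∫ ω', Z ω' ∂μ) - t}).toReal
      ≤ Real.exp (-(t ^ 2) / (2 * (a * (∫ ω', Z ω' ∂μ) + b))) := by
  obtain ⟨-, hb, g, hg, hfg, hsum⟩ := hf
  have hY : Measurable fun ω i => X i ω := measurable_pi_lambda _ hXm
  have := fun i => Measure.isProbabilityMeasure_map (μ := μ) (hXm i).aemeasurable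
  set P := ProductWeights.ofMeasures fun i => μ.map (X i)
  have hlaw : ∀ h : (Fin n → Bool) → ℝ, ∫ ω, h (fun i => X i ω) ∂μ = P.expect h := fun h => by
    rw [← ProductWeights.integral_pi_eq_expect,
      ← (iIndepFun_iff_map_fun_eq_pi_map fun i => (hXm i).aemeasurable).1 hXind,
      integral_map hY.aemeasurable Measurable.of_discrete.aestronglyMeasurable]
  obtain rfl : Z = fun ω => f (fun i => X i ω) := funext hZ
  have hv : 0 < a * P.expect f + b := by
    rw [hlaw f] at ht'
    nlinarith
  refine measure_le_integral_sub_le_exp (by rwa [hlaw f])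
    (fun s => (Integrable.of_finite (μ := μ.map fun ω i => X i ω)
      (f := fun x => exp (s * f x))).comp_measurable hY) (fun s hs => ?_) ht.le
  rw [cgf, mgf, hlaw fun x => exp (-s * f x), hlaw f]
  linarith [P.log_expect_exp_neg_mul_add_le hg hfg hsum ha hv.le hs]
end

section
/- Let X_1,…,X_n ∈ {0,1} be independent random variables and let f : 2^[n] → ℝ₊ be a non-negative submodular set function (not necessarily monotone) with all marginal values in [−1,1], and set Z = f(X_1,…,X_n). Then for every δ > 0, Pr[Z ≥ (1+δ) E[Z]] ≤ e^{−δ² E[Z] / (4 + 5δ/3)}. -/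
/-!
Write `g x = f {i | xᵢ}` on the cube and let `Dᵢ g x` be the drop of `g` when the `i`-th
coordinate is set to its worse value; `Dᵢ g ≤ 1` by the bound on the marginals. By diminishing
returns the positive removal marginals of `A` add up to at most `f A - f (A \ T) ≤ f A`, where `T`
is the set of coordinates at which they are positive, and likewise for the addition marginals;
so `∑ᵢ Dᵢ g ≤ 2 g`, i.e. `g` is `(2, 0)`-self-bounding.

For independent coordinates, entropy is subadditive over the coordinates, and the variational
bound on the entropy of `e^{tg}` in one coordinate, against the reference value `e^{t min}`, gives
the modified log-Sobolev inequality `Ent(e^{tg}) ≤ 2 (e^{-t} + t - 1) E[g e^{tg}]`. For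
`G t = log E e^{tg}` this is `(2 - t - 2e^{-t}) G' ≤ G`, while `ψ t = E g · (t + t²/(1 - 5t/6))`
satisfies `ψ ≤ (2 - t - 2e^{-t}) ψ'` on `(0, 6/5)`; so `G / ψ` decreases there from its limit `1`
at `0⁺` (Herbst's argument), and Chernoff's bound at `t = δ / (2 + 5δ/6)` gives the tail.
-/

open Finset Function Real Filter Topology

namespace SubmodularTail

section Submodular

variable {α : Type*}

theorem sum_max_zero_eq_sum_filter (s : Finset α) (d : α → ℝ) :
    ∑ i ∈ s, max 0 (d i) = ∑ i ∈ s.filter (fun i => 0 ≤ d i), d i := by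
  rw [sum_filter]
  exact sum_congr rfl fun i _ => max_def 0 (d i)

variable [DecidableEq α]

def IsSubmodular (f : Finset α → ℝ) : Prop :=
  ∀ A B, f (A ∪ B) + f (A ∩ B) ≤ f A + f B

variable {f : Finset α → ℝ}

theorem IsSubmodular.marginal_antitone (hf : IsSubmodular f) {A B : Finset α} {j : α}
    (hAB : A ⊆ B) (hj : j ∉ B) : f (insert j B) - f B ≤ f (insert j A) - f A := by
  have h := hf (insert j A) B
  rw [insert_union, union_eq_right.2 hAB, insert_inter_of_notMem hj, inter_eq_left.2 hAB] at h
  linarith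

theorem IsSubmodular.sum_sub_erase_le (hf : IsSubmodular f) {A T : Finset α} (hTA : T ⊆ A) :
    ∑ i ∈ T, (f A - f (A.erase i)) ≤ f A - f (A \ T) := by
  induction T using Finset.induction_on with
  | empty => simp
  | insert i T hiT ih =>
    have hiA : i ∈ A := hTA (mem_insert_self i T)
    have hmarg : f A - f (A.erase i) ≤ f (A \ T) - f ((A \ T).erase i) := by
      have h := hf.marginal_antitone (erase_subset_erase i (sdiff_subset (t := T)))
        (notMem_erase i A)
      rwa [insert_erase hiA, insert_erase (mem_sdiff.2 ⟨hiA, hiT⟩)] at h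
    rw [sum_insert hiT, sdiff_insert]
    linarith [ih ((subset_insert i T).trans hTA)]

theorem IsSubmodular.sum_sub_insert_le (hf : IsSubmodular f) {A T : Finset α}
    (hTA : Disjoint T A) : ∑ i ∈ T, (f A - f (insert i A)) ≤ f A - f (A ∪ T) := by
  induction T using Finset.induction_on with
  | empty => simp
  | insert i T hiT ih =>
    have hiAT : i ∉ A ∪ T := by
      simp [hiT, disjoint_left.1 hTA (mem_insert_self i T)]
    have hmarg := hf.marginal_antitone (subset_union_left (s₂ := T)) hiAT
    rw [sum_insert hiT, union_insert]
    linarith [ih (disjoint_of_subset_left (subset_insert i T) hTA)]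

theorem IsSubmodular.sum_max_sub_erase_le (hf : IsSubmodular f) (hf0 : ∀ A, 0 ≤ f A)
    (A : Finset α) : ∑ i ∈ A, max 0 (f A - f (A.erase i)) ≤ f A := by
  rw [sum_max_zero_eq_sum_filter]
  linarith [hf.sum_sub_erase_le (filter_subset (fun i => 0 ≤ f A - f (A.erase i)) A),
    hf0 (A \ A.filter fun i => 0 ≤ f A - f (A.erase i))]

theorem IsSubmodular.sum_max_sub_insert_le [Fintype α] (hf : IsSubmodular f)
    (hf0 : ∀ A, 0 ≤ f A) (A : Finset α) : ∑ i ∈ Aᶜ, max 0 (f A - f (insert i A)) ≤ f A := by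
  rw [sum_max_zero_eq_sum_filter]
  have hdisj : Disjoint (Aᶜ.filter fun i => 0 ≤ f A - f (insert i A)) A :=
    disjoint_of_subset_left (filter_subset _ _) disjoint_compl_left
  linarith [hf.sum_sub_insert_le hdisj, hf0 (A ∪ Aᶜ.filter fun i => 0 ≤ f A - f (insert i A))]

end Submodular

section Cube

variable {ι : Type*}

def trueSet [Fintype ι] (x : ι → Bool) : Finset ι := univ.filter fun i => x i = true

@[simp] theorem mem_trueSet [Fintype ι] {x : ι → Bool} {i : ι} :
    i ∈ trueSet x ↔ x i = true := by
  simp [trueSet]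

variable [DecidableEq ι]

def deficiency (g : (ι → Bool) → ℝ) (i : ι) (x : ι → Bool) : ℝ :=
  g x - min (g (update x i true)) (g (update x i false))

theorem deficiency_eq_max (g : (ι → Bool) → ℝ) (i : ι) (x : ι → Bool) :
    deficiency g i x = max 0 (g x - g (update x i (!x i))) := by
  have hx : update x i (x i) = x := update_eq_self i x
  unfold deficiency
  cases h : x i <;> rw [h] at hx <;> simp only [hx, Bool.not_false, Bool.not_true,
    ← max_sub_sub_left, sub_self, max_comm]

theorem deficiency_nonneg (g : (ι → Bool) → ℝ) (i : ι) (x : ι → Bool) :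
    0 ≤ deficiency g i x := by
  rw [deficiency_eq_max]; exact le_max_left _ _

theorem deficiency_update (g : (ι → Bool) → ℝ) (i : ι) (x : ι → Bool) (b : Bool) :
    deficiency g i (update x i b)
      = g (update x i b) - min (g (update x i true)) (g (update x i false)) := by
  simp only [deficiency, update_idem]

variable [Fintype ι]

/-- The paper's `(a, 0)`-self-bounding property, with the minimum over the `i`-th coordinate as
`fᵢ`: it is the largest admissible choice, so nothing is lost. -/
def IsSelfBounding (a : ℝ) (g : (ι → Bool) → ℝ) : Prop :=
  (∀ i x, deficiency g i x ≤ 1) ∧ ∀ x, ∑ i, deficiency g i x ≤ a * g x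

theorem deficiency_comp_trueSet (f : Finset ι → ℝ) (i : ι) (x : ι → Bool) :
    deficiency (fun y => f (trueSet y)) i x =
      if i ∈ trueSet x then max 0 (f (trueSet x) - f ((trueSet x).erase i))
      else max 0 (f (trueSet x) - f (insert i (trueSet x))) := by
  rw [deficiency_eq_max]
  split_ifs with h <;> congr 3 <;> ext j <;> by_cases hj : j = i <;> simp_all [update_of_ne]

theorem isSelfBounding_comp_trueSet {f : Finset ι → ℝ} (hf : IsSubmodular f)
    (hf0 : ∀ A, 0 ≤ f A) (hmarg : ∀ A j, |f (insert j A) - f A| ≤ 1) :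
    IsSelfBounding 2 fun x => f (trueSet x) := by
  refine ⟨fun i x => ?_, fun x => ?_⟩
  · rw [deficiency_comp_trueSet]
    split_ifs with h
    · have := hmarg ((trueSet x).erase i) i
      rw [insert_erase h] at this
      exact max_le zero_le_one (abs_le.1 this).2
    · exact max_le zero_le_one (by linarith [(abs_le.1 (hmarg (trueSet x) i)).1])
  · rw [← sum_add_sum_compl (trueSet x)]
    have h₁ := hf.sum_max_sub_erase_le hf0 (trueSet x)
    have h₂ := hf.sum_max_sub_insert_le hf0 (trueSet x)
    rw [sum_congr rfl fun i hi => (deficiency_comp_trueSet f i x).trans (if_pos hi)]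
    rw [sum_congr rfl fun i hi => (deficiency_comp_trueSet f i x).trans
      (if_neg (mem_compl.1 hi))]
    linarith

end Cube

section Entropy

variable {α : Type*} [Fintype α]

def mean (w h : α → ℝ) : ℝ := ∑ a, w a * h a

noncomputable def ent (w h : α → ℝ) : ℝ :=
  mean w (fun a => h a * log (h a)) - mean w h * log (mean w h)

variable {w : α → ℝ}

theorem mean_add (h k : α → ℝ) : mean w (fun a => h a + k a) = mean w h + mean w k := by
  simp only [mean, mul_add, sum_add_distrib]

theorem mean_sub (h k : α → ℝ) : mean w (fun a => h a - k a) = mean w h - mean w k := by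
  simp only [mean, mul_sub, sum_sub_distrib]

theorem mean_const_mul (c : ℝ) (h : α → ℝ) : mean w (fun a => c * h a) = c * mean w h := by
  simp only [mean, mul_sum]; exact sum_congr rfl fun a _ => by ring

theorem mean_const (hw : ∑ a, w a = 1) (c : ℝ) : mean w (fun _ => c) = c := by
  rw [mean, ← sum_mul, hw, one_mul]

theorem mean_le_mean (hw : ∀ a, 0 ≤ w a) {h h' : α → ℝ} (hh : ∀ a, h a ≤ h' a) :
    mean w h ≤ mean w h' :=
  sum_le_sum fun a _ => mul_le_mul_of_nonneg_left (hh a) (hw a)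

theorem mean_pos (hw : w ∈ stdSimplex ℝ α) {h : α → ℝ} (hh : ∀ a, 0 < h a) : 0 < mean w h := by
  obtain ⟨a, -, ha⟩ := exists_ne_zero_of_sum_ne_zero (hw.2.symm ▸ one_ne_zero)
  exact sum_pos' (fun b _ => mul_nonneg (hw.1 b) (hh b).le)
    ⟨a, mem_univ a, mul_pos ((hw.1 a).lt_of_ne' ha) (hh a)⟩

theorem mul_le_mul_log_sub_add_exp {s : ℝ} (hs : 0 ≤ s) (t : ℝ) :
    s * t ≤ s * log s - s + exp t := by
  rcases hs.eq_or_lt with rfl | hs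
  · simpa using (exp_pos t).le
  · have h := add_one_le_exp (t - log s)
    rw [exp_sub, exp_log hs, le_div_iff₀ hs] at h
    linarith

theorem mean_mul_le_ent (hw : w ∈ stdSimplex ℝ α) {h u : α → ℝ} (hh : ∀ a, 0 < h a)
    (hu : mean w (fun a => exp (u a)) ≤ 1) : mean w (fun a => h a * u a) ≤ ent w h := by
  set T := mean w h
  have hT : 0 < T := mean_pos hw hh
  have hyoung : ∀ a, h a * u a + log T * h a ≤ h a * log (h a) - h a + T * exp (u a) := by
    intro a
    have := mul_le_mul_log_sub_add_exp (hh a).le (u a + log T)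
    rw [exp_add, exp_log hT] at this
    linarith
  have key := mean_le_mean hw.1 hyoung
  rw [mean_add, mean_const_mul, mean_add, mean_sub, mean_const_mul] at key
  rw [ent]
  linarith [mul_le_mul_of_nonneg_left hu hT.le]

theorem ent_nonneg (hw : w ∈ stdSimplex ℝ α) {h : α → ℝ} (hh : ∀ a, 0 < h a) : 0 ≤ ent w h := by
  simpa [mean_const hw.2] using mean_mul_le_ent hw hh (u := fun _ => 0) (by simp [mean_const hw.2])

theorem ent_const (hw : ∑ a, w a = 1) (c : ℝ) : ent w (fun _ => c) = 0 := by
  simp [ent, mean_const hw]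

theorem ent_mean_le_mean_ent {β : Type*} [Fintype β] {v : β → ℝ} (hw : w ∈ stdSimplex ℝ α)
    (hv : v ∈ stdSimplex ℝ β) {H : β → α → ℝ} (hH : ∀ b a, 0 < H b a) :
    ent w (fun a => mean v fun b => H b a) ≤ mean v fun b => ent w (H b) := by
  set h := fun a => mean v fun b => H b a
  have hh : ∀ a, 0 < h a := fun a => mean_pos hv fun b => hH b a
  set M := mean w h
  have hM : 0 < M := mean_pos hw hh
  -- `u` attains the bound of `mean_mul_le_ent` for the mixture `h` and is admissible for each `H b`
  set u := fun a => log (h a / M)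
  have hu : mean w (fun a => exp (u a)) = 1 := by
    have h_exp : ∀ a, exp (u a) = M⁻¹ * h a := fun a => by
      rw [exp_log (div_pos (hh a) hM), div_eq_inv_mul]
    simp only [h_exp, mean_const_mul]
    exact inv_mul_cancel₀ hM.ne'
  have hent : ent w h = mean w fun a => h a * u a := by
    simp only [u, log_div (hh _).ne' hM.ne', mul_sub, mean_sub, mul_comm _ (log M), mean_const_mul]
    rw [ent]; ring
  calc ent w h = mean w (fun a => h a * u a) := hent
    _ = mean v fun b => mean w fun a => H b a * u a := by
      simp only [h, mean, sum_mul, mul_sum]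
      rw [sum_comm]
      exact sum_congr rfl fun _ _ => sum_congr rfl fun _ _ => by ring
    _ ≤ mean v fun b => ent w (H b) := mean_le_mean hv.1 fun b => mean_mul_le_ent hw (hH b) hu.le

theorem ent_le_mean_mul_log_div_sub_add (hw : w ∈ stdSimplex ℝ α) {h : α → ℝ}
    (hh : ∀ a, 0 < h a) {c : ℝ} (hc : 0 < c) :
    ent w h ≤ mean w fun a => h a * log (h a / c) - h a + c := by
  simp only [log_div (hh _).ne' hc.ne', mul_sub]
  set T := mean w h
  have hT : 0 < T := mean_pos hw hh
  have hlog : T * log c - T * log T ≤ c - T := by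
    have := mul_le_mul_of_nonneg_left (log_le_sub_one_of_pos (div_pos hc hT)) hT.le
    rwa [log_div hc.ne' hT.ne', mul_sub, mul_sub, mul_div_cancel₀ _ hT.ne', mul_one] at this
  rw [mean_add, mean_sub, mean_sub, mean_const hw.2]
  simp only [mul_comm _ (log c), mean_const_mul]
  rw [ent]
  linarith

theorem mean_nonneg (hw : ∀ a, 0 ≤ w a) {h : α → ℝ} (hh : ∀ a, 0 ≤ h a) : 0 ≤ mean w h :=
  sum_nonneg fun a _ => mul_nonneg (hw a) (hh a)

theorem mean_sum {β : Type*} (s : Finset β) (F : β → α → ℝ) :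
    mean w (fun a => ∑ i ∈ s, F i a) = ∑ i ∈ s, mean w (F i) := by
  simp only [mean, mul_sum]
  exact sum_comm

end Entropy

theorem eq_of_forall_update_eq {ι β γ : Type*} [Fintype ι] [DecidableEq ι] {K : (ι → β) → γ}
    (hK : ∀ x i b, K (update x i b) = K x) (x y : ι → β) : K x = K y := by
  have key : ∀ s : Finset ι, K (fun j => if j ∈ s then y j else x j) = K x := by
    intro s
    induction s using Finset.induction_on with
    | empty => simp
    | insert i s hi ih =>
      rw [← ih, ← hK (fun j => if j ∈ s then y j else x j) i (y i)]
      congr 1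
      ext j
      by_cases hj : j = i <;> simp_all
  simpa using (key univ).symm

section ProductCube

variable {ι : Type*} [DecidableEq ι] {p : ι → Bool → ℝ}

def condMean (p : ι → Bool → ℝ) (i : ι) (h : (ι → Bool) → ℝ) (x : ι → Bool) : ℝ :=
  mean (p i) fun b => h (update x i b)

noncomputable def condEnt (p : ι → Bool → ℝ) (i : ι) (h : (ι → Bool) → ℝ) (x : ι → Bool) : ℝ :=
  ent (p i) fun b => h (update x i b)

def condMeanList (p : ι → Bool → ℝ) : List ι → ((ι → Bool) → ℝ) → (ι → Bool) → ℝ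
  | [], h => h
  | i :: l, h => condMeanList p l (condMean p i h)

theorem condMean_pos (hp : ∀ i, p i ∈ stdSimplex ℝ Bool) {h : (ι → Bool) → ℝ}
    (hh : ∀ x, 0 < h x) (i : ι) (x : ι → Bool) : 0 < condMean p i h x :=
  mean_pos (hp i) fun _ => hh _

theorem condMean_update {h : (ι → Bool) → ℝ} {i j : ι}
    (hh : i = j ∨ ∀ x b, h (update x i b) = h x) (x : ι → Bool) (b : Bool) :
    condMean p j h (update x i b) = condMean p j h x := by
  unfold condMean
  congr 1
  ext c
  rcases eq_or_ne i j with rfl | hij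
  · rw [update_idem]
  · rw [update_comm hij, hh.resolve_left hij]

theorem condMeanList_update {i : ι} (l : List ι) {h : (ι → Bool) → ℝ}
    (hh : i ∈ l ∨ ∀ x b, h (update x i b) = h x) (x : ι → Bool) (b : Bool) :
    condMeanList p l h (update x i b) = condMeanList p l h x := by
  induction l generalizing h with
  | nil => exact hh.resolve_left (by simp) x b
  | cons j l ih =>
    refine ih ?_
    rcases hh with hj | hh
    · rcases List.mem_cons.1 hj with rfl | hl
      · exact .inr (condMean_update (.inl rfl))
      · exact .inl hl
    · exact .inr (condMean_update (.inr hh))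

theorem condEnt_condMean_le (hp : ∀ i, p i ∈ stdSimplex ℝ Bool) {h : (ι → Bool) → ℝ}
    (hh : ∀ x, 0 < h x) (i j : ι) (x : ι → Bool) :
    condEnt p i (condMean p j h) x ≤ condMean p j (condEnt p i h) x := by
  rcases eq_or_ne i j with rfl | hij
  · have hconst : condEnt p i (condMean p i h) x = 0 := by
      simp only [condEnt, condMean_update (.inl rfl), ent_const (hp i).2]
    rw [hconst]
    exact mean_nonneg (hp i).1 fun _ => ent_nonneg (hp i) fun _ => hh _
  · simp only [condEnt, condMean, update_comm hij]
    exact ent_mean_le_mean_ent (hp i) (hp j) fun _ _ => hh _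

variable [Fintype ι]

def weight (p : ι → Bool → ℝ) (x : ι → Bool) : ℝ := ∏ i, p i (x i)

theorem weight_mem_stdSimplex (hp : ∀ i, p i ∈ stdSimplex ℝ Bool) :
    weight p ∈ stdSimplex ℝ (ι → Bool) :=
  ⟨fun x => prod_nonneg fun i _ => (hp i).1 _, by
    simp only [weight, ← Fintype.prod_sum, (hp _).2, prod_const_one]⟩

theorem weight_update_mul (x : ι → Bool) (i : ι) (b : Bool) :
    weight p (update x i b) * p i (x i) = weight p x * p i b := by
  simp only [weight]
  rw [← mul_prod_erase univ _ (mem_univ i),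
    ← mul_prod_erase univ (fun j => p j (x j)) (mem_univ i), update_self,
    prod_congr rfl fun j hj => by rw [update_of_ne (ne_of_mem_erase hj)]]
  ring

theorem mean_condMean (hp : ∀ i, p i ∈ stdSimplex ℝ Bool) (i : ι) (h : (ι → Bool) → ℝ) :
    mean (weight p) (condMean p i h) = mean (weight p) h := by
  have hσ : Involutive fun q : (ι → Bool) × Bool => (update q.1 i q.2, q.1 i) := by
    rintro ⟨x, b⟩
    simp
  calc mean (weight p) (condMean p i h)
      = ∑ q : (ι → Bool) × Bool, weight p q.1 * p i q.2 * h (update q.1 i q.2) := by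
        simp only [mean, condMean, Fintype.sum_prod_type, mul_sum, mul_assoc]
    _ = ∑ q : (ι → Bool) × Bool, weight p q.1 * p i q.2 * h q.1 :=
        Fintype.sum_bijective _ hσ.bijective _ _ fun q => by rw [weight_update_mul]
    _ = mean (weight p) h := by
        rw [Fintype.sum_prod_type]
        refine sum_congr rfl fun x _ => ?_
        dsimp only
        rw [← sum_mul, ← mul_sum, (hp i).2, mul_one]

theorem ent_eq_mean_condEnt_add (hp : ∀ i, p i ∈ stdSimplex ℝ Bool) (i : ι)
    (h : (ι → Bool) → ℝ) :
    ent (weight p) h = mean (weight p) (condEnt p i h) + ent (weight p) (condMean p i h) := by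
  have hcond : condEnt p i h = fun x => condMean p i (fun y => h y * log (h y)) x
      - condMean p i h x * log (condMean p i h x) := rfl
  rw [hcond, mean_sub, mean_condMean hp, ent, ent, mean_condMean hp]
  ring

theorem ent_le_sum_add_ent_condMeanList (hp : ∀ i, p i ∈ stdSimplex ℝ Bool) (l : List ι)
    {h : (ι → Bool) → ℝ} (hh : ∀ x, 0 < h x) :
    ent (weight p) h ≤ (l.map fun i => mean (weight p) (condEnt p i h)).sum
      + ent (weight p) (condMeanList p l h) := by
  induction l generalizing h with
  | nil => simp [condMeanList]
  | cons i l ih =>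
    have hl := ih (condMean_pos hp hh i)
    have hsum : (l.map fun j => mean (weight p) (condEnt p j (condMean p i h))).sum
        ≤ (l.map fun j => mean (weight p) (condEnt p j h)).sum :=
      List.sum_le_sum fun j _ => (mean_le_mean (weight_mem_stdSimplex hp).1
        fun x => condEnt_condMean_le hp hh j i x).trans_eq (mean_condMean hp i _)
    rw [ent_eq_mean_condEnt_add hp i h, List.map_cons, List.sum_cons, condMeanList]
    linarith

theorem ent_le_sum_mean_condEnt (hp : ∀ i, p i ∈ stdSimplex ℝ Bool) {h : (ι → Bool) → ℝ}
    (hh : ∀ x, 0 < h x) : ent (weight p) h ≤ ∑ i, mean (weight p) (condEnt p i h) := by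
  have key := ent_le_sum_add_ent_condMeanList hp univ.toList hh
  have hconst :
      condMeanList p univ.toList h = fun _ => condMeanList p univ.toList h fun _ => true :=
    funext fun x => eq_of_forall_update_eq (fun x i b =>
      condMeanList_update _ (.inl (mem_toList.2 (mem_univ i))) x b) x _
  rwa [hconst, ent_const (weight_mem_stdSimplex hp).2, add_zero, sum_map_toList] at key

end ProductCube

theorem exp_neg_mul_add_le {t d : ℝ} (hd0 : 0 ≤ d) (hd1 : d ≤ 1) :
    exp (-(t * d)) + t * d - 1 ≤ d * (exp (-t) + t - 1) := by
  have h := convexOn_exp.2 (Set.mem_univ (-t)) (Set.mem_univ 0) hd0 (sub_nonneg.2 hd1)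
    (by ring : d + (1 - d) = 1)
  simp only [smul_eq_mul, mul_zero, add_zero, exp_zero, mul_one] at h
  rw [show -(t * d) = d * -t by ring]
  linarith

section SelfBoundingEntropy

variable {ι : Type*} [DecidableEq ι] {p : ι → Bool → ℝ}

theorem condEnt_exp_le (hp : ∀ i, p i ∈ stdSimplex ℝ Bool) (g : (ι → Bool) → ℝ) (t : ℝ)
    (i : ι) (x : ι → Bool) :
    condEnt p i (fun y => exp (t * g y)) x ≤ condMean p i (fun y => exp (t * g y) *
      (exp (-(t * deficiency g i y)) + t * deficiency g i y - 1)) x := by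
  set c := min (g (update x i true)) (g (update x i false))
  refine (ent_le_mean_mul_log_div_sub_add (hp i) (fun b => exp_pos (t * g (update x i b)))
    (exp_pos (t * c))).trans_eq (congrArg (mean (p i)) (funext fun b => ?_))
  have hprod : exp (t * g (update x i b)) * exp (-(t * (g (update x i b) - c))) = exp (t * c) := by
    rw [← exp_add]; ring_nf
  dsimp only
  rw [deficiency_update, ← exp_sub, log_exp]
  linear_combination -hprod

variable [Fintype ι]

theorem ent_exp_le_of_isSelfBounding (hp : ∀ i, p i ∈ stdSimplex ℝ Bool) {a : ℝ}
    {g : (ι → Bool) → ℝ} (hg : IsSelfBounding a g) (t : ℝ) :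
    ent (weight p) (fun x => exp (t * g x))
      ≤ a * (exp (-t) + t - 1) * mean (weight p) (fun x => g x * exp (t * g x)) := by
  have hw := (weight_mem_stdSimplex hp).1
  have hpt : ∀ x, ∑ i, (exp (-(t * deficiency g i x)) + t * deficiency g i x - 1)
      ≤ a * (exp (-t) + t - 1) * g x := fun x =>
    calc _ ≤ ∑ i, deficiency g i x * (exp (-t) + t - 1) :=
          sum_le_sum fun i _ => exp_neg_mul_add_le (deficiency_nonneg g i x) (hg.1 i x)
      _ = (∑ i, deficiency g i x) * (exp (-t) + t - 1) := (sum_mul ..).symm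
      _ ≤ a * g x * (exp (-t) + t - 1) :=
          mul_le_mul_of_nonneg_right (hg.2 x) (by linarith [add_one_le_exp (-t)])
      _ = _ := by ring
  calc ent (weight p) (fun x => exp (t * g x))
      ≤ ∑ i, mean (weight p) (condEnt p i fun x => exp (t * g x)) :=
        ent_le_sum_mean_condEnt hp fun _ => exp_pos _
    _ ≤ ∑ i, mean (weight p) (fun x => exp (t * g x) *
          (exp (-(t * deficiency g i x)) + t * deficiency g i x - 1)) :=
        sum_le_sum fun i _ => (mean_le_mean hw (condEnt_exp_le hp g t i)).trans_eq
          (mean_condMean hp i _)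
    _ = mean (weight p) (fun x => exp (t * g x) *
          ∑ i, (exp (-(t * deficiency g i x)) + t * deficiency g i x - 1)) := by
        simp only [mul_sum, mean_sum]
    _ ≤ mean (weight p) (fun x => a * (exp (-t) + t - 1) * (g x * exp (t * g x))) :=
        mean_le_mean hw fun x =>
          (mul_le_mul_of_nonneg_left (hpt x) (exp_pos (t * g x)).le).trans_eq (by ring)
    _ = _ := mean_const_mul _ _

end SelfBoundingEntropy

theorem exp_neg_le_taylor {s : ℝ} (hs : 0 ≤ s) : exp (-s) ≤ 1 - s + s^2/2 - s^3/6 + s^4/24 := by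
  have hQ := sum_le_exp_of_nonneg hs 5
  simp only [sum_range_succ, sum_range_zero, Nat.factorial, Nat.cast_one] at hQ
  have hP : 0 ≤ 1 - s + s^2/2 - s^3/6 + s^4/24 := by
    nlinarith [sq_nonneg (s^2 - 2*s), sq_nonneg (s - 3/2)]
  rw [exp_neg, inv_le_iff_one_le_mul₀ (exp_pos s)]
  -- the two Taylor polynomials multiply to `1 + s⁶/72 + s⁸/576`
  nlinarith [mul_le_mul_of_nonneg_left hQ hP, pow_nonneg hs 6, pow_nonneg hs 8]

theorem deriv_rate_nonneg {s : ℝ} (hs0 : 0 ≤ s) (hs : s < 6/5) :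
    0 ≤ 1 + (2*s - 5/6*s^2)/(1 - 5/6*s)^2 := by
  have : 0 ≤ 2*s - 5/6*s^2 := by nlinarith
  positivity

theorem rate_le_mul_deriv_rate {s : ℝ} (hs0 : 0 < s) (hs : s < 6/5) :
    s + s^2/(1 - 5/6*s) ≤ (2 - s - 2 * exp (-s)) * (1 + (2*s - 5/6*s^2)/(1 - 5/6*s)^2) := by
  have hd : 0 < 1 - 5/6*s := by linarith
  have hu : s - s^2 + s^3/3 - s^4/12 ≤ 2 - s - 2 * exp (-s) := by
    linarith [exp_neg_le_taylor hs0.le]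
  have hgap : (s - s^2 + s^3/3 - s^4/12) * (1 + (2*s - 5/6*s^2)/(1 - 5/6*s)^2)
      - (s + s^2/(1 - 5/6*s)) = s^4 * (72 - 32*s + 5*s^2) / (432 * (1 - 5/6*s)^2) := by
    generalize hd_def : 1 - 5/6*s = d at hd ⊢
    field_simp
    rw [← hd_def]
    ring
  have hquad : 0 ≤ 72 - 32*s + 5*s^2 := by nlinarith [sq_nonneg (s - 16/5)]
  have : 0 ≤ s^4 * (72 - 32*s + 5*s^2) / (432 * (1 - 5/6*s)^2) := by positivity
  linarith [mul_le_mul_of_nonneg_right hu (deriv_rate_nonneg hs0.le hs)]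

open Set in
theorem le_of_deriv_mul_le_mul_deriv {G ψ G' ψ' : ℝ → ℝ} {b t : ℝ}
    (hG : ∀ s ∈ Ico 0 b, HasDerivAt G (G' s) s) (hψ : ∀ s ∈ Ico 0 b, HasDerivAt ψ (ψ' s) s)
    (hG0 : G 0 = 0) (hψ0 : ψ 0 = 0) (hG'0 : G' 0 = ψ' 0) (hψ'0 : ψ' 0 ≠ 0)
    (hψpos : ∀ s ∈ Ioo 0 b, 0 < ψ s) (hcmp : ∀ s ∈ Ioo 0 b, G' s * ψ s ≤ G s * ψ' s)
    (ht : t ∈ Ioo 0 b) : G t ≤ ψ t := by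
  have hderiv : ∀ s ∈ Ioo 0 b, HasDerivAt (fun s => G s / ψ s)
      ((G' s * ψ s - G s * ψ' s) / ψ s ^ 2) s := fun s hs =>
    (hG s (Ioo_subset_Ico_self hs)).div (hψ s (Ioo_subset_Ico_self hs)) (hψpos s hs).ne'
  have hanti : AntitoneOn (fun s => G s / ψ s) (Ioo 0 b) := by
    refine antitoneOn_of_deriv_nonpos (convex_Ioo 0 b)
      (fun s hs => (hderiv s hs).continuousAt.continuousWithinAt)
      (fun s hs => (hderiv s (interior_subset hs)).differentiableAt.differentiableWithinAt)
      fun s hs => ?_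
    rw [interior_Ioo] at hs
    rw [(hderiv s hs).deriv]
    exact div_nonpos_of_nonpos_of_nonneg (sub_nonpos.2 (hcmp s hs)) (sq_nonneg _)
  have h0 : (0 : ℝ) ∈ Ico 0 b := ⟨le_rfl, ht.1.trans ht.2⟩
  have hlim : Tendsto (fun s => G s / ψ s) (𝓝[>] 0) (𝓝 1) := by
    have := ((hG 0 h0).tendsto_slope_zero_right).div (hψ 0 h0).tendsto_slope_zero_right hψ'0
    rw [hG'0, div_self hψ'0] at this
    refine this.congr' (eventually_nhdsWithin_of_forall fun s hs => ?_)
    simp only [zero_add, hG0, hψ0, sub_zero, smul_eq_mul]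
    exact mul_div_mul_left _ _ (inv_ne_zero (ne_of_gt hs))
  have hle : G t / ψ t ≤ 1 := by
    refine ge_of_tendsto hlim ?_
    filter_upwards [Ioo_mem_nhdsGT ht.1] with s hs
    exact hanti ⟨hs.1, hs.2.trans ht.2⟩ ht hs.2.le
  rwa [div_le_one (hψpos t ht)] at hle

section Herbst

variable {α : Type*} [Fintype α] {w : α → ℝ}

theorem hasDerivAt_mean_exp (g : α → ℝ) (s : ℝ) :
    HasDerivAt (fun s => mean w fun a => exp (s * g a)) (mean w fun a => g a * exp (s * g a)) s :=
  (HasDerivAt.fun_sum (u := univ) fun a _ =>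
    ((hasDerivAt_mul_const (g a)).exp).const_mul (w a)).congr_deriv
      (sum_congr rfl fun a _ => by ring)

theorem ent_exp_eq (g : α → ℝ) (s : ℝ) :
    ent w (fun a => exp (s * g a)) = s * (mean w fun a => g a * exp (s * g a))
      - (mean w fun a => exp (s * g a)) * log (mean w fun a => exp (s * g a)) := by
  rw [ent, ← mean_const_mul]
  simp only [log_exp]
  congr 2
  ext a
  ring

theorem hasDerivAt_rate {s : ℝ} (hs : 1 - 5/6*s ≠ 0) :
    HasDerivAt (fun s => s + s^2/(1 - 5/6*s)) (1 + (2*s - 5/6*s^2)/(1 - 5/6*s)^2) s := by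
  have hd : HasDerivAt (fun s : ℝ => 1 - 5/6*s) (-(5/6)) s := by
    simpa using ((hasDerivAt_id s).const_mul (5/6 : ℝ)).const_sub 1
  refine ((hasDerivAt_id s).add ((hasDerivAt_pow 2 s).div hd hs)).congr_deriv ?_
  field_simp
  ring

theorem log_mean_exp_le (hw : w ∈ stdSimplex ℝ α) {g : α → ℝ} (hg : ∀ a, 0 ≤ g a)
    (hm : 0 < mean w g)
    (hent : ∀ s, 0 < s → ent w (fun a => exp (s * g a))
      ≤ 2 * (exp (-s) + s - 1) * mean w (fun a => g a * exp (s * g a)))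
    {t : ℝ} (ht0 : 0 < t) (ht : t < 6/5) :
    log (mean w fun a => exp (t * g a)) ≤ mean w g * (t + t^2/(1 - 5/6*t)) := by
  set F := fun s => mean w fun a => exp (s * g a)
  set F' := fun s => mean w fun a => g a * exp (s * g a)
  have hFpos : ∀ s, 0 < F s := fun s => mean_pos hw fun _ => exp_pos _
  have hF0 : F 0 = 1 := by simp [F, mean_const hw.2]
  refine le_of_deriv_mul_le_mul_deriv (G' := fun s => F' s / F s)
    (fun s _ => (hasDerivAt_mean_exp g s).log (hFpos s).ne')
    (fun s hs => (hasDerivAt_rate (by linarith [hs.2])).const_mul (mean w g))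
    (by simp [mean_const hw.2]) (by simp) (by simp [hF0, F']) (by simpa using hm.ne')
    (fun s hs => by
      have hs0 := hs.1
      have hd : 0 < 1 - 5/6*s := by linarith [hs.2]
      positivity)
    (fun s hs => ?_) ⟨ht0, ht⟩
  have hG' : 0 ≤ F' s / F s :=
    div_nonneg (mean_nonneg hw.1 fun a => mul_nonneg (hg a) (exp_pos _).le) (hFpos s).le
  have hu : (2 - s - 2 * exp (-s)) * (F' s / F s) ≤ log (F s) := by
    have := (ent_exp_eq g s).symm.trans_le (hent s hs.1)
    rw [mul_div_assoc', div_le_iff₀ (hFpos s)]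
    linarith
  calc F' s / F s * (mean w g * (s + s^2/(1 - 5/6*s)))
      ≤ F' s / F s * (mean w g * ((2 - s - 2 * exp (-s)) *
          (1 + (2*s - 5/6*s^2)/(1 - 5/6*s)^2))) :=
        mul_le_mul_of_nonneg_left (mul_le_mul_of_nonneg_left
          (rate_le_mul_deriv_rate hs.1 hs.2) hm.le) hG'
    _ = (2 - s - 2 * exp (-s)) * (F' s / F s) *
          (mean w g * (1 + (2*s - 5/6*s^2)/(1 - 5/6*s)^2)) := by ring
    _ ≤ log (F s) * (mean w g * (1 + (2*s - 5/6*s^2)/(1 - 5/6*s)^2)) :=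
        mul_le_mul_of_nonneg_right hu (mul_nonneg hm.le (deriv_rate_nonneg hs.1.le hs.2))

end Herbst

section Independent

open MeasureTheory ProbabilityTheory

variable {Ω ι : Type*} [MeasurableSpace Ω] {μ : Measure Ω} [IsProbabilityMeasure μ]
  {X : ι → Ω → Bool}

theorem measureReal_preimage_mem_stdSimplex (hXm : ∀ i, Measurable (X i)) (i : ι) :
    (fun b => μ.real (X i ⁻¹' {b})) ∈ stdSimplex ℝ Bool :=
  ⟨fun _ => measureReal_nonneg, by
    rw [sum_measureReal_preimage_singleton _ fun b _ => hXm i (measurableSet_singleton b),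
      coe_univ, Set.preimage_univ, probReal_univ]⟩

variable [Fintype ι]

theorem integrable_comp_of_finite (hXm : ∀ i, Measurable (X i)) (φ : (ι → Bool) → ℝ) :
    Integrable (fun ω => φ fun i => X i ω) μ :=
  Integrable.of_finite.comp_measurable (measurable_pi_lambda _ hXm)

theorem integral_comp_eq_mean [DecidableEq ι] (hXm : ∀ i, Measurable (X i))
    (hXind : iIndepFun X μ) (φ : (ι → Bool) → ℝ) :
    ∫ ω, φ (fun i => X i ω) ∂μ = mean (weight fun i b => μ.real (X i ⁻¹' {b})) φ := by
  have hvec : Measurable fun ω i => X i ω := measurable_pi_lambda _ hXm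
  rw [← integral_map hvec.aemeasurable (measurable_of_finite φ).aestronglyMeasurable,
    integral_fintype Integrable.of_finite]
  refine sum_congr rfl fun x _ => ?_
  have hcyl : (fun ω i => X i ω) ⁻¹' {x} = ⋂ i ∈ (univ : Finset ι), X i ⁻¹' {x i} := by
    ext ω
    simp [funext_iff]
  rw [smul_eq_mul, map_measureReal_apply hvec (measurableSet_singleton x), hcyl, measureReal_def,
    hXind.measure_inter_preimage_eq_mul _ fun i _ => measurableSet_singleton (x i),
    ENNReal.toReal_prod]
  rfl

theorem measureReal_ge_le_of_isSelfBounding [DecidableEq ι] (hXm : ∀ i, Measurable (X i))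
    (hXind : iIndepFun X μ) {g : (ι → Bool) → ℝ} (hg0 : ∀ x, 0 ≤ g x)
    (hg : IsSelfBounding 2 g) {δ : ℝ} (hδ : 0 < δ) :
    μ.real {ω | (1 + δ) * ∫ ω', g (fun i => X i ω') ∂μ ≤ g fun i => X i ω}
      ≤ exp (-δ ^ 2 * (∫ ω', g (fun i => X i ω') ∂μ) / (4 + 5 * δ / 3)) := by
  have hp := measureReal_preimage_mem_stdSimplex (μ := μ) hXm
  have hw := weight_mem_stdSimplex hp
  rw [integral_comp_eq_mean hXm hXind]
  rcases (mean_nonneg hw.1 hg0).eq_or_lt with hm | hm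
  · simp only [← hm, mul_zero, zero_div, exp_zero]
    exact measureReal_le_one
  set m := mean (weight fun i b => μ.real (X i ⁻¹' {b})) g
  set t := δ / (2 + 5/6*δ) with ht_def
  have ht0 : 0 < t := by positivity
  have ht : t < 6/5 := by rw [div_lt_iff₀ (by positivity)]; linarith
  have hmgf : mgf (fun ω => g fun i => X i ω) μ t
      = mean (weight fun i b => μ.real (X i ⁻¹' {b})) (fun x => exp (t * g x)) :=
    integral_comp_eq_mean hXm hXind fun x => exp (t * g x)
  have hlog := log_mean_exp_le hw hg0 hm (fun s _ => ent_exp_le_of_isSelfBounding hp hg s) ht0 ht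
  calc _ ≤ exp (-t * ((1 + δ) * m)) * mgf (fun ω => g fun i => X i ω) μ t :=
        measure_ge_le_exp_mul_mgf _ ht0.le (integrable_comp_of_finite hXm fun x => exp (t * g x))
    _ = exp (-t * ((1 + δ) * m) + log (mean (weight fun i b => μ.real (X i ⁻¹' {b}))
          fun x => exp (t * g x))) := by
        rw [hmgf, exp_add, exp_log (mean_pos hw fun _ => exp_pos _)]
    _ ≤ exp (-t * ((1 + δ) * m) + m * (t + t ^ 2 / (1 - 5/6*t))) := by gcongr
    _ = exp (-δ ^ 2 * m / (4 + 5 * δ / 3)) := by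
        have hδ' : 2 + 5/6*δ ≠ 0 := by positivity
        have hd : 1 - 5/6*t = 2 / (2 + 5/6*δ) := by rw [ht_def]; field_simp; ring
        rw [hd, ht_def]
        congr 1
        field_simp
        ring

end Independent

end SubmodularTail

open MeasureTheory ProbabilityTheory Finset

/-- Upper tail for non-negative (not necessarily monotone) submodular set functions
with marginal values in `[−1,1]`, evaluated on independent `{0,1}`-valued random
variables: `Pr[Z ≥ (1+δ) E Z] ≤ e^{−δ² E Z / (4 + 5δ/3)}` for every `δ > 0`. -/
theorem nonmonotone_submodular_upper_tail
    {Ω : Type*} [MeasurableSpace Ω] (μ : Measure Ω) [IsProbabilityMeasure μ]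
    {n : ℕ} (X : Fin n → Ω → Bool) (hXm : ∀ i, Measurable (X i))
    (hXind : iIndepFun X μ)
    (f : Finset (Fin n) → ℝ)
    (hnonneg : ∀ A : Finset (Fin n), 0 ≤ f A)
    (hsubmod : ∀ A B : Finset (Fin n), f (A ∪ B) + f (A ∩ B) ≤ f A + f B)
    (hmarg : ∀ (A : Finset (Fin n)) (j : Fin n), |f (insert j A) - f A| ≤ 1)
    (Z : Ω → ℝ) (hZ : ∀ ω, Z ω = f (univ.filter fun i => X i ω = true))
    (δ : ℝ) (hδ : 0 < δ) :
    (μ {ω | (1 + δ) * (∫ ω', Z ω' ∂μ) ≤ Z ω}).toReal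
      ≤ Real.exp (-δ ^ 2 * (∫ ω', Z ω' ∂μ) / (4 + 5 * δ / 3)) := by
  obtain rfl : Z = fun ω => f (SubmodularTail.trueSet fun i => X i ω) := funext hZ
  exact SubmodularTail.measureReal_ge_le_of_isSelfBounding hXm hXind (fun _ => hnonneg _)
    (SubmodularTail.isSelfBounding_comp_trueSet hsubmod hnonneg hmarg) hδ
end

section
/- Let X_1,…,X_n ∈ {0,1} be independent random variables and let f : 2^[n] → ℝ₊ be a non-negative submodular set function (not necessarily monotone) with all marginal values in [−1,1], and set Z = f(X_1,…,X_n). Then for every δ with 0 < δ ≤ 1, Pr[Z ≤ (1−δ) E[Z]] ≤ e^{−δ² E[Z] / 4}. -/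
/-!
Entropy method (Boucheron–Lugosi–Massart). Write `Z = g(X)` and let `Z_j` be the smaller of the
two values of `g` obtained by setting the `j`-th coordinate to `true` or `false`. Tensorization of
entropy over the independent coordinates gives the modified logarithmic Sobolev inequality
`Ent(e^{λZ}) ≤ φ(-λ) E[e^{λZ} Σ_j (Z - Z_j)]` with `φ(x) = eˣ - x - 1`, as soon as
`0 ≤ Z - Z_j ≤ 1`, which is what bounded marginals give. Submodularity and non-negativity make
`Z` self-bounding, `Σ_j (Z - Z_j) ≤ 2Z`, so for `λ = s ∈ [-u, 0]` the entropy is at most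
`(1 + u) s² E[Z e^{sZ}]`. Herbst's argument turns this into
`log E[e^{-uZ}] ≤ -u E[Z] / (1 + u + u²)`, and Chernoff's bound with `u = δ/2` finishes.
-/

open MeasureTheory ProbabilityTheory Finset

lemma Finset.sum_max_zero_le {β : Type*} {s : Finset β} {d : β → ℝ} {K : ℝ}
    (h : ∀ B ⊆ s, ∑ j ∈ B, d j ≤ K) : ∑ j ∈ s, max (d j) 0 ≤ K := by
  have : ∑ j ∈ s, max (d j) 0 = ∑ j ∈ s with 0 < d j, d j := by
    rw [sum_filter]
    refine sum_congr rfl fun j _ => ?_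
    split_ifs with h
    · exact max_eq_left h.le
    · exact max_eq_right (not_lt.1 h)
  exact this ▸ h _ (filter_subset _ _)

def IsSubmodular {β : Type*} [DecidableEq β] (f : Finset β → ℝ) : Prop :=
  ∀ A B, f (A ∪ B) + f (A ∩ B) ≤ f A + f B

namespace IsSubmodular

variable {β : Type*} [DecidableEq β] {f : Finset β → ℝ}

lemma sub_le_sub (hf : IsSubmodular f) {S T : Finset β} (hST : S ⊆ T) {j : β} (hj : j ∉ T) :
    f (insert j T) - f T ≤ f (insert j S) - f S := by
  have h := hf (insert j S) T
  rw [insert_union, union_eq_right.2 hST, insert_inter_of_notMem hj,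
    inter_eq_left.2 hST] at h
  linarith

lemma sum_sub_erase_le (hf : IsSubmodular f) {A B : Finset β} (hBA : B ⊆ A) :
    ∑ j ∈ B, (f A - f (A.erase j)) ≤ f A - f (A \ B) := by
  induction B using Finset.induction_on with
  | empty => simp
  | insert b B hb ih =>
    have hbA : b ∈ A := hBA (mem_insert_self b B)
    have hdim : f A - f (A.erase b) ≤ f (A \ B) - f ((A \ B).erase b) := by
      have h := hf.sub_le_sub (erase_subset_erase b (sdiff_subset (t := B))) (notMem_erase b A)
      rwa [insert_erase hbA, insert_erase (mem_sdiff.2 ⟨hbA, hb⟩)] at h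
    rw [sum_insert hb, sdiff_insert]
    linarith [ih ((subset_insert b B).trans hBA)]

variable [Fintype β]

lemma comp_compl (hf : IsSubmodular f) : IsSubmodular fun A => f Aᶜ := fun A B => by
  simpa only [compl_union, compl_inter, add_comm] using hf Aᶜ Bᶜ

lemma sum_sub_insert_le (hf : IsSubmodular f) {A C : Finset β} (hCA : Disjoint C A) :
    ∑ j ∈ C, (f A - f (insert j A)) ≤ f A - f (A ∪ C) := by
  simpa [compl_erase, sdiff_eq_inter_compl, compl_inter, union_comm] using
    hf.comp_compl.sum_sub_erase_le (subset_compl_iff_disjoint_right.2 hCA)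

/-- Non-negative submodular functions are `(2, 0)`-self-bounding. -/
lemma sum_sub_min_le (hf : IsSubmodular f) (hf0 : ∀ A, 0 ≤ f A) (A : Finset β) :
    ∑ j, (f A - min (f (insert j A)) (f (A.erase j))) ≤ 2 * f A := by
  rw [← sum_add_sum_compl A, two_mul]
  refine _root_.add_le_add ?_ ?_
  · calc ∑ j ∈ A, (f A - min (f (insert j A)) (f (A.erase j)))
        = ∑ j ∈ A, max (f A - f (A.erase j)) 0 := sum_congr rfl fun j hj => by
          rw [insert_eq_self.2 hj, ← max_sub_sub_left, sub_self, max_comm]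
      _ ≤ f A := sum_max_zero_le fun B hB => by
          linarith [hf.sum_sub_erase_le hB, hf0 (A \ B)]
  · calc ∑ j ∈ Aᶜ, (f A - min (f (insert j A)) (f (A.erase j)))
        = ∑ j ∈ Aᶜ, max (f A - f (insert j A)) 0 := sum_congr rfl fun j hj => by
          rw [erase_eq_self.2 (mem_compl.1 hj), ← max_sub_sub_left, sub_self]
      _ ≤ f A := sum_max_zero_le fun B hB => by
          linarith [hf.sum_sub_insert_le (subset_compl_iff_disjoint_right.1 hB), hf0 (A ∪ B)]

end IsSubmodular

lemma le_min_insert_erase_add_one {β : Type*} [DecidableEq β] {f : Finset β → ℝ}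
    (hmarg : ∀ A j, |f (insert j A) - f A| ≤ 1) (A : Finset β) (j : β) :
    f A ≤ min (f (insert j A)) (f (A.erase j)) + 1 := by
  have hers : f A - 1 ≤ f (A.erase j) := by
    by_cases hj : j ∈ A
    · have := abs_le.1 (hmarg (A.erase j) j)
      rw [insert_erase hj] at this
      linarith
    · rw [erase_eq_self.2 hj]
      linarith
  rw [← min_add_add_right]
  exact le_min (by linarith [(abs_le.1 (hmarg A j)).1]) (by linarith)

namespace SelfBounding

open Real

noncomputable def φ (x : ℝ) : ℝ := exp x - x - 1

lemma φ_nonneg (x : ℝ) : 0 ≤ φ x := by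
  have := add_one_le_exp x
  unfold φ; linarith

lemma φ_mul_le {s : ℝ} (hs0 : 0 ≤ s) (hs1 : s ≤ 1) (x : ℝ) : φ (s * x) ≤ s * φ x := by
  have h := convexOn_exp.2 (Set.mem_univ 0) (Set.mem_univ x) (sub_nonneg.2 hs1) hs0 (by ring)
  simp only [smul_eq_mul, mul_zero, zero_add, exp_zero, mul_one] at h
  unfold φ; linarith

lemma two_mul_φ_le {t : ℝ} (ht0 : 0 ≤ t) (ht1 : t ≤ 1) : 2 * φ t ≤ t ^ 2 + t ^ 3 := by
  have h := exp_bound' ht0 ht1 (n := 3) (by norm_num)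
  norm_num [Finset.sum_range_succ, Nat.factorial] at h
  unfold φ; nlinarith [pow_nonneg ht0 3]

section Entropy

variable {ι κ : Type*} [Fintype ι] [Fintype κ]

noncomputable def ent (w h : ι → ℝ) : ℝ :=
  ∑ x, w x * (h x * log (h x)) - (∑ x, w x * h x) * log (∑ x, w x * h x)

lemma sum_mul_pos_of_mem_stdSimplex {w h : ι → ℝ} (hw : w ∈ stdSimplex ℝ ι)
    (hh : ∀ x, 0 < h x) : 0 < ∑ x, w x * h x := by
  obtain ⟨i, -, hi⟩ := exists_lt_of_sum_lt (f := 0) (g := w) (s := univ) (by simp [hw.2])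
  exact sum_pos' (fun x _ => mul_nonneg (hw.1 x) (hh x).le) ⟨i, mem_univ _, mul_pos hi (hh i)⟩

lemma mul_le_mul_log_sub_add_exp {x : ℝ} (hx : 0 < x) (y : ℝ) :
    x * y ≤ x * log x - x + exp y := by
  have h := add_one_le_exp (y - log x)
  rw [exp_sub, exp_log hx, le_div_iff₀ hx] at h
  linarith

lemma sum_mul_le_ent {w h v : ι → ℝ} (hw : ∀ x, 0 ≤ w x) (hh : ∀ x, 0 < h x)
    (hm : 0 < ∑ x, w x * h x) (hv : ∑ x, w x * exp (v x) ≤ 1) :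
    ∑ x, w x * (h x * v x) ≤ ent w h := by
  set m := ∑ x, w x * h x
  have hterm : ∀ x, w x * (h x * v x) + w x * h x * log m
      ≤ w x * (h x * log (h x)) - w x * h x + m * (w x * exp (v x)) := by
    intro x
    have := mul_le_mul_of_nonneg_left
      (mul_le_mul_log_sub_add_exp (hh x) (v x + log m)) (hw x)
    rw [exp_add, exp_log hm] at this
    linarith
  have hsum := sum_le_sum fun x (_ : x ∈ univ) => hterm x
  simp only [sum_add_distrib, sum_sub_distrib, ← sum_mul, ← mul_sum] at hsum
  unfold ent
  nlinarith [mul_le_mul_of_nonneg_left hv hm.le]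

lemma ent_le_sum {w h : ι → ℝ} (hw : w ∈ stdSimplex ℝ ι) (hh : ∀ x, 0 < h x)
    {t : ℝ} (ht : 0 < t) :
    ent w h ≤ ∑ x, w x * (h x * log (h x) - h x * log t - h x + t) := by
  set m := ∑ x, w x * h x
  have hm : 0 < m := sum_mul_pos_of_mem_stdSimplex hw hh
  have hlog : m * log t - m * log m ≤ t - m := by
    have := mul_le_mul_of_nonneg_left (log_le_sub_one_of_pos (div_pos ht hm)) hm.le
    rw [log_div ht.ne' hm.ne'] at this
    calc m * log t - m * log m = m * (log t - log m) := by ring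
      _ ≤ m * (t / m - 1) := this
      _ = t - m := by field_simp
  have hrhs : ∑ x, w x * (h x * log (h x) - h x * log t - h x + t)
      = ∑ x, w x * (h x * log (h x)) - m * log t - m + t := by
    simp only [mul_add, mul_sub, sum_add_distrib, sum_sub_distrib, ← mul_assoc, ← sum_mul,
      hw.2, m]
    ring
  rw [hrhs]
  unfold ent
  linarith

lemma ent_sum_mul_le {p : κ → ℝ} (hp : p ∈ stdSimplex ℝ κ) {c : ι → ℝ}
    (hc : c ∈ stdSimplex ℝ ι) {A : ι → κ → ℝ} (hA : ∀ i k, 0 < A i k) :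
    ent p (fun k => ∑ i, c i * A i k) ≤ ∑ i, c i * ent p (A i) := by
  set S := fun k => ∑ i, c i * A i k
  have hS : ∀ k, 0 < S k := fun k => sum_mul_pos_of_mem_stdSimplex hc fun i => hA i k
  set M := ∑ k, p k * S k
  have hM : 0 < M := sum_mul_pos_of_mem_stdSimplex hp hS
  set v := fun k => log (S k) - log M
  have hv : ∑ k, p k * exp (v k) = 1 := by
    simp only [v, exp_sub, exp_log (hS _), exp_log hM, mul_div_assoc', ← sum_div]
    exact div_self hM.ne'
  have hent : ent p S = ∑ k, p k * (S k * v k) := by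
    simp only [ent, v, mul_sub, sum_sub_distrib, sum_mul, mul_assoc, M]
  have hswap : ∑ k, p k * (S k * v k) = ∑ i, c i * ∑ k, p k * (A i k * v k) := by
    simp only [S, sum_mul, mul_sum]
    rw [sum_comm]
    exact sum_congr rfl fun i _ => sum_congr rfl fun k _ => by ring
  rw [hent, hswap]
  exact sum_le_sum fun i _ => mul_le_mul_of_nonneg_left
    (sum_mul_le_ent hp.1 (hA i) (sum_mul_pos_of_mem_stdSimplex hp (hA i)) hv.le) (hc.1 i)

lemma ent_exp_mul_le {p : κ → ℝ} (hp : p ∈ stdSimplex ℝ κ) (l : ℝ)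
    {a : κ → ℝ} {b : ℝ} (hb : ∀ k, b ≤ a k) (hb1 : ∀ k, a k ≤ b + 1) :
    ent p (fun k => exp (l * a k)) ≤ φ (-l) * ∑ k, p k * (exp (l * a k) * (a k - b)) := by
  refine (ent_le_sum hp (fun k => exp_pos _) (exp_pos (l * b))).trans ?_
  rw [mul_sum]
  refine sum_le_sum fun k _ => ?_
  have hterm : exp (l * a k) * log (exp (l * a k)) - exp (l * a k) * log (exp (l * b))
      - exp (l * a k) + exp (l * b) = exp (l * a k) * φ ((a k - b) * -l) := by
    rw [log_exp, log_exp, φ, mul_sub, mul_sub, ← exp_add]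
    ring_nf
  have hφ := φ_mul_le (sub_nonneg.2 (hb k)) (by linarith [hb1 k]) (-l)
  rw [hterm]
  nlinarith [mul_le_mul_of_nonneg_left hφ (mul_nonneg (hp.1 k) (exp_pos (l * a k)).le)]

end Entropy

section Tensorization

variable {α : Type*} [Fintype α] {n : ℕ}

noncomputable def prodWeight (ν : Fin n → α → ℝ) (x : Fin n → α) : ℝ := ∏ i, ν i (x i)

lemma prodWeight_mem_stdSimplex {ν : Fin n → α → ℝ} (hν : ∀ i, ν i ∈ stdSimplex ℝ α) :
    prodWeight ν ∈ stdSimplex ℝ (Fin n → α) := by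
  classical
  refine ⟨fun x => prod_nonneg fun i _ => (hν i).1 _, ?_⟩
  have h := prod_univ_sum (fun _ : Fin n => (univ : Finset α)) ν
  simp only [(hν _).2, prod_const_one, Fintype.piFinset_univ] at h
  exact h.symm

lemma sum_prodWeight_mul_cons (ν : Fin (n + 1) → α → ℝ) (F : (Fin (n + 1) → α) → ℝ) :
    ∑ x, prodWeight ν x * F x
      = ∑ a, ν 0 a * ∑ y, prodWeight (Fin.tail ν) y * F (Fin.cons a y) := by
  rw [← (Fin.consEquiv fun _ => α).sum_comp, Fintype.sum_prod_type]
  simp only [prodWeight, Fin.consEquiv_apply, Fin.prod_univ_succ, Fin.cons_zero, Fin.cons_succ,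
    mul_assoc, Fin.tail, mul_sum]
  rfl

/-- Resampling one coordinate from its own law leaves a product law unchanged. -/
lemma sum_prodWeight_mul_sum_update {ν : Fin n → α → ℝ} (hν : ∀ i, ν i ∈ stdSimplex ℝ α)
    (j : Fin n) (F : (Fin n → α) → ℝ) :
    ∑ x, prodWeight ν x * ∑ a, ν j a * F (Function.update x j a)
      = ∑ x, prodWeight ν x * F x := by
  induction n with
  | zero => exact j.elim0
  | succ n ih =>
    have hν' : ∀ i, Fin.tail ν i ∈ stdSimplex ℝ α := fun i => hν i.succ
    simp only [sum_prodWeight_mul_cons]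
    cases j using Fin.cases with
    | zero =>
      simp only [Fin.update_cons_zero]
      rw [← sum_mul, (hν 0).2, one_mul]
      simp only [mul_sum]
      rw [sum_comm]
      exact sum_congr rfl fun _ _ => sum_congr rfl fun _ _ => by ring
    | succ j =>
      simp only [← Fin.cons_update]
      exact sum_congr rfl fun a _ => congrArg (ν 0 a * ·) (ih hν' j fun y => F (Fin.cons a y))

lemma ent_prodWeight_cons (ν : Fin (n + 1) → α → ℝ) (h : (Fin (n + 1) → α) → ℝ) :
    ent (prodWeight ν) h
      = ent (ν 0) (fun a => ∑ y, prodWeight (Fin.tail ν) y * h (Fin.cons a y))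
        + ∑ a, ν 0 a * ent (prodWeight (Fin.tail ν)) (fun y => h (Fin.cons a y)) := by
  simp only [ent, sum_prodWeight_mul_cons, mul_sub, sum_sub_distrib]
  ring

theorem ent_prodWeight_le {ν : Fin n → α → ℝ} (hν : ∀ i, ν i ∈ stdSimplex ℝ α)
    {h : (Fin n → α) → ℝ} (hh : ∀ x, 0 < h x) :
    ent (prodWeight ν) h
      ≤ ∑ j, ∑ x, prodWeight ν x * ent (ν j) (fun a => h (Function.update x j a)) := by
  induction n with
  | zero => simp [ent, prodWeight]
  | succ n ih =>
    have hν' : ∀ i, Fin.tail ν i ∈ stdSimplex ℝ α := fun i => hν i.succ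
    rw [ent_prodWeight_cons, Fin.sum_univ_succ]
    refine _root_.add_le_add ?_ ?_
    · calc ent (ν 0) (fun a => ∑ y, prodWeight (Fin.tail ν) y * h (Fin.cons a y))
          ≤ ∑ y, prodWeight (Fin.tail ν) y * ent (ν 0) (fun a => h (Fin.cons a y)) :=
            ent_sum_mul_le (hν 0) (prodWeight_mem_stdSimplex hν') fun _ _ => hh _
        _ = _ := by
            simp only [sum_prodWeight_mul_cons, Fin.update_cons_zero, ← sum_mul, (hν 0).2,
              one_mul]
    · simp only [sum_prodWeight_mul_cons, ← Fin.cons_update]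
      rw [sum_comm]
      refine sum_le_sum fun a _ => ?_
      rw [← mul_sum]
      exact mul_le_mul_of_nonneg_left (ih hν' fun _ => hh _) ((hν 0).1 a)

theorem ent_exp_prodWeight_le {ν : Fin n → α → ℝ} (hν : ∀ i, ν i ∈ stdSimplex ℝ α)
    {g : (Fin n → α) → ℝ} {low : Fin n → (Fin n → α) → ℝ}
    (hlow : ∀ j x a, low j (Function.update x j a) = low j x)
    (hle : ∀ j x, low j x ≤ g x) (hle1 : ∀ j x, g x ≤ low j x + 1) (l : ℝ) :
    ent (prodWeight ν) (fun x => exp (l * g x))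
      ≤ φ (-l) * ∑ x, prodWeight ν x * (exp (l * g x) * ∑ j, (g x - low j x)) := by
  have hW := prodWeight_mem_stdSimplex hν
  have hresample : ∀ j, ∑ x, prodWeight ν x * ∑ a, ν j a *
        (exp (l * g (Function.update x j a)) * (g (Function.update x j a) - low j x))
      = ∑ x, prodWeight ν x * (exp (l * g x) * (g x - low j x)) := fun j => by
    simpa only [hlow] using
      sum_prodWeight_mul_sum_update hν j fun y => exp (l * g y) * (g y - low j y)
  calc ent (prodWeight ν) (fun x => exp (l * g x))
      ≤ ∑ j, ∑ x, prodWeight ν x * ent (ν j) (fun a => exp (l * g (Function.update x j a))) :=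
        ent_prodWeight_le hν fun _ => exp_pos _
    _ ≤ ∑ j, ∑ x, prodWeight ν x * (φ (-l) * ∑ a, ν j a *
          (exp (l * g (Function.update x j a)) * (g (Function.update x j a) - low j x))) :=
        sum_le_sum fun j _ => sum_le_sum fun x _ => mul_le_mul_of_nonneg_left
          (ent_exp_mul_le (hν j) l (fun a => hlow j x a ▸ hle j _)
            (fun a => hlow j x a ▸ hle1 j _)) (hW.1 x)
    _ = φ (-l) * ∑ x, prodWeight ν x * (exp (l * g x) * ∑ j, (g x - low j x)) := by
        simp only [mul_left_comm _ (φ (-l)), ← mul_sum, hresample]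
        rw [sum_comm]
        simp only [mul_sum]

end Tensorization

section Herbst

open Filter Topology

/-- Herbst's argument: the hypothesis says exactly that `c G(s) - G(s)/s` is nondecreasing
on `[-u, 0]`. -/
theorem herbst_bound {G G' : ℝ → ℝ} (hG : ∀ s, HasDerivAt G (G' s) s) (hG0 : G 0 = 0)
    {c u : ℝ} (hu : 0 < u)
    (h : ∀ s ∈ Set.Ioo (-u) 0, s * G' s - G s ≤ c * s ^ 2 * G' s) :
    G (-u) * (1 + c * u) ≤ -u * G' 0 := by
  set Ψ := fun s => c * G s - dslope G 0 s
  have hGcont : Continuous G := continuous_iff_continuousAt.2 fun s => (hG s).continuousAt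
  have hcont : ContinuousOn Ψ (Set.Icc (-u) 0) := by
    have hd : ContinuousOn (dslope G 0) Set.univ :=
      (continuousOn_dslope univ_mem).2 ⟨hGcont.continuousOn, (hG 0).differentiableAt⟩
    exact ((continuous_const.mul hGcont).continuousOn.sub hd).mono (Set.subset_univ _)
  have hderiv : ∀ s ∈ Set.Ioo (-u) 0,
      HasDerivAt Ψ (c * G' s - (G' s * s - G s * 1) / s ^ 2) s := by
    intro s hs
    have hs0 : s ≠ 0 := hs.2.ne
    have heq : dslope G 0 =ᶠ[𝓝 s] fun t => G t / t := by
      filter_upwards [dslope_eventuallyEq_slope_of_ne G hs0] with t ht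
      rw [ht, slope_def_field, hG0, sub_zero, sub_zero]
    exact ((hG s).const_mul c).sub (((hG s).div (hasDerivAt_id s) hs0).congr_of_eventuallyEq heq)
  have hmono : MonotoneOn Ψ (Set.Icc (-u) 0) := by
    refine monotoneOn_of_hasDerivWithinAt_nonneg (convex_Icc _ _) hcont
      (f' := fun s => c * G' s - (G' s * s - G s * 1) / s ^ 2) ?_ ?_ <;>
      rw [interior_Icc]
    · exact fun s hs => (hderiv s hs).hasDerivWithinAt
    · intro s hs
      have hs0 : s ≠ 0 := hs.2.ne
      rw [show c * G' s - (G' s * s - G s * 1) / s ^ 2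
          = (c * s ^ 2 * G' s - (s * G' s - G s)) / s ^ 2 by field_simp]
      exact div_nonneg (by linarith [h s hs]) (sq_nonneg s)
  have hΨ := hmono ⟨le_rfl, by linarith⟩ ⟨by linarith, le_rfl⟩ (by linarith)
  simp only [Ψ, dslope_same, (hG 0).deriv, hG0, mul_zero, zero_sub,
    dslope_of_ne G (neg_ne_zero.2 hu.ne'), slope_def_field, sub_zero] at hΨ
  rw [div_neg, sub_neg_eq_add] at hΨ
  have := mul_le_mul_of_nonneg_right hΨ hu.le
  rw [add_mul, div_mul_cancel₀ _ hu.ne'] at this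
  linarith

variable {ι : Type*} [Fintype ι]

theorem log_sum_exp_le_of_ent_le {w : ι → ℝ} (hw : w ∈ stdSimplex ℝ ι) (g : ι → ℝ)
    {c u : ℝ} (hu : 0 < u)
    (h : ∀ s ∈ Set.Ioo (-u) 0,
      ent w (fun x => exp (s * g x)) ≤ c * s ^ 2 * ∑ x, w x * (g x * exp (s * g x))) :
    log (∑ x, w x * exp (-u * g x)) * (1 + c * u) ≤ -u * ∑ x, w x * g x := by
  set F := fun s => ∑ x, w x * exp (s * g x)
  set F' := fun s => ∑ x, w x * (g x * exp (s * g x))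
  have hF : ∀ s, 0 < F s := fun s => sum_mul_pos_of_mem_stdSimplex hw fun _ => exp_pos _
  have hderiv : ∀ s, HasDerivAt F (F' s) s := fun s => by
    refine HasDerivAt.fun_sum fun x _ => ?_
    have := (((hasDerivAt_id s).mul_const (g x)).exp).const_mul (w x)
    simpa [mul_comm, mul_left_comm] using this
  have hent : ∀ s, ent w (fun x => exp (s * g x)) = s * F' s - F s * log (F s) := fun s => by
    simp only [ent, log_exp, F, F', mul_sum]
    exact congrArg (· - _) (sum_congr rfl fun x _ => by ring)
  have hF0 : F 0 = 1 := by simp [F, hw.2]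
  have := herbst_bound (G := fun s => log (F s)) (G' := fun s => F' s / F s)
    (fun s => (hderiv s).log (hF s).ne') (by simp [hF0]) hu fun s hs => by
      have hs := h s hs
      rw [hent] at hs
      rw [← sub_nonneg, show c * s ^ 2 * (F' s / F s) - (s * (F' s / F s) - log (F s))
          = (c * s ^ 2 * F' s - (s * F' s - F s * log (F s))) / F s by
        field_simp [(hF s).ne']]
      exact div_nonneg (by linarith) (hF s).le
  simpa [hF0, F, F'] using this

end Herbst

section Submodular

def trueSet {β : Type*} [Fintype β] (x : β → Bool) : Finset β := univ.filter fun i => x i = true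

variable {β : Type*} [Fintype β] [DecidableEq β]

lemma trueSet_update_true (x : β → Bool) (j : β) :
    trueSet (Function.update x j true) = insert j (trueSet x) := by
  ext i
  by_cases h : i = j <;> simp [trueSet, Function.update_apply, h]

lemma trueSet_update_false (x : β → Bool) (j : β) :
    trueSet (Function.update x j false) = (trueSet x).erase j := by
  ext i
  by_cases h : i = j <;> simp [trueSet, Function.update_apply, h]

variable {n : ℕ} {ν : Fin n → Bool → ℝ} {f : Finset (Fin n) → ℝ}

theorem ent_exp_submodular_le (hν : ∀ i, ν i ∈ stdSimplex ℝ Bool) (hf : IsSubmodular f)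
    (hf0 : ∀ A, 0 ≤ f A) (hmarg : ∀ A j, |f (insert j A) - f A| ≤ 1) (l : ℝ) :
    ent (prodWeight ν) (fun x => exp (l * f (trueSet x)))
      ≤ 2 * φ (-l) * ∑ x, prodWeight ν x * (f (trueSet x) * exp (l * f (trueSet x))) := by
  set low := fun j x =>
    min (f (trueSet (Function.update x j true))) (f (trueSet (Function.update x j false)))
  have hle : ∀ j x, low j x ≤ f (trueSet x) := fun j x => by
    cases h : x j
    · exact (min_le_right _ _).trans_eq (by rw [← h, Function.update_eq_self])
    · exact (min_le_left _ _).trans_eq (by rw [← h, Function.update_eq_self])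
  have hle1 : ∀ j x, f (trueSet x) ≤ low j x + 1 := fun j x => by
    simpa only [low, trueSet_update_true, trueSet_update_false] using
      le_min_insert_erase_add_one hmarg (trueSet x) j
  have hself : ∀ x, ∑ j, (f (trueSet x) - low j x) ≤ 2 * f (trueSet x) := fun x => by
    simpa only [low, trueSet_update_true, trueSet_update_false] using
      hf.sum_sub_min_le hf0 (trueSet x)
  refine (ent_exp_prodWeight_le hν (low := low) (by simp [low]) hle hle1 l).trans ?_
  calc φ (-l) * ∑ x, prodWeight ν x * (exp (l * f (trueSet x)) * ∑ j, (f (trueSet x) - low j x))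
      ≤ φ (-l) * ∑ x, prodWeight ν x * (exp (l * f (trueSet x)) * (2 * f (trueSet x))) :=
        mul_le_mul_of_nonneg_left (sum_le_sum fun x _ => mul_le_mul_of_nonneg_left
          (mul_le_mul_of_nonneg_left (hself x) (exp_pos _).le)
          ((prodWeight_mem_stdSimplex hν).1 x)) (φ_nonneg _)
    _ = _ := by
        simp only [mul_sum]
        exact sum_congr rfl fun x _ => by ring

theorem log_sum_exp_neg_submodular_le (hν : ∀ i, ν i ∈ stdSimplex ℝ Bool)
    (hf : IsSubmodular f) (hf0 : ∀ A, 0 ≤ f A) (hmarg : ∀ A j, |f (insert j A) - f A| ≤ 1)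
    {u : ℝ} (hu0 : 0 < u) (hu1 : u ≤ 1) :
    log (∑ x, prodWeight ν x * exp (-u * f (trueSet x))) * (1 + (1 + u) * u)
      ≤ -u * ∑ x, prodWeight ν x * f (trueSet x) := by
  refine log_sum_exp_le_of_ent_le (prodWeight_mem_stdSimplex hν) _ hu0 fun s hs => ?_
  have hφ : 2 * φ (-s) ≤ (1 + u) * s ^ 2 := by
    nlinarith [two_mul_φ_le (neg_nonneg.2 hs.2.le) (by linarith [hs.1]), sq_nonneg s, hs.1]
  refine (ent_exp_submodular_le hν hf hf0 hmarg s).trans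
    (mul_le_mul_of_nonneg_right hφ (sum_nonneg fun x _ => ?_))
  exact mul_nonneg ((prodWeight_mem_stdSimplex hν).1 x) (mul_nonneg (hf0 _) (exp_pos _).le)

end Submodular

section Probability

variable {Ω : Type*} [MeasurableSpace Ω] {μ : Measure Ω} [IsProbabilityMeasure μ]
  {α : Type*} [Fintype α] [MeasurableSpace α] [MeasurableSingletonClass α]

lemma law_mem_stdSimplex {Y : Ω → α} (hY : Measurable Y) :
    (fun a => (μ.map Y).real {a}) ∈ stdSimplex ℝ α := by
  have := Measure.isProbabilityMeasure_map (μ := μ) hY.aemeasurable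
  exact ⟨fun _ => measureReal_nonneg, by simp⟩

lemma integral_comp_eq_sum_prodWeight {n : ℕ} {X : Fin n → Ω → α} (hX : ∀ i, Measurable (X i))
    (hind : iIndepFun X μ) (G : (Fin n → α) → ℝ) :
    ∫ ω, G (fun i => X i ω) ∂μ = ∑ x, prodWeight (fun i a => (μ.map (X i)).real {a}) x * G x := by
  have hXv : Measurable fun ω i => X i ω := measurable_pi_lambda _ hX
  have := fun i => Measure.isProbabilityMeasure_map (μ := μ) (hX i).aemeasurable
  rw [← integral_map hXv.aemeasurable Integrable.of_finite.aestronglyMeasurable,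
    (iIndepFun_iff_map_fun_eq_pi_map fun i => (hX i).aemeasurable).1 hind,
    integral_fintype Integrable.of_finite]
  simp [prodWeight, measureReal_def, ENNReal.toReal_prod]

end Probability

lemma exp_mul_mul_le_of_log_mul_le {m u F : ℝ} (hm : 0 ≤ m) (hu : 0 ≤ u) (hF : 0 < F)
    (h : log F * (1 + (1 + u) * u) ≤ -u * m) :
    exp (u * ((1 - 2 * u) * m)) * F ≤ exp (-(2 * u) ^ 2 * m / 4) := by
  have hK : 0 < 1 + (1 + u) * u := by positivity
  -- `(1 - u) (1 + u + u²) = 1 - u³ ≤ 1`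
  have hL : log F ≤ -u * m * (1 - u) := by
    rw [← mul_le_mul_iff_of_pos_right hK]
    nlinarith [mul_nonneg (mul_nonneg hu hm) (pow_nonneg hu 3)]
  rw [← exp_log hF, ← exp_add]
  exact exp_le_exp.2 (by nlinarith)

end SelfBounding

/-- Lower tail for non-negative (not necessarily monotone) submodular set functions
with marginal values in `[−1,1]`, evaluated on independent `{0,1}`-valued random
variables: `Pr[Z ≤ (1−δ) E Z] ≤ e^{−δ² E Z / 4}` for every `0 < δ ≤ 1`. -/
theorem nonmonotone_submodular_lower_tail
    {Ω : Type*} [MeasurableSpace Ω] (μ : Measure Ω) [IsProbabilityMeasure μ]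
    {n : ℕ} (X : Fin n → Ω → Bool) (hXm : ∀ i, Measurable (X i))
    (hXind : iIndepFun X μ)
    (f : Finset (Fin n) → ℝ)
    (hnonneg : ∀ A : Finset (Fin n), 0 ≤ f A)
    (hsubmod : ∀ A B : Finset (Fin n), f (A ∪ B) + f (A ∩ B) ≤ f A + f B)
    (hmarg : ∀ (A : Finset (Fin n)) (j : Fin n), |f (insert j A) - f A| ≤ 1)
    (Z : Ω → ℝ) (hZ : ∀ ω, Z ω = f (univ.filter fun i => X i ω = true))
    (δ : ℝ) (hδ : 0 < δ) (hδ' : δ ≤ 1) :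
    (μ {ω | Z ω ≤ (1 - δ) * (∫ ω', Z ω' ∂μ)}).toReal
      ≤ Real.exp (-δ ^ 2 * (∫ ω', Z ω' ∂μ) / 4) := by
  open SelfBounding in
  obtain ⟨u, rfl⟩ : ∃ u, δ = 2 * u := ⟨δ / 2, by ring⟩
  have hu0 : 0 < u := by linarith
  obtain rfl : Z = fun ω => f (trueSet fun i => X i ω) := funext hZ
  set ν : Fin n → Bool → ℝ := fun i a => (μ.map (X i)).real {a}
  have hν : ∀ i, ν i ∈ stdSimplex ℝ Bool := fun i => law_mem_stdSimplex (hXm i)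
  have hW := prodWeight_mem_stdSimplex hν
  have hmean : ∫ ω, f (trueSet fun i => X i ω) ∂μ = ∑ x, prodWeight ν x * f (trueSet x) :=
    integral_comp_eq_sum_prodWeight hXm hXind fun x => f (trueSet x)
  have hmgf : mgf (fun ω => f (trueSet fun i => X i ω)) μ (-u)
      = ∑ x, prodWeight ν x * Real.exp (-u * f (trueSet x)) :=
    integral_comp_eq_sum_prodWeight hXm hXind fun x => Real.exp (-u * f (trueSet x))
  rw [hmean]
  calc (μ _).toReal ≤ Real.exp (- -u * ((1 - 2 * u) * _)) * mgf _ μ (-u) :=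
        measure_le_le_exp_mul_mgf _ (neg_nonpos.2 hu0.le)
          ((Integrable.of_finite (f := fun x => Real.exp (-u * f (trueSet x)))).comp_aemeasurable
            (measurable_pi_lambda _ hXm).aemeasurable)
    _ ≤ _ := by
        rw [hmgf, neg_neg]
        exact exp_mul_mul_le_of_log_mul_le (sum_nonneg fun x _ => mul_nonneg (hW.1 x) (hnonneg _))
          hu0.le (sum_mul_pos_of_mem_stdSimplex hW fun _ => Real.exp_pos _)
          (log_sum_exp_neg_submodular_le hν hsubmod hnonneg hmarg hu0 (by linarith))
end

section
/- Let n = m² for an integer m ≥ 3 and define f : 2^[n] → ℝ by f(S) = |S| if |S| < m; f(S) = m if m ≤ |S| ≤ (m² − m)/2; f(S) = m + |S| − (m² − m)/2 if (m² − m)/2 < |S| < (m² + m)/2; and f(S) = 2m if |S| ≥ (m² + m)/2. Then f is monotone with all marginal values in [0,1], and f is subadditive: f(A ∪ B) ≤ f(A) + f(B) for all A, B ⊆ [n]. -/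
/-!
The value `f S` depends only on `k = |S|`: with `a = (m² − m)/2`, it is
`g k = min k m + min (k − a) m`, the sum of two unit-slope ramps of height `m`, the second
starting only after the first has ended (`m ≤ a`, which is where `m ≥ 3` enters). Hence `g` is
monotone and `g (k + 1) ≤ g k + 1`, which gives monotonicity and the bounds on marginal values.
For subadditivity, `g (x + y) ≤ g x + g y`: if `x < m` then `g x = x` and the Lipschitz bound
gives `g (x + y) ≤ g y + x`; if `x, y ≥ m` then `g x + g y ≥ 2m`, the maximum of `g`.
-/

open Finset

/-- `k − a` is truncated subtraction, so the second ramp is `0` for `k ≤ a`. -/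
def twoRamp (m a k : ℕ) : ℕ := min k m + min (k - a) m

namespace twoRamp

variable {m a : ℕ}

theorem monotone : Monotone (twoRamp m a) := by
  intro x y h
  unfold twoRamp
  omega

theorem succ_le (hma : m ≤ a) (k : ℕ) : twoRamp m a (k + 1) ≤ twoRamp m a k + 1 := by
  unfold twoRamp
  omega

theorem add_le (hma : m ≤ a) (x y : ℕ) : twoRamp m a (x + y) ≤ twoRamp m a x + twoRamp m a y := by
  unfold twoRamp
  omega

end twoRamp

section CardFunction

variable {α : Type*} [DecidableEq α] {g : ℕ → ℕ}

theorem cast_card_insert_sub_le_one (hg : Monotone g) (hsucc : ∀ k, g (k + 1) ≤ g k + 1)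
    (A : Finset α) (j : α) : (g #(insert j A) : ℝ) - g #A ≤ 1 := by
  have : g #(insert j A) ≤ g #A + 1 := (hg (card_insert_le j A)).trans (hsucc _)
  rw [sub_le_iff_le_add']
  exact_mod_cast this

theorem cast_card_union_le (hg : Monotone g) (hadd : ∀ x y, g (x + y) ≤ g x + g y)
    (A B : Finset α) : (g #(A ∪ B) : ℝ) ≤ g #A + g #B := by
  have : g #(A ∪ B) ≤ g #A + g #B := (hg (card_union_le A B)).trans (hadd _ _)
  exact_mod_cast this

end CardFunction

theorem eq_twoRamp_card {α : Type*} {m a : ℕ} (hma : m ≤ a) (f : Finset α → ℝ)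
    (hf1 : ∀ S : Finset α, #S < m → f S = #S)
    (hf2 : ∀ S : Finset α, m ≤ #S → #S ≤ a → f S = m)
    (hf3 : ∀ S : Finset α, a < #S → #S < a + m → f S = (m : ℝ) + #S - (a : ℝ))
    (hf4 : ∀ S : Finset α, a + m ≤ #S → f S = 2 * m) (S : Finset α) :
    f S = twoRamp m a #S := by
  rcases lt_or_ge #S m with h1 | h1
  · rw [hf1 S h1, show twoRamp m a #S = #S by unfold twoRamp; omega]
  rcases le_or_gt #S a with h2 | h2
  · rw [hf2 S h1 h2, show twoRamp m a #S = m by unfold twoRamp; omega]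
  rcases lt_or_ge #S (a + m) with h3 | h3
  · rw [hf3 S h2 h3, show twoRamp m a #S = m + (#S - a) by unfold twoRamp; omega]
    push_cast [h2.le]
    ring
  · rw [hf4 S h3, show twoRamp m a #S = 2 * m by unfold twoRamp; omega]
    push_cast
    ring

theorem counterexample_monotone_lipschitz_subadditive_general
    (m : ℕ) (hm : 3 ≤ m) (n : ℕ)
    (f : Finset (Fin n) → ℝ)
    (hf1 : ∀ S : Finset (Fin n), S.card < m → f S = S.card)
    (hf2 : ∀ S : Finset (Fin n), m ≤ S.card → S.card ≤ (m ^ 2 - m) / 2 → f S = m)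
    (hf3 : ∀ S : Finset (Fin n), (m ^ 2 - m) / 2 < S.card →
      S.card < (m ^ 2 + m) / 2 →
      f S = (m : ℝ) + S.card - (((m ^ 2 - m) / 2 : ℕ) : ℝ))
    (hf4 : ∀ S : Finset (Fin n), (m ^ 2 + m) / 2 ≤ S.card → f S = 2 * m) :
    (∀ A B : Finset (Fin n), A ⊆ B → f A ≤ f B) ∧
    (∀ (A : Finset (Fin n)) (j : Fin n),
      0 ≤ f (insert j A) - f A ∧ f (insert j A) - f A ≤ 1) ∧
    (∀ A B : Finset (Fin n), f (A ∪ B) ≤ f A + f B) := by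
  have hsq : m ^ 2 = m * m := sq m
  have hmm : 3 * m ≤ m * m := Nat.mul_le_mul_right m hm
  have hma : m ≤ (m ^ 2 - m) / 2 := by omega
  have hb : (m ^ 2 + m) / 2 = (m ^ 2 - m) / 2 + m := by
    have : 2 ∣ m * m - m := (Nat.even_mul_pred_self m).two_dvd.trans (by rw [Nat.mul_sub_one])
    omega
  rw [hb] at hf3 hf4
  have hf : f = fun S ↦ (twoRamp m ((m ^ 2 - m) / 2) #S : ℝ) :=
    funext (eq_twoRamp_card hma f hf1 hf2 hf3 hf4)
  subst hf
  have hmono : Monotone fun S : Finset (Fin n) ↦ (twoRamp m ((m ^ 2 - m) / 2) #S : ℝ) :=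
    (Nat.mono_cast.comp twoRamp.monotone).comp card_mono
  refine ⟨fun A B h ↦ hmono h, fun A j ↦ ⟨?_, ?_⟩, ?_⟩
  · exact sub_nonneg.2 (hmono (subset_insert j A))
  · exact cast_card_insert_sub_le_one twoRamp.monotone (twoRamp.succ_le hma) A j
  · exact cast_card_union_le twoRamp.monotone (twoRamp.add_le hma)

/-- The paper's counterexample: for `n = m²`, `m ≥ 3`, the set function with
`f(S) = |S|` for `|S| < m`, `f(S) = m` for `m ≤ |S| ≤ (m² − m)/2`,
`f(S) = m + |S| − (m² − m)/2` for `(m² − m)/2 < |S| < (m² + m)/2`, and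
`f(S) = 2m` for `|S| ≥ (m² + m)/2`, is monotone with marginal values in `[0,1]`
and subadditive. -/
theorem counterexample_monotone_lipschitz_subadditive
    (m : ℕ) (hm : 3 ≤ m) (n : ℕ) (hn : n = m ^ 2)
    (f : Finset (Fin n) → ℝ)
    (hf1 : ∀ S : Finset (Fin n), S.card < m → f S = S.card)
    (hf2 : ∀ S : Finset (Fin n), m ≤ S.card → S.card ≤ (m ^ 2 - m) / 2 → f S = m)
    (hf3 : ∀ S : Finset (Fin n), (m ^ 2 - m) / 2 < S.card →
      S.card < (m ^ 2 + m) / 2 →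
      f S = (m : ℝ) + S.card - (((m ^ 2 - m) / 2 : ℕ) : ℝ))
    (hf4 : ∀ S : Finset (Fin n), (m ^ 2 + m) / 2 ≤ S.card → f S = 2 * m) :
    (∀ A B : Finset (Fin n), A ⊆ B → f A ≤ f B) ∧
    (∀ (A : Finset (Fin n)) (j : Fin n),
      0 ≤ f (insert j A) - f A ∧ f (insert j A) - f A ≤ 1) ∧
    (∀ A B : Finset (Fin n), f (A ∪ B) ≤ f A + f B) :=
  counterexample_monotone_lipschitz_subadditive_general m hm n f hf1 hf2 hf3 hf4
end
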